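/- arXiv:2303.02623 — 6 statements merged into one kernel-verified Lean document; each statement's English description precedes it below -/
import Mathlib

section
/- Let V and W be 3-dimensional oriented real inner product spaces, with Hodge stars ⋆_V : V → Λ²V and ⋆_W : W → Λ²W, and let T : V → W be a linear map of rank exactly 2. Then the linear map ⋆_W ∘ T + Λ²T ∘ ⋆_V : V → Λ²W has rank 3, i.e., is an isomorphism onto Λ²W. -/
open Module
open scoped RealInnerProductSpace

set_option maxHeartbeats 1000000
set_option synthInstance.maxHeartbeats 200000

namespace StarFullRankAux

open ExteriorAlgebra

local notation "ιι" => ExteriorAlgebra.ι ℝ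

section Algebra

variable {M : Type*} [AddCommGroup M] [Module ℝ M]

lemma swap (x y : M) : ιι x * ιι y = -(ιι y * ιι x) := by
  have := ι_add_mul_swap (R := ℝ) x y
  rw [eq_neg_iff_add_eq_zero]; exact this

lemma mulrr (x y : M) : ιι x * ιι y * ιι y = 0 := by
  rw [mul_assoc, ι_sq_zero, mul_zero]

lemma mulll (x y : M) : ιι x * (ιι x * ιι y) = 0 := by
  rw [← mul_assoc, ι_sq_zero, zero_mul]

lemma mulmid (x y : M) : ιι x * (ιι y * ιι x) = 0 := by
  rw [swap y x, mul_neg, mulll, neg_zero]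

lemma cyc (x y z : M) : ιι z * (ιι x * ιι y) = ιι x * ιι y * ιι z := by
  rw [← mul_assoc, swap z x, neg_mul, mul_assoc, swap z y, mul_neg, neg_neg, mul_assoc]

lemma rel_smul (x y z : M) (p q r : ℝ) (h : p • x + q • y + r • z = 0) :
    r • z = -(p • x) - q • y := by
  linear_combination (norm := module) h

/-- wedge of three vectors vanishes when a nontrivial relation holds -/
lemma triple_zero_of_rel (x y z : M) (p q r : ℝ) (h : p • x + q • y + r • z = 0)
    (hne : ¬ (p = 0 ∧ q = 0 ∧ r = 0)) : ιι x * ιι y * ιι z = 0 := by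
  by_cases hr : r ≠ 0
  · have h1 : ιι x * ιι y * ιι (r • z) = 0 := by
      rw [rel_smul x y z p q r h, map_sub, map_neg, map_smul, map_smul, mul_sub, mul_neg,
        mul_smul_comm, mul_smul_comm, mul_assoc, mulmid, mulrr, smul_zero, smul_zero,
        neg_zero, sub_zero]
    rw [map_smul, mul_smul_comm] at h1
    rcases smul_eq_zero.mp h1 with h2 | h2
    · exact absurd h2 hr
    · exact h2
  push_neg at hr
  by_cases hq : q ≠ 0
  · have h' : p • x + r • z + q • y = 0 := by linear_combination (norm := module) h
    have h1 : ιι x * ιι (q • y) * ιι z = 0 := by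
      rw [rel_smul x z y p r q h', map_sub, map_neg, map_smul, map_smul, mul_sub, mul_neg,
        mul_smul_comm, mul_smul_comm, ι_sq_zero, smul_zero, neg_zero, zero_sub, neg_mul,
        smul_mul_assoc, mul_assoc, ι_sq_zero, mul_zero, smul_zero, neg_zero]
    rw [map_smul, mul_smul_comm, smul_mul_assoc] at h1
    rcases smul_eq_zero.mp h1 with h2 | h2
    · exact absurd h2 hq
    · exact h2
  push_neg at hq
  have hp : p ≠ 0 := fun hp0 => hne ⟨hp0, hq, hr⟩
  have h' : q • y + r • z + p • x = 0 := by linear_combination (norm := module) h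
  have h1 : ιι (p • x) * ιι y * ιι z = 0 := by
    rw [rel_smul y z x q r p h', map_sub, map_neg, map_smul, map_smul, sub_mul, sub_mul,
      neg_mul, neg_mul, smul_mul_assoc, smul_mul_assoc, smul_mul_assoc, smul_mul_assoc,
      ι_sq_zero, zero_mul, smul_zero, neg_zero, zero_sub, mul_assoc, mulmid, smul_zero,
      neg_zero]
  rw [map_smul, smul_mul_assoc, smul_mul_assoc] at h1
  rcases smul_eq_zero.mp h1 with h2 | h2
  · exact absurd h2 hp
  · exact h2

/-- the key identity -/
lemma key_identity (x y z : M) (p q r : ℝ) (h : p • x + q • y + r • z = 0) :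
    r • (p • (ιι y * ιι z) + q • (ιι z * ιι x) + r • (ιι x * ιι y))
      = (p ^ 2 + q ^ 2 + r ^ 2) • (ιι x * ιι y) := by
  have hrz := rel_smul x y z p q r h
  have e1 : ιι y * ιι (r • z) = p • (ιι x * ιι y) := by
    rw [hrz, map_sub, map_neg, map_smul, map_smul, mul_sub, mul_neg,
      mul_smul_comm, mul_smul_comm, ι_sq_zero, smul_zero, sub_zero, swap]
    module
  have e2 : ιι (r • z) * ιι x = q • (ιι x * ιι y) := by
    rw [hrz, map_sub, map_neg, map_smul, map_smul, sub_mul, neg_mul,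
      smul_mul_assoc, smul_mul_assoc, ι_sq_zero, smul_zero, neg_zero, zero_sub,
      swap]
    module
  have e1' : r • (ιι y * ιι z) = p • (ιι x * ιι y) := by
    rw [← e1, map_smul, mul_smul_comm]
  have e2' : r • (ιι z * ιι x) = q • (ιι x * ιι y) := by
    rw [← e2, map_smul, smul_mul_assoc]
  calc r • (p • (ιι y * ιι z) + q • (ιι z * ιι x) + r • (ιι x * ιι y))
      = p • (r • (ιι y * ιι z)) + q • (r • (ιι z * ιι x)) + (r*r) • (ιι x * ιι y) := by
        module
    _ = (p ^ 2 + q ^ 2 + r ^ 2) • (ιι x * ιι y) := by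
        rw [e1', e2']; module

noncomputable def Phi (e : Basis (Fin 3) ℝ M) : ExteriorAlgebra ℝ M →ₗ[ℝ] ℝ :=
  liftAlternating (Function.update 0 3 e.det)

lemma triple_eq_ιMulti (x y z : M) :
    ιι x * ιι y * ιι z = ιMulti ℝ 3 ![x, y, z] := by
  simp [ιMulti_apply, List.ofFn_succ, mul_assoc]

lemma Phi_triple (e : Basis (Fin 3) ℝ M) (x y z : M) :
    Phi e (ιι x * ιι y * ιι z) = e.det ![x, y, z] := by
  rw [triple_eq_ιMulti, Phi, liftAlternating_apply_ιMulti, Function.update_self]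

lemma triple_basis_ne_zero (e f : Basis (Fin 3) ℝ M) :
    ιι (f 0) * ιι (f 1) * ιι (f 2) ≠ 0 := by
  intro h
  have h2 : Phi e (ιι (f 0) * ιι (f 1) * ιι (f 2)) = e.det ![f 0, f 1, f 2] :=
    Phi_triple e _ _ _
  rw [h, map_zero] at h2
  have h3 : ![f 0, f 1, f 2] = ⇑f := by
    funext i; fin_cases i <;> rfl
  rw [h3] at h2
  exact (e.isUnit_det f).ne_zero h2.symm

lemma wedge_mem (x y : M) : ιι x * ιι y ∈ (⋀[ℝ]^2 M : Submodule ℝ (ExteriorAlgebra ℝ M)) := by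
  have h : ιMulti ℝ 2 ![x, y] = ιι x * ιι y := by
    simp [ιMulti_apply, List.ofFn_succ, mul_assoc, Matrix.vecTail]
  rw [← h]
  exact ιMulti_range ℝ 2 ⟨![x, y], rfl⟩

/-- generators of the second exterior power from a basis -/
noncomputable def gen (e : Basis (Fin 3) ℝ M) : Fin 3 → ExteriorAlgebra ℝ M :=
  ![ιι (e 0) * ιι (e 1), ιι (e 0) * ιι (e 2), ιι (e 1) * ιι (e 2)]

lemma wedge_mem_span (e : Basis (Fin 3) ℝ M) (x y : M) :
    ιι x * ιι y ∈ Submodule.span ℝ (Set.range (gen e)) := by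
  have hgen : ∀ i j : Fin 3, ιι (e i) * ιι (e j) ∈ Submodule.span ℝ (Set.range (gen e)) := by
    intro i j
    have h0 : gen e 0 = ιι (e 0) * ιι (e 1) := rfl
    have h1 : gen e 1 = ιι (e 0) * ιι (e 2) := rfl
    have h2 : gen e 2 = ιι (e 1) * ιι (e 2) := rfl
    fin_cases i <;> fin_cases j
    · rw [ι_sq_zero]; exact Submodule.zero_mem _
    · exact h0 ▸ Submodule.subset_span ⟨0, h0⟩
    · exact h1 ▸ Submodule.subset_span ⟨1, h1⟩
    · rw [swap]; exact Submodule.neg_mem _ (h0 ▸ Submodule.subset_span ⟨0, h0⟩)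
    · rw [ι_sq_zero]; exact Submodule.zero_mem _
    · exact h2 ▸ Submodule.subset_span ⟨2, h2⟩
    · rw [swap]; exact Submodule.neg_mem _ (h1 ▸ Submodule.subset_span ⟨1, h1⟩)
    · rw [swap]; exact Submodule.neg_mem _ (h2 ▸ Submodule.subset_span ⟨2, h2⟩)
    · rw [ι_sq_zero]; exact Submodule.zero_mem _
  have hxy : ιι x * ιι y
      = ∑ i : Fin 3, ∑ j : Fin 3,
          (e.repr x i) • (e.repr y j) • (ιι (e i) * ιι (e j)) := by
    conv_lhs => rw [← e.sum_repr x, ← e.sum_repr y]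
    rw [map_sum, map_sum, Finset.sum_mul]
    refine Finset.sum_congr rfl fun i _ => ?_
    rw [Finset.mul_sum]
    refine Finset.sum_congr rfl fun j _ => ?_
    rw [map_smul, map_smul, smul_mul_assoc, mul_smul_comm]
  rw [hxy]
  exact Submodule.sum_mem _ fun i _ => Submodule.sum_mem _ fun j _ =>
    Submodule.smul_mem _ _ (Submodule.smul_mem _ _ (hgen i j))

lemma exterior_sq_le_span (e : Basis (Fin 3) ℝ M) :
    (⋀[ℝ]^2 M : Submodule ℝ (ExteriorAlgebra ℝ M))
      ≤ Submodule.span ℝ (Set.range (gen e)) := by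
  rw [← ιMulti_span_fixedDegree]
  rw [Submodule.span_le]
  rintro _ ⟨v, rfl⟩
  have : ιMulti ℝ 2 v = ιι (v 0) * ιι (v 1) := by
    simp [ιMulti_apply, List.ofFn_succ, mul_assoc, Matrix.vecTail]
  rw [this]
  exact wedge_mem_span e (v 0) (v 1)

/-- nondegeneracy of the wedge pairing on the second exterior power -/
lemma wedge_nondegenerate (e : Basis (Fin 3) ℝ M)
    (hω : ιι (e 0) * ιι (e 1) * ιι (e 2) ≠ 0)
    {z : ExteriorAlgebra ℝ M} (hz : z ∈ (⋀[ℝ]^2 M : Submodule ℝ (ExteriorAlgebra ℝ M)))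
    (h : ∀ i, ιι (e i) * z = 0) : z = 0 := by
  obtain ⟨c, hc⟩ := Submodule.mem_span_range_iff_exists_fun ℝ |>.mp (exterior_sq_le_span e hz)
  rw [Fin.sum_univ_three] at hc
  have h0 : gen e 0 = ιι (e 0) * ιι (e 1) := rfl
  have h1 : gen e 1 = ιι (e 0) * ιι (e 2) := rfl
  have h2 : gen e 2 = ιι (e 1) * ιι (e 2) := rfl
  rw [h0, h1, h2] at hc
  set ω := ιι (e 0) * ιι (e 1) * ιι (e 2) with hωdef
  have e20 : ιι (e 2) * z = c 0 • ω := by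
    rw [← hc, mul_add, mul_add, mul_smul_comm, mul_smul_comm, mul_smul_comm,
      cyc, mulmid, mulmid, smul_zero, smul_zero, add_zero, add_zero]
  have e10 : ιι (e 1) * z = -(c 1 • ω) := by
    rw [← hc, mul_add, mul_add, mul_smul_comm, mul_smul_comm, mul_smul_comm,
      mulmid, mulll, smul_zero, smul_zero, zero_add, add_zero, cyc, mul_assoc,
      swap (e 2) (e 1), mul_neg, ← mul_assoc, smul_neg]
  have e00 : ιι (e 0) * z = c 2 • ω := by
    rw [← hc, mul_add, mul_add, mul_smul_comm, mul_smul_comm, mul_smul_comm,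
      mulll, mulll, smul_zero, smul_zero, zero_add, zero_add, ← mul_assoc]
  have hc0 : c 0 = 0 := by
    have := h 2; rw [e20] at this
    rcases smul_eq_zero.mp this with h' | h'
    · exact h'
    · exact absurd h' hω
  have hc1 : c 1 = 0 := by
    have := h 1; rw [e10, neg_eq_zero] at this
    rcases smul_eq_zero.mp this with h' | h'
    · exact h'
    · exact absurd h' hω
  have hc2 : c 2 = 0 := by
    have := h 0; rw [e00] at this
    rcases smul_eq_zero.mp this with h' | h'
    · exact h'
    · exact absurd h' hω
  rw [← hc, hc0, hc1, hc2, zero_smul, zero_smul, zero_smul, add_zero, add_zero]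

end Algebra

section Inner

variable {M : Type*} [NormedAddCommGroup M] [InnerProductSpace ℝ M]

/-- the Hodge star is determined on all vectors -/
lemma star_val (b : OrthonormalBasis (Fin 3) ℝ M)
    (s : M →ₗ[ℝ] (⋀[ℝ]^2 M : Submodule ℝ (ExteriorAlgebra ℝ M)))
    (hs : ∀ u v : M, ιι u * ((s v : (⋀[ℝ]^2 M : Submodule ℝ (ExteriorAlgebra ℝ M))) : ExteriorAlgebra ℝ M)
      = ⟪u, v⟫ • (ιι (b 0) * ιι (b 1) * ιι (b 2)))
    (u : M) :
    ((s u : (⋀[ℝ]^2 M : Submodule ℝ (ExteriorAlgebra ℝ M))) : ExteriorAlgebra ℝ M)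
      = ⟪b 0, u⟫ • (ιι (b 1) * ιι (b 2)) + ⟪b 1, u⟫ • (ιι (b 2) * ιι (b 0))
        + ⟪b 2, u⟫ • (ιι (b 0) * ιι (b 1)) := by
  have hω : ιι (b 0) * ιι (b 1) * ιι (b 2) ≠ 0 := by
    have := triple_basis_ne_zero b.toBasis b.toBasis
    simpa [OrthonormalBasis.coe_toBasis] using this
  set ω := ιι (b 0) * ιι (b 1) * ιι (b 2) with hωdef
  set R := ⟪b 0, u⟫ • (ιι (b 1) * ιι (b 2)) + ⟪b 1, u⟫ • (ιι (b 2) * ιι (b 0))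
        + ⟪b 2, u⟫ • (ιι (b 0) * ιι (b 1)) with hR
  have hmem : (↑(s u) : ExteriorAlgebra ℝ M) - R ∈ (⋀[ℝ]^2 M : Submodule ℝ (ExteriorAlgebra ℝ M)) := by
    refine Submodule.sub_mem _ (s u).2 ?_
    exact Submodule.add_mem _ (Submodule.add_mem _
      (Submodule.smul_mem _ _ (wedge_mem _ _)) (Submodule.smul_mem _ _ (wedge_mem _ _)))
      (Submodule.smul_mem _ _ (wedge_mem _ _))
  have hz : ∀ i : Fin 3, ιι (b i) * ((↑(s u) : ExteriorAlgebra ℝ M) - R) = 0 := by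
    intro i
    rw [mul_sub, hs (b i) u]
    have hR0 : ιι (b 0) * R = ⟪b 0, u⟫ • ω := by
      simp only [hR, mul_add, mul_smul_comm]
      rw [← mul_assoc, mulmid, mulll, smul_zero, smul_zero, add_zero, add_zero, hωdef]
    have hR1 : ιι (b 1) * R = ⟪b 1, u⟫ • ω := by
      simp only [hR, mul_add, mul_smul_comm]
      rw [mulll, mulmid, smul_zero, smul_zero, zero_add, add_zero, cyc, mul_assoc, cyc, hωdef]
    have hR2 : ιι (b 2) * R = ⟪b 2, u⟫ • ω := by
      simp only [hR, mul_add, mul_smul_comm]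
      rw [mulmid, mulll, smul_zero, smul_zero, zero_add, zero_add, cyc, hωdef]
    have hRi : ιι (b i) * R = ⟪b i, u⟫ • ω := by
      fin_cases i
      · exact hR0
      · exact hR1
      · exact hR2
    rw [hRi, sub_self]
  have := wedge_nondegenerate b.toBasis
    (by simpa [OrthonormalBasis.coe_toBasis] using hω) hmem
    (by intro i; simpa [OrthonormalBasis.coe_toBasis] using hz i)
  rw [sub_eq_zero] at this
  exact this

lemma pair_wedge_ne_zero {W : Type*} [NormedAddCommGroup W] [InnerProductSpace ℝ W]
    [Fact (finrank ℝ W = 3)] (K : Submodule ℝ W)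
    (hK : finrank ℝ K = 2) (a b : W)
    (hle : K ≤ Submodule.span ℝ (Set.range ![a, b])) : ιι a * ιι b ≠ 0 := by
  have hW3 : finrank ℝ W = 3 := Fact.out
  have : FiniteDimensional ℝ W := FiniteDimensional.of_fact_finrank_eq_succ 2
  have hKperp : finrank ℝ Kᗮ = 1 := by
    have h := Submodule.finrank_add_finrank_orthogonal K
    rw [hK, hW3] at h; omega
  obtain ⟨m', hm'⟩ := Module.finrank_pos_iff_exists_ne_zero.mp
    (by rw [hKperp]; norm_num : 0 < finrank ℝ Kᗮ)
  set m : W := (m' : W) with hmdef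
  have hm0 : m ≠ 0 := fun h => hm' (by ext; simpa [hmdef] using h)
  have hmK : m ∈ Kᗮ := m'.2
  have hperp_eq : Kᗮ = Submodule.span ℝ {m} := by
    refine (Submodule.eq_of_le_of_finrank_le ?_ ?_).symm
    · rw [Submodule.span_singleton_le_iff_mem]; exact hmK
    · rw [hKperp, finrank_span_singleton hm0]
  have htop : ⊤ ≤ Submodule.span ℝ (Set.range ![m, a, b]) := by
    have hsup : K ⊔ Kᗮ = ⊤ := Submodule.sup_orthogonal_of_hasOrthogonalProjection
    rw [← hsup, sup_le_iff]
    constructor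
    · refine hle.trans (Submodule.span_mono ?_)
      rintro _ ⟨i, rfl⟩
      fin_cases i
      · exact ⟨1, rfl⟩
      · exact ⟨2, rfl⟩
    · rw [hperp_eq, Submodule.span_singleton_le_iff_mem]
      exact Submodule.subset_span ⟨0, rfl⟩
  have hcard : Fintype.card (Fin 3) = finrank ℝ W := by simp [hW3]
  let f := basisOfTopLeSpanOfCardEqFinrank ![m, a, b] htop hcard
  have hf : ⇑f = ![m, a, b] := coe_basisOfTopLeSpanOfCardEqFinrank _ _ _
  intro hab
  have h3 := triple_basis_ne_zero f f
  apply h3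
  rw [hf]
  show ιι m * ιι a * ιι b = 0
  rw [mul_assoc, hab, mul_zero]

lemma kernel_case {W : Type*} [NormedAddCommGroup W] [InnerProductSpace ℝ W]
    [Fact (finrank ℝ W = 3)] (K : Submodule ℝ W) (hK : finrank ℝ K = 2)
    (w0 w1 w2 : W) (q0 q1 q2 : ℝ)
    (hqsum : q0 • w0 + q1 • w1 + q2 • w2 = 0)
    (hqne : ¬(q0 = 0 ∧ q1 = 0 ∧ q2 = 0))
    (hle : K ≤ Submodule.span ℝ ({w0, w1, w2} : Set W))
    (hBu : q0 • (ιι w1 * ιι w2) + q1 • (ιι w2 * ιι w0) + q2 • (ιι w0 * ιι w1) = 0) :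
    False := by
  have contra : ∀ a b : W, K ≤ Submodule.span ℝ (Set.range ![a, b]) →
      ExteriorAlgebra.ι ℝ a * ExteriorAlgebra.ι ℝ b = 0 → False := fun a b h1 h2 =>
    pair_wedge_ne_zero K hK a b h1 h2
  have hspan_le : ∀ a b c : W, ∀ r : ℝ, r ≠ 0 → (∃ x y : ℝ, r • c = x • a + y • b) →
      Submodule.span ℝ ({a, b, c} : Set W) ≤ Submodule.span ℝ (Set.range ![a, b]) := by
    intro a b c r hr ⟨x, y, hxy⟩
    rw [Submodule.span_le]
    have ha : a ∈ Submodule.span ℝ (Set.range ![a, b]) := Submodule.subset_span ⟨0, rfl⟩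
    have hb : b ∈ Submodule.span ℝ (Set.range ![a, b]) := Submodule.subset_span ⟨1, rfl⟩
    have hc : c ∈ Submodule.span ℝ (Set.range ![a, b]) := by
      have : c = r⁻¹ • (r • c) := by rw [smul_smul, inv_mul_cancel₀ hr, one_smul]
      rw [this, hxy]
      exact Submodule.smul_mem _ _ (Submodule.add_mem _
        (Submodule.smul_mem _ _ ha) (Submodule.smul_mem _ _ hb))
    rintro z (rfl | rfl | rfl)
    · exact ha
    · exact hb
    · exact hc
  by_cases hq2 : q2 ≠ 0
  · have hk := key_identity w0 w1 w2 q0 q1 q2 hqsum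
    rw [hBu, smul_zero] at hk
    rcases smul_eq_zero.mp hk.symm with h' | h'
    · exact hq2 (by nlinarith [sq_nonneg q0, sq_nonneg q1, sq_nonneg q2] : q2 = 0)
    · refine contra w0 w1 (hle.trans (hspan_le w0 w1 w2 q2 hq2 ⟨-q0, -q1, ?_⟩)) h'
      rw [rel_smul w0 w1 w2 q0 q1 q2 hqsum]; module
  push_neg at hq2
  by_cases hq1 : q1 ≠ 0
  · have hqsum' : q2 • w2 + q0 • w0 + q1 • w1 = 0 := by
      linear_combination (norm := module) hqsum
    have hk := key_identity w2 w0 w1 q2 q0 q1 hqsum'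
    have hcomm : q2 • (ιι w0 * ιι w1) + q0 • (ιι w1 * ιι w2) + q1 • (ιι w2 * ιι w0)
        = q0 • (ιι w1 * ιι w2) + q1 • (ιι w2 * ιι w0) + q2 • (ιι w0 * ιι w1) := by
      module
    rw [hcomm, hBu, smul_zero] at hk
    rcases smul_eq_zero.mp hk.symm with h' | h'
    · exact hq1 (by nlinarith [sq_nonneg q0, sq_nonneg q1, sq_nonneg q2] : q1 = 0)
    · have hsetperm : ({w2, w0, w1} : Set W) = {w0, w1, w2} := by
        ext z; simp only [Set.mem_insert_iff, Set.mem_singleton_iff]; tauto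
      refine contra w2 w0 (hle.trans ?_) h'
      rw [← hsetperm]
      refine hspan_le w2 w0 w1 q1 hq1 ⟨-q2, -q0, ?_⟩
      rw [rel_smul w2 w0 w1 q2 q0 q1 hqsum']; module
  push_neg at hq1
  have hq0 : q0 ≠ 0 := fun h => hqne ⟨h, hq1, hq2⟩
  have hqsum' : q1 • w1 + q2 • w2 + q0 • w0 = 0 := by
    linear_combination (norm := module) hqsum
  have hk := key_identity w1 w2 w0 q1 q2 q0 hqsum'
  have hcomm : q1 • (ιι w2 * ιι w0) + q2 • (ιι w0 * ιι w1) + q0 • (ιι w1 * ιι w2)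
      = q0 • (ιι w1 * ιι w2) + q1 • (ιι w2 * ιι w0) + q2 • (ιι w0 * ιι w1) := by
    module
  rw [hcomm, hBu, smul_zero] at hk
  rcases smul_eq_zero.mp hk.symm with h' | h'
  · exact hq0 (by nlinarith [sq_nonneg q0, sq_nonneg q1, sq_nonneg q2] : q0 = 0)
  · have hsetperm : ({w1, w2, w0} : Set W) = {w0, w1, w2} := by
      ext z; simp only [Set.mem_insert_iff, Set.mem_singleton_iff]; tauto
    refine contra w1 w2 (hle.trans ?_) h'
    rw [← hsetperm]
    refine hspan_le w1 w2 w0 q0 hq0 ⟨-q1, -q2, ?_⟩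
    rw [rel_smul w1 w2 w0 q1 q2 q0 hqsum']; module

end Inner

end StarFullRankAux
/-- Let `V`, `W` be 3-dimensional oriented real inner product spaces, with Hodge stars
`⋆_V : V → Λ²V`, `⋆_W : W → Λ²W` characterized by `u ∧ ⋆ v = ⟨u,v⟩ vol`, where the
volume elements are `b₀ ∧ b₁ ∧ b₂` for positively oriented orthonormal bases.  If
`T : V → W` is a linear map of rank exactly 2, then `⋆_W ∘ T + Λ²T ∘ ⋆_V : V → Λ²W`
has full rank, i.e. is a bijection from `V` onto the second exterior power `Λ²W`. -/
theorem star_comp_add_map_comp_star_full_rank {V W : Type*}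
    [NormedAddCommGroup V] [InnerProductSpace ℝ V] [Fact (finrank ℝ V = 3)]
    [NormedAddCommGroup W] [InnerProductSpace ℝ W] [Fact (finrank ℝ W = 3)]
    (oV : Orientation ℝ V (Fin 3)) (oW : Orientation ℝ W (Fin 3))
    (bV : OrthonormalBasis (Fin 3) ℝ V) (hbV : bV.toBasis.orientation = oV)
    (bW : OrthonormalBasis (Fin 3) ℝ W) (hbW : bW.toBasis.orientation = oW)
    (starV : V →ₗ[ℝ] ⋀[ℝ]^2 V)
    (hstarV : ∀ u v : V,
      ExteriorAlgebra.ι ℝ u * ((starV v : ⋀[ℝ]^2 V) : ExteriorAlgebra ℝ V)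
        = ⟪u, v⟫ • (ExteriorAlgebra.ι ℝ (bV 0) * ExteriorAlgebra.ι ℝ (bV 1) *
            ExteriorAlgebra.ι ℝ (bV 2)))
    (starW : W →ₗ[ℝ] ⋀[ℝ]^2 W)
    (hstarW : ∀ u v : W,
      ExteriorAlgebra.ι ℝ u * ((starW v : ⋀[ℝ]^2 W) : ExteriorAlgebra ℝ W)
        = ⟪u, v⟫ • (ExteriorAlgebra.ι ℝ (bW 0) * ExteriorAlgebra.ι ℝ (bW 1) *
            ExteriorAlgebra.ι ℝ (bW 2)))
    (T : V →ₗ[ℝ] W) (hT : finrank ℝ (LinearMap.range T) = 2) :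
    Function.Injective
      (fun u : V => ((starW (T u) : ⋀[ℝ]^2 W) : ExteriorAlgebra ℝ W)
        + ExteriorAlgebra.map T ((starV u : ⋀[ℝ]^2 V) : ExteriorAlgebra ℝ V)) ∧
    Set.range
      (fun u : V => ((starW (T u) : ⋀[ℝ]^2 W) : ExteriorAlgebra ℝ W)
        + ExteriorAlgebra.map T ((starV u : ⋀[ℝ]^2 V) : ExteriorAlgebra ℝ V))
      = (⋀[ℝ]^2 W : Set (ExteriorAlgebra ℝ W)) := by
  classical
  open ExteriorAlgebra StarFullRankAux in
  have hV3 : finrank ℝ V = 3 := Fact.out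
  have hW3 : finrank ℝ W = 3 := Fact.out
  have instV : FiniteDimensional ℝ V := FiniteDimensional.of_fact_finrank_eq_succ 2
  have instW : FiniteDimensional ℝ W := FiniteDimensional.of_fact_finrank_eq_succ 2
  set ωW : ExteriorAlgebra ℝ W :=
    ExteriorAlgebra.ι ℝ (bW 0) * ExteriorAlgebra.ι ℝ (bW 1) * ExteriorAlgebra.ι ℝ (bW 2)
    with hωWdef
  have hωW : ωW ≠ 0 := by
    simpa [OrthonormalBasis.coe_toBasis] using
      StarFullRankAux.triple_basis_ne_zero bW.toBasis bW.toBasis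
  -- the linear map
  obtain ⟨H, hHF⟩ : ∃ H : V →ₗ[ℝ] ExteriorAlgebra ℝ W,
      ∀ u : V, ((starW (T u) : ⋀[ℝ]^2 W) : ExteriorAlgebra ℝ W)
        + ExteriorAlgebra.map T ((starV u : ⋀[ℝ]^2 V) : ExteriorAlgebra ℝ V) = H u := by
    refine ⟨((⋀[ℝ]^2 W).subtype ∘ₗ starW ∘ₗ T)
        + ((ExteriorAlgebra.map T).toLinearMap ∘ₗ (⋀[ℝ]^2 V).subtype ∘ₗ starV),
      fun u => ?_⟩
    simp only [LinearMap.add_apply, LinearMap.coe_comp, Function.comp_apply,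
      Submodule.coe_subtype, AlgHom.toLinearMap_apply]
  have hfun : (fun u : V => ((starW (T u) : ⋀[ℝ]^2 W) : ExteriorAlgebra ℝ W)
        + ExteriorAlgebra.map T ((starV u : ⋀[ℝ]^2 V) : ExteriorAlgebra ℝ V)) = ⇑H :=
    funext hHF
  -- kernel vector of T
  have hker1 : finrank ℝ (LinearMap.ker T) = 1 := by
    have h := T.finrank_range_add_finrank_ker
    rw [hT, hV3] at h; omega
  obtain ⟨n', hn'⟩ := Module.finrank_pos_iff_exists_ne_zero.mp
    (by rw [hker1]; norm_num : 0 < finrank ℝ (LinearMap.ker T))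
  set n : V := (n' : V) with hndef
  have hn0 : n ≠ 0 := fun h => hn' (by ext; simpa [hndef] using h)
  have hTn : T n = 0 := n'.2
  -- sum expansion of T applied to a vector
  have hTsum : ∀ x : V, T x = ⟪bV 0, x⟫ • T (bV 0) + ⟪bV 1, x⟫ • T (bV 1)
      + ⟪bV 2, x⟫ • T (bV 2) := by
    intro x
    conv_lhs => rw [← bV.sum_repr' x]
    rw [map_sum, Fin.sum_univ_three, map_smul, map_smul, map_smul]
  have hcoords_ne : ∀ x : V, x ≠ 0 →
      ¬(⟪bV 0, x⟫ = 0 ∧ ⟪bV 1, x⟫ = 0 ∧ ⟪bV 2, x⟫ = 0) := by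
    rintro x hx ⟨h0, h1, h2⟩
    apply hx
    rw [← bV.sum_repr' x, Fin.sum_univ_three, h0, h1, h2]
    simp
  -- the image of the volume form vanishes
  have hωT : ExteriorAlgebra.ι ℝ (T (bV 0)) * ExteriorAlgebra.ι ℝ (T (bV 1)) *
      ExteriorAlgebra.ι ℝ (T (bV 2)) = 0 := by
    refine StarFullRankAux.triple_zero_of_rel _ _ _ _ _ _ ?_ (hcoords_ne n hn0)
    rw [← hTsum n, hTn]
  -- expansion of the star on V and its image
  have hmapstar : ∀ u : V,
      ExteriorAlgebra.map T ((starV u : ⋀[ℝ]^2 V) : ExteriorAlgebra ℝ V)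
      = ⟪bV 0, u⟫ • (ExteriorAlgebra.ι ℝ (T (bV 1)) * ExteriorAlgebra.ι ℝ (T (bV 2)))
        + ⟪bV 1, u⟫ • (ExteriorAlgebra.ι ℝ (T (bV 2)) * ExteriorAlgebra.ι ℝ (T (bV 0)))
        + ⟪bV 2, u⟫ • (ExteriorAlgebra.ι ℝ (T (bV 0)) * ExteriorAlgebra.ι ℝ (T (bV 1))) := by
    intro u
    rw [StarFullRankAux.star_val bV starV hstarV u]
    rw [map_add, map_add, map_smul, map_smul, map_smul, map_mul, map_mul, map_mul]
    simp only [ExteriorAlgebra.map_apply_ι]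
  -- range of T inside span of images of the basis
  have hrange : LinearMap.range T
      ≤ Submodule.span ℝ {T (bV 0), T (bV 1), T (bV 2)} := by
    rintro _ ⟨v, rfl⟩
    rw [hTsum v]
    refine Submodule.add_mem _ (Submodule.add_mem _ ?_ ?_) ?_ <;>
      refine Submodule.smul_mem _ _ (Submodule.subset_span ?_)
    · exact Set.mem_insert _ _
    · exact Set.mem_insert_of_mem _ (Set.mem_insert _ _)
    · exact Set.mem_insert_of_mem _ (Set.mem_insert_of_mem _ rfl)
  -- kernel of H is trivial
  have hker : ∀ u : V, H u = 0 → u = 0 := by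
    intro u hu
    have huu : ((starW (T u) : ⋀[ℝ]^2 W) : ExteriorAlgebra ℝ W)
        + ExteriorAlgebra.map T ((starV u : ⋀[ℝ]^2 V) : ExteriorAlgebra ℝ V) = 0 := by
      rw [hHF u]; exact hu
    have hBzero : ∀ v : V, ExteriorAlgebra.ι ℝ (T v) *
        ExteriorAlgebra.map T ((starV u : ⋀[ℝ]^2 V) : ExteriorAlgebra ℝ V) = 0 := by
      intro v
      rw [← ExteriorAlgebra.map_apply_ι, ← map_mul, hstarV v u, map_smul, map_mul, map_mul,
        ExteriorAlgebra.map_apply_ι, ExteriorAlgebra.map_apply_ι, ExteriorAlgebra.map_apply_ι,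
        hωT, smul_zero]
    have hTu : T u = 0 := by
      have h2 : ExteriorAlgebra.ι ℝ (T u) *
          ((starW (T u) : ⋀[ℝ]^2 W) : ExteriorAlgebra ℝ W) = 0 := by
        have h3 := congrArg (fun z => ExteriorAlgebra.ι ℝ (T u) * z) huu
        simp only [mul_add, mul_zero] at h3
        rw [hBzero u, add_zero] at h3
        exact h3
      rw [hstarW (T u) (T u)] at h2
      rcases smul_eq_zero.mp h2 with h' | h'
      · exact inner_self_eq_zero.mp h'
      · exact absurd h' hωW
    have hBu : ExteriorAlgebra.map T ((starV u : ⋀[ℝ]^2 V) : ExteriorAlgebra ℝ V) = 0 := by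
      have : ((starW (T u) : ⋀[ℝ]^2 W) : ExteriorAlgebra ℝ W) = 0 := by
        rw [hTu, map_zero, Submodule.coe_zero]
      rw [this, zero_add] at huu
      exact huu
    rw [hmapstar u] at hBu
    by_contra hu0
    have hqsum : ⟪bV 0, u⟫ • T (bV 0) + ⟪bV 1, u⟫ • T (bV 1) + ⟪bV 2, u⟫ • T (bV 2) = 0 := by
      rw [← hTsum u, hTu]
    exact StarFullRankAux.kernel_case (LinearMap.range T) hT
      (T (bV 0)) (T (bV 1)) (T (bV 2)) _ _ _ hqsum (hcoords_ne u hu0) hrange hBu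
  -- injectivity of H
  have hinj : Function.Injective ⇑H := by
    rw [← LinearMap.ker_eq_bot]
    rw [LinearMap.ker_eq_bot']
    exact fun m hm => hker m hm
  -- range of H
  have hle : LinearMap.range H ≤ (⋀[ℝ]^2 W : Submodule ℝ (ExteriorAlgebra ℝ W)) := by
    rintro _ ⟨u, rfl⟩
    rw [← hHF u]
    refine Submodule.add_mem _ (starW (T u)).2 ?_
    rw [hmapstar u]
    exact Submodule.add_mem _ (Submodule.add_mem _
      (Submodule.smul_mem _ _ (StarFullRankAux.wedge_mem _ _))
      (Submodule.smul_mem _ _ (StarFullRankAux.wedge_mem _ _)))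
      (Submodule.smul_mem _ _ (StarFullRankAux.wedge_mem _ _))
  haveI hfdspan : FiniteDimensional ℝ
      (Submodule.span ℝ (Set.range (StarFullRankAux.gen bW.toBasis))) :=
    FiniteDimensional.span_of_finite ℝ (Set.finite_range _)
  haveI hfd2 : FiniteDimensional ℝ (⋀[ℝ]^2 W : Submodule ℝ (ExteriorAlgebra ℝ W)) :=
    Submodule.finiteDimensional_of_le (StarFullRankAux.exterior_sq_le_span bW.toBasis)
  have hfr : finrank ℝ (⋀[ℝ]^2 W : Submodule ℝ (ExteriorAlgebra ℝ W)) ≤ 3 := by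
    refine le_trans
      (Submodule.finrank_mono (StarFullRankAux.exterior_sq_le_span bW.toBasis)) ?_
    refine le_trans (finrank_span_le_card _) ?_
    rw [Set.toFinset_range]
    exact le_trans (Finset.card_image_le) (by simp)
  have hrangeH : LinearMap.range H = (⋀[ℝ]^2 W : Submodule ℝ (ExteriorAlgebra ℝ W)) := by
    refine Submodule.eq_of_le_of_finrank_le hle ?_
    rw [LinearMap.finrank_range_of_inj hinj, hV3]
    exact hfr
  have hrangeSet : Set.range ⇑H = (⋀[ℝ]^2 W : Set (ExteriorAlgebra ℝ W)) := by
    rw [← LinearMap.coe_range, hrangeH]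
  rw [hfun]
  exact ⟨hinj, hrangeSet⟩
end

section
/- Let V and W be 3-dimensional oriented real inner product spaces with Hodge stars ⋆_V : V → Λ²V and ⋆_W : W → Λ²W. Let T : V → W and S : V → Λ²W be linear maps satisfying the (pointwise BPS) equation ⋆_W ∘ T = Λ²T ∘ ⋆_V + 3S, and let n = rank(T). Then: (1) if n ∈ {0,1}, then rank(S) = n and ker(S) = ker(T); (2) if n = 2, then rank(S) = 3; (3) if n = 3 (so T is invertible), then for every ξ ∈ W* the endomorphism ι_ξ ∘ S ∘ T⁻¹ of W has trace zero, where ι_ξ : Λ²W → W is the contraction determined by ι_ξ(u ∧ v) = ξ(u)v − ξ(v)u. -/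
open Module
open scoped RealInnerProductSpace

namespace BPSAux

open ExteriorAlgebra

variable {X : Type*} [NormedAddCommGroup X] [InnerProductSpace ℝ X]

local notation "ιx" => ExteriorAlgebra.ι ℝ

lemma ι_anticomm (x y : X) : ιx x * ιx y = -(ιx y * ιx x) :=
  eq_neg_of_add_eq_zero_left (ExteriorAlgebra.ι_add_mul_swap x y)

lemma aba (a b : X) : ιx a * ιx b * ιx a = 0 := by
  rw [mul_assoc, ι_anticomm b a, mul_neg, ← mul_assoc, ExteriorAlgebra.ι_sq_zero, zero_mul,
    neg_zero]

lemma abb (a b : X) : ιx a * ιx b * ιx b = 0 := by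
  rw [mul_assoc, ExteriorAlgebra.ι_sq_zero, mul_zero]

lemma aab (a b : X) : ιx a * ιx a * ιx b = 0 := by
  rw [ExteriorAlgebra.ι_sq_zero, zero_mul]

lemma cyc (a b c : X) : ιx a * ιx b * ιx c = ιx c * ιx a * ιx b := by
  rw [mul_assoc, ι_anticomm b c, mul_neg, ← mul_assoc, ι_anticomm a c, neg_mul, neg_neg]

lemma ιMulti_two (u v : X) : (ExteriorAlgebra.ιMulti ℝ 2 ![u, v] : ExteriorAlgebra ℝ X)
    = ιx u * ιx v := by
  simp [ExteriorAlgebra.ιMulti_apply, List.ofFn_succ, mul_assoc, Matrix.vecTail]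

lemma ιMulti_two' (v : Fin 2 → X) : (ExteriorAlgebra.ιMulti ℝ 2 v : ExteriorAlgebra ℝ X)
    = ιx (v 0) * ιx (v 1) := by
  simp [ExteriorAlgebra.ιMulti_apply, List.ofFn_succ, mul_assoc, Matrix.vecTail]

lemma ιMulti_three (v : Fin 3 → X) : (ExteriorAlgebra.ιMulti ℝ 3 v : ExteriorAlgebra ℝ X)
    = ιx (v 0) * ιx (v 1) * ιx (v 2) := by
  simp [ExteriorAlgebra.ιMulti_apply, List.ofFn_succ, mul_assoc, Matrix.vecTail]

lemma basis_triple_ne_zero (g : Basis (Fin 3) ℝ X) :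
    ιx (g 0) * ιx (g 1) * ιx (g 2) ≠ 0 := by
  intro h
  have hv : ![g 0, g 1, g 2] = ⇑g := by
    funext i; fin_cases i <;> rfl
  have h1 : (ExteriorAlgebra.ιMulti ℝ 3 ⇑g : ExteriorAlgebra ℝ X) = 0 := by
    rw [← hv, ιMulti_three] at *
    simpa [hv] using h
  set f : ∀ i, X [⋀^Fin i]→ₗ[ℝ] ℝ := fun i => match i with
    | 3 => g.det
    | _ => 0 with hf
  have h2 := congrArg (ExteriorAlgebra.liftAlternating f) h1
  rw [ExteriorAlgebra.liftAlternating_apply_ιMulti, map_zero] at h2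
  have h3 : (f 3) ⇑g = g.det ⇑g := rfl
  rw [h3, Basis.det_self] at h2
  exact one_ne_zero h2

/-- Spanning family of 2-vectors associated with a family `g`. -/
def w2 (g : Fin 3 → X) : Fin 3 → ExteriorAlgebra ℝ X :=
  ![ιx (g 1) * ιx (g 2), ιx (g 2) * ιx (g 0), ιx (g 0) * ιx (g 1)]

lemma mem_span_w2 (g : Basis (Fin 3) ℝ X) {x : ExteriorAlgebra ℝ X} (hx : x ∈ ⋀[ℝ]^2 X) :
    x ∈ Submodule.span ℝ (Set.range (w2 ⇑g)) := by
  rw [← ExteriorAlgebra.ιMulti_span_fixedDegree] at hx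
  refine Submodule.span_le.mpr ?_ hx
  rintro _ ⟨v, rfl⟩
  rw [ιMulti_two']
  have hexp : ιx (v 0) * ιx (v 1)
      = ∑ i : Fin 3, ∑ j : Fin 3,
        (g.repr (v 0) i * g.repr (v 1) j) • (ιx (g i) * ιx (g j)) := by
    conv_lhs => rw [← g.sum_repr (v 0), ← g.sum_repr (v 1)]
    simp only [map_sum, map_smul, Finset.sum_mul, Finset.mul_sum, smul_mul_assoc,
      mul_smul_comm, smul_smul]
    rw [Finset.sum_comm]
    simp [Finset.smul_sum, smul_smul, mul_comm]
  rw [hexp]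
  refine Submodule.sum_mem _ fun i _ => Submodule.sum_mem _ fun j _ => Submodule.smul_mem _ _ ?_
  fin_cases i <;> fin_cases j
  · rw [ExteriorAlgebra.ι_sq_zero]; exact Submodule.zero_mem _
  · exact Submodule.subset_span ⟨2, rfl⟩
  · rw [ι_anticomm]; exact Submodule.neg_mem _ (Submodule.subset_span ⟨1, rfl⟩)
  · rw [ι_anticomm]; exact Submodule.neg_mem _ (Submodule.subset_span ⟨2, rfl⟩)
  · rw [ExteriorAlgebra.ι_sq_zero]; exact Submodule.zero_mem _
  · exact Submodule.subset_span ⟨0, rfl⟩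
  · exact Submodule.subset_span ⟨1, rfl⟩
  · rw [ι_anticomm]; exact Submodule.neg_mem _ (Submodule.subset_span ⟨0, rfl⟩)
  · rw [ExteriorAlgebra.ι_sq_zero]; exact Submodule.zero_mem _

lemma exists_rep (g : Basis (Fin 3) ℝ X) {x : ExteriorAlgebra ℝ X} (hx : x ∈ ⋀[ℝ]^2 X) :
    ∃ c : Fin 3 → ℝ, ∑ i, c i • w2 (⇑g) i = x := by
  have := mem_span_w2 g hx
  rwa [Submodule.mem_span_range_iff_exists_fun] at this


lemma rsmul_eq_zero {M : Type*} [AddCommGroup M] [Module ℝ M] {α : ℝ} {t : M}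
    (h : α • t = 0) : α = 0 ∨ t = 0 := by
  rcases eq_or_ne α 0 with h0 | h0
  · exact Or.inl h0
  · refine Or.inr ?_
    have := congrArg (fun z => α⁻¹ • z) h
    simpa [smul_smul, inv_mul_cancel₀ h0] using this

instance : NoZeroSMulDivisors ℝ (ExteriorAlgebra ℝ X) := ⟨fun h => rsmul_eq_zero h⟩

lemma nondeg (g : Basis (Fin 3) ℝ X) {x : ExteriorAlgebra ℝ X} (hx : x ∈ ⋀[ℝ]^2 X)
    (h : ∀ i : Fin 3, ιx (g i) * x = 0) : x = 0 := by
  obtain ⟨c, hc⟩ := exists_rep g hx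
  have hvol := basis_triple_ne_zero g
  have k0 : c 0 = 0 := by
    have hi := h 0
    rw [← hc, Finset.mul_sum] at hi
    have h' : c 0 • (ιx (g 0) * ιx (g 1) * ιx (g 2)) = 0 := by
      simpa [w2, Fin.sum_univ_three, mul_smul_comm, ← mul_assoc, aba, aab, abb] using hi
    exact (rsmul_eq_zero h').resolve_right hvol
  have k1 : c 1 = 0 := by
    have hi := h 1
    rw [← hc, Finset.mul_sum] at hi
    have h' : c 1 • (ιx (g 1) * ιx (g 2) * ιx (g 0)) = 0 := by
      simpa [w2, Fin.sum_univ_three, mul_smul_comm, ← mul_assoc, aba, aab, abb] using hi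
    rw [cyc] at h'
    exact (rsmul_eq_zero h').resolve_right hvol
  have k2 : c 2 = 0 := by
    have hi := h 2
    rw [← hc, Finset.mul_sum] at hi
    have h' : c 2 • (ιx (g 2) * ιx (g 0) * ιx (g 1)) = 0 := by
      simpa [w2, Fin.sum_univ_three, mul_smul_comm, ← mul_assoc, aba, aab, abb] using hi
    rw [cyc, cyc] at h'
    exact (rsmul_eq_zero h').resolve_right hvol
  rw [← hc, Fin.sum_univ_three, k0, k1, k2]
  simp

lemma smul_eq_one_of_smul_eq {α : ℝ} {t : ExteriorAlgebra ℝ X} (ht : t ≠ 0)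
    (h : α • t = t) : α = 1 := by
  have h' : (α - 1) • t = 0 := by rw [sub_smul, one_smul, h, sub_self]
  have := (rsmul_eq_zero h').resolve_right ht
  linarith

lemma dep_triple {w : Fin 3 → X} (h : ¬ LinearIndependent ℝ w) :
    ιx (w 0) * ιx (w 1) * ιx (w 2) = 0 := by
  rw [Fintype.not_linearIndependent_iff] at h
  obtain ⟨g, hg, i, hi⟩ := h
  have hrel : g 0 • ιx (w 0) + g 1 • ιx (w 1) + g 2 • ιx (w 2) = 0 := by
    have h2 := congrArg (ιx : X →ₗ[ℝ] ExteriorAlgebra ℝ X) hg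
    simpa [Fin.sum_univ_three] using h2
  fin_cases i
  · have h2 := congrArg (fun z => z * (ιx (w 1) * ιx (w 2))) hrel
    have h' : g 0 • (ιx (w 0) * ιx (w 1) * ιx (w 2)) = 0 := by
      simpa [add_mul, smul_mul_assoc, ← mul_assoc, aba, aab, abb] using h2
    exact (rsmul_eq_zero h').resolve_left hi
  · have h2 := congrArg (fun z => ιx (w 0) * z * ιx (w 2)) hrel
    have h' : g 1 • (ιx (w 0) * ιx (w 1) * ιx (w 2)) = 0 := by
      simpa [mul_add, add_mul, mul_smul_comm, smul_mul_assoc, ← mul_assoc, aba, aab, abb]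
        using h2
    exact (rsmul_eq_zero h').resolve_left hi
  · have h2 := congrArg (fun z => ιx (w 0) * ιx (w 1) * z) hrel
    have h' : g 2 • (ιx (w 0) * ιx (w 1) * ιx (w 2)) = 0 := by
      simpa [mul_add, mul_smul_comm, ← mul_assoc, aba, aab, abb] using h2
    exact (rsmul_eq_zero h').resolve_left hi

lemma trace_onb (b : OrthonormalBasis (Fin 3) ℝ X) (f : X →ₗ[ℝ] X) :
    LinearMap.trace ℝ X f = ∑ i, ⟪b i, f (b i)⟫ := by
  haveI : FiniteDimensional ℝ X := Module.Finite.of_basis b.toBasis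
  rw [LinearMap.trace_eq_matrix_trace ℝ b.toBasis, Matrix.trace]
  refine Finset.sum_congr rfl fun i _ => ?_
  simp [LinearMap.toMatrix_apply, Matrix.diag, OrthonormalBasis.coe_toBasis_repr_apply,
    OrthonormalBasis.repr_apply_apply]

section Star

variable (b : OrthonormalBasis (Fin 3) ℝ X) (st : X →ₗ[ℝ] ⋀[ℝ]^2 X)

lemma star_vanish
    (hst : ∀ u v : X, ιx u * ((st v : ⋀[ℝ]^2 X) : ExteriorAlgebra ℝ X)
      = ⟪u, v⟫ • (ιx (b 0) * ιx (b 1) * ιx (b 2)))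
    {v : X} (h : ((st v : ⋀[ℝ]^2 X) : ExteriorAlgebra ℝ X) = 0) : v = 0 := by
  have hb : ιx (b 0) * ιx (b 1) * ιx (b 2) ≠ 0 := by
    simpa using basis_triple_ne_zero b.toBasis
  have h2 := hst v v
  rw [h, mul_zero] at h2
  have h3 : ⟪v, v⟫ = 0 := (rsmul_eq_zero h2.symm).resolve_right hb
  exact inner_self_eq_zero.mp h3

lemma star_spec
    (hst : ∀ u v : X, ιx u * ((st v : ⋀[ℝ]^2 X) : ExteriorAlgebra ℝ X)
      = ⟪u, v⟫ • (ιx (b 0) * ιx (b 1) * ιx (b 2)))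
    (f : OrthonormalBasis (Fin 3) ℝ X) :
    ∃ α : ℝ, α ≠ 0 ∧
      (((st (f 0) : ⋀[ℝ]^2 X) : ExteriorAlgebra ℝ X) = α • (ιx (f 1) * ιx (f 2))) ∧
      α • (ιx (f 0) * ιx (f 1) * ιx (f 2)) = ιx (b 0) * ιx (b 1) * ιx (b 2) := by
  have hvb : ιx (b 0) * ιx (b 1) * ιx (b 2) ≠ 0 := by
    simpa using basis_triple_ne_zero b.toBasis
  have hvf : ιx (f 0) * ιx (f 1) * ιx (f 2) ≠ 0 := by
    simpa using basis_triple_ne_zero f.toBasis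
  obtain ⟨c, hc⟩ := exists_rep f.toBasis (st (f 0)).2
  rw [OrthonormalBasis.coe_toBasis] at hc
  have hon := orthonormal_iff_ite.mp f.orthonormal
  have k1 : c 1 = 0 := by
    have hi := hst (f 1) (f 0)
    rw [← hc, Finset.mul_sum] at hi
    have h' : c 1 • (ιx (f 1) * ιx (f 2) * ιx (f 0)) = 0 := by
      simpa [w2, Fin.sum_univ_three, mul_smul_comm, ← mul_assoc, aba, aab, abb, hon] using hi
    rw [cyc] at h'
    exact (rsmul_eq_zero h').resolve_right hvf
  have k2 : c 2 = 0 := by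
    have hi := hst (f 2) (f 0)
    rw [← hc, Finset.mul_sum] at hi
    have h' : c 2 • (ιx (f 2) * ιx (f 0) * ιx (f 1)) = 0 := by
      simpa [w2, Fin.sum_univ_three, mul_smul_comm, ← mul_assoc, aba, aab, abb, hon] using hi
    rw [cyc, cyc] at h'
    exact (rsmul_eq_zero h').resolve_right hvf
  have k0 : c 0 • (ιx (f 0) * ιx (f 1) * ιx (f 2)) = ιx (b 0) * ιx (b 1) * ιx (b 2) := by
    have hi := hst (f 0) (f 0)
    rw [← hc, Finset.mul_sum] at hi
    simpa [w2, Fin.sum_univ_three, mul_smul_comm, ← mul_assoc, aba, aab, abb, hon] using hi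
  refine ⟨c 0, ?_, ?_, k0⟩
  · intro h0
    rw [h0, zero_smul] at k0
    exact hvb k0.symm
  · rw [← hc, Fin.sum_univ_three, k1, k2]
    simp [w2]

lemma star_basis
    (hst : ∀ u v : X, ιx u * ((st v : ⋀[ℝ]^2 X) : ExteriorAlgebra ℝ X)
      = ⟪u, v⟫ • (ιx (b 0) * ιx (b 1) * ιx (b 2))) :
    (((st (b 0) : ⋀[ℝ]^2 X) : ExteriorAlgebra ℝ X) = ιx (b 1) * ιx (b 2)) ∧
    (((st (b 1) : ⋀[ℝ]^2 X) : ExteriorAlgebra ℝ X) = ιx (b 2) * ιx (b 0)) ∧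
    (((st (b 2) : ⋀[ℝ]^2 X) : ExteriorAlgebra ℝ X) = ιx (b 0) * ιx (b 1)) := by
  have hvb : ιx (b 0) * ιx (b 1) * ιx (b 2) ≠ 0 := by
    simpa using basis_triple_ne_zero b.toBasis
  refine ⟨?_, ?_, ?_⟩
  · obtain ⟨α, hα, h1, h2⟩ := star_spec b st hst b
    rw [smul_eq_one_of_smul_eq hvb h2] at h1
    simpa using h1
  · obtain ⟨α, hα, h1, h2⟩ := star_spec b st hst (b.reindex (finRotate 3).symm)
    have e0 : (b.reindex (finRotate 3).symm) 0 = b 1 := by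
      rw [OrthonormalBasis.reindex_apply]; congr 1
    have e1 : (b.reindex (finRotate 3).symm) 1 = b 2 := by
      rw [OrthonormalBasis.reindex_apply]; congr 1
    have e2 : (b.reindex (finRotate 3).symm) 2 = b 0 := by
      rw [OrthonormalBasis.reindex_apply]; congr 1
    rw [e0, e1, e2] at h1 h2
    rw [cyc] at h2
    rw [smul_eq_one_of_smul_eq hvb h2] at h1
    simpa using h1
  · obtain ⟨α, hα, h1, h2⟩ :=
      star_spec b st hst ((b.reindex (finRotate 3).symm).reindex (finRotate 3).symm)
    have e0 : ((b.reindex (finRotate 3).symm).reindex (finRotate 3).symm) 0 = b 2 := by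
      rw [OrthonormalBasis.reindex_apply, OrthonormalBasis.reindex_apply]; congr 1
    have e1 : ((b.reindex (finRotate 3).symm).reindex (finRotate 3).symm) 1 = b 0 := by
      rw [OrthonormalBasis.reindex_apply, OrthonormalBasis.reindex_apply]; congr 1
    have e2 : ((b.reindex (finRotate 3).symm).reindex (finRotate 3).symm) 2 = b 1 := by
      rw [OrthonormalBasis.reindex_apply, OrthonormalBasis.reindex_apply]; congr 1
    rw [e0, e1, e2] at h1 h2
    rw [cyc, cyc] at h2
    rw [smul_eq_one_of_smul_eq hvb h2] at h1
    simpa using h1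

end Star

end BPSAux

set_option maxHeartbeats 1000000 in
open BPSAux in
/-- Pointwise rank constraints from the first BPS equation `⋆_W ∘ T = Λ²T ∘ ⋆_V + 3S`.
Here `V`, `W` are 3-dimensional oriented real inner product spaces with Hodge stars
characterized by `u ∧ ⋆ v = ⟨u,v⟩ vol` (with `vol` the wedge of a positively oriented
orthonormal basis), `T : V → W` is linear with second exterior power `Λ²T` induced by
`ExteriorAlgebra.map`, `S : V → Λ²W` is linear, and `ι_ξ : Λ²W → W` is the contraction
determined by `ι_ξ(u ∧ v) = ξ(u)v − ξ(v)u`.  Then, with `n = rank T`: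
(1) if `n ≤ 1` then `rank S = n` and `ker S = ker T`;
(2) if `n = 2` then `rank S = 3`;
(3) if `n = 3` then for every `ξ ∈ W*` the endomorphism `ι_ξ ∘ S ∘ T⁻¹` of `W` is
traceless. -/
theorem bps_moment_map_pullback_constraints {V W : Type*}
    [NormedAddCommGroup V] [InnerProductSpace ℝ V] [Fact (finrank ℝ V = 3)]
    [NormedAddCommGroup W] [InnerProductSpace ℝ W] [Fact (finrank ℝ W = 3)]
    (oV : Orientation ℝ V (Fin 3)) (oW : Orientation ℝ W (Fin 3))
    (bV : OrthonormalBasis (Fin 3) ℝ V) (hbV : bV.toBasis.orientation = oV)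
    (bW : OrthonormalBasis (Fin 3) ℝ W) (hbW : bW.toBasis.orientation = oW)
    (starV : V →ₗ[ℝ] ⋀[ℝ]^2 V)
    (hstarV : ∀ u v : V,
      ExteriorAlgebra.ι ℝ u * ((starV v : ⋀[ℝ]^2 V) : ExteriorAlgebra ℝ V)
        = ⟪u, v⟫ • (ExteriorAlgebra.ι ℝ (bV 0) * ExteriorAlgebra.ι ℝ (bV 1) *
            ExteriorAlgebra.ι ℝ (bV 2)))
    (starW : W →ₗ[ℝ] ⋀[ℝ]^2 W)
    (hstarW : ∀ u v : W,
      ExteriorAlgebra.ι ℝ u * ((starW v : ⋀[ℝ]^2 W) : ExteriorAlgebra ℝ W)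
        = ⟪u, v⟫ • (ExteriorAlgebra.ι ℝ (bW 0) * ExteriorAlgebra.ι ℝ (bW 1) *
            ExteriorAlgebra.ι ℝ (bW 2)))
    (T : V →ₗ[ℝ] W) (S : V →ₗ[ℝ] ⋀[ℝ]^2 W)
    (hBPS : ∀ u : V,
      ((starW (T u) : ⋀[ℝ]^2 W) : ExteriorAlgebra ℝ W)
        = ExteriorAlgebra.map T ((starV u : ⋀[ℝ]^2 V) : ExteriorAlgebra ℝ V)
          + (3 : ℝ) • ((S u : ⋀[ℝ]^2 W) : ExteriorAlgebra ℝ W))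
    (iota : Module.Dual ℝ W → (ExteriorAlgebra ℝ W →ₗ[ℝ] W))
    (hiota : ∀ (ξ : Module.Dual ℝ W) (u v : W),
      iota ξ (ExteriorAlgebra.ιMulti ℝ 2 ![u, v]) = ξ u • v - ξ v • u) :
    ((finrank ℝ (LinearMap.range T) = 0 ∨ finrank ℝ (LinearMap.range T) = 1) →
      (finrank ℝ (LinearMap.range S) = finrank ℝ (LinearMap.range T) ∧
        LinearMap.ker S = LinearMap.ker T)) ∧
    (finrank ℝ (LinearMap.range T) = 2 → finrank ℝ (LinearMap.range S) = 3) ∧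
    (finrank ℝ (LinearMap.range T) = 3 →
      ∀ T' : W →ₗ[ℝ] V, T' ∘ₗ T = LinearMap.id → T ∘ₗ T' = LinearMap.id →
        ∀ ξ : Module.Dual ℝ W,
          LinearMap.trace ℝ W
            (iota ξ ∘ₗ (⋀[ℝ]^2 W).subtype ∘ₗ S ∘ₗ T') = 0) := by
  classical
  haveI : FiniteDimensional ℝ V := Module.Finite.of_basis bV.toBasis
  haveI : FiniteDimensional ℝ W := Module.Finite.of_basis bW.toBasis
  have hdimV : finrank ℝ V = 3 := Fact.out
  have hdimW : finrank ℝ W = 3 := Fact.out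
  have hvolV : ExteriorAlgebra.ι ℝ (bV 0) * ExteriorAlgebra.ι ℝ (bV 1) *
      ExteriorAlgebra.ι ℝ (bV 2) ≠ 0 := by
    simpa using basis_triple_ne_zero bV.toBasis
  have hvolW : ExteriorAlgebra.ι ℝ (bW 0) * ExteriorAlgebra.ι ℝ (bW 1) *
      ExteriorAlgebra.ι ℝ (bW 2) ≠ 0 := by
    simpa using basis_triple_ne_zero bW.toBasis
  refine ⟨?_, ?_, ?_⟩
  · -- Part 1
    intro h1
    have hle : finrank ℝ (LinearMap.range T) ≤ 1 := by rcases h1 with h | h <;> omega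
    obtain ⟨w0, hw0⟩ := finrank_le_one_iff.mp hle
    have hdep : ∀ a b : V, ExteriorAlgebra.ι ℝ (T a) * ExteriorAlgebra.ι ℝ (T b) = 0 := by
      intro a b
      obtain ⟨ca, hca⟩ := hw0 ⟨T a, LinearMap.mem_range_self T a⟩
      obtain ⟨cb, hcb⟩ := hw0 ⟨T b, LinearMap.mem_range_self T b⟩
      have ha : ca • (w0 : W) = T a := by
        have := congrArg Subtype.val hca; simpa using this
      have hb : cb • (w0 : W) = T b := by
        have := congrArg Subtype.val hcb; simpa using this
      rw [← ha, ← hb, map_smul, map_smul]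
      simp [smul_mul_assoc, mul_smul_comm, ExteriorAlgebra.ι_sq_zero]
    have hmap2 : ∀ x : ExteriorAlgebra ℝ V, x ∈ ⋀[ℝ]^2 V → ExteriorAlgebra.map T x = 0 := by
      intro x hx
      rw [← ExteriorAlgebra.ιMulti_span_fixedDegree] at hx
      induction hx using Submodule.span_induction with
      | mem y hmem =>
        obtain ⟨v, rfl⟩ := hmem
        rw [ExteriorAlgebra.map_apply_ιMulti, ιMulti_two']
        exact hdep (v 0) (v 1)
      | zero => simp
      | add y z _ _ hy hz => rw [map_add, hy, hz, add_zero]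
      | smul c y _ hy =>
        have h := LinearMap.map_smul (ExteriorAlgebra.map T).toLinearMap c y
        simp only [AlgHom.toLinearMap_apply] at h
        rw [h, hy, smul_zero]
    have hSval : ∀ u : V, (3 : ℝ) • ((S u : ⋀[ℝ]^2 W) : ExteriorAlgebra ℝ W)
        = ((starW (T u) : ⋀[ℝ]^2 W) : ExteriorAlgebra ℝ W) := by
      intro u
      rw [hBPS u, hmap2 _ (SetLike.coe_mem _), zero_add]
    have hker : LinearMap.ker S = LinearMap.ker T := by
      ext u
      simp only [LinearMap.mem_ker]
      constructor
      · intro h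
        have h3 := hSval u
        rw [h] at h3
        simp only [ZeroMemClass.coe_zero, smul_zero] at h3
        exact star_vanish bW starW hstarW h3.symm
      · intro h
        have h3 := hSval u
        rw [h, map_zero] at h3
        simp only [ZeroMemClass.coe_zero] at h3
        have h4 := (rsmul_eq_zero h3).resolve_left (by norm_num)
        exact Subtype.coe_injective (by simpa using h4)
    have hr1 := LinearMap.finrank_range_add_finrank_ker S
    have hr2 := LinearMap.finrank_range_add_finrank_ker T
    rw [hker] at hr1
    exact ⟨by omega, hker⟩
  · -- Part 2
    intro h2
    have hkerS : LinearMap.ker S = ⊥ := by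
      rw [Submodule.eq_bot_iff]
      intro u hu
      rw [LinearMap.mem_ker] at hu
      have hSu : ((S u : ⋀[ℝ]^2 W) : ExteriorAlgebra ℝ W) = 0 := by
        rw [hu]; exact ZeroMemClass.coe_zero _
      have hb : ((starW (T u) : ⋀[ℝ]^2 W) : ExteriorAlgebra ℝ W)
          = ExteriorAlgebra.map T ((starV u : ⋀[ℝ]^2 V) : ExteriorAlgebra ℝ V) := by
        rw [hBPS u, hSu, smul_zero, add_zero]
      have hTdep : ¬ LinearIndependent ℝ (fun i : Fin 3 => T (bV i)) := by
        intro hli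
        have hsple : Submodule.span ℝ (Set.range fun i : Fin 3 => T (bV i))
            ≤ LinearMap.range T := by
          rw [Submodule.span_le]
          rintro x ⟨i, rfl⟩
          exact LinearMap.mem_range_self T (bV i)
        have h3' := hli.span_eq_top_of_card_eq_finrank (by simp [hdimW])
        rw [h3', top_le_iff] at hsple
        rw [hsple, finrank_top, hdimW] at h2
        omega
      have h3w : ExteriorAlgebra.ι ℝ (T (bV 0)) * ExteriorAlgebra.ι ℝ (T (bV 1)) *
          ExteriorAlgebra.ι ℝ (T (bV 2)) = 0 := dep_triple hTdep
      have hTu : T u = 0 := by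
        have hcomp : ⟪T u, T u⟫ • (ExteriorAlgebra.ι ℝ (bW 0) * ExteriorAlgebra.ι ℝ (bW 1) *
            ExteriorAlgebra.ι ℝ (bW 2)) = 0 := by
          calc ⟪T u, T u⟫ • (ExteriorAlgebra.ι ℝ (bW 0) * ExteriorAlgebra.ι ℝ (bW 1) *
              ExteriorAlgebra.ι ℝ (bW 2))
              = ExteriorAlgebra.ι ℝ (T u) * ((starW (T u) : ⋀[ℝ]^2 W) : ExteriorAlgebra ℝ W) :=
                (hstarW (T u) (T u)).symm
            _ = ExteriorAlgebra.map T (ExteriorAlgebra.ι ℝ u *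
                  ((starV u : ⋀[ℝ]^2 V) : ExteriorAlgebra ℝ V)) := by
                rw [hb, map_mul, ExteriorAlgebra.map_apply_ι]
            _ = ⟪u, u⟫ • (ExteriorAlgebra.ι ℝ (T (bV 0)) * ExteriorAlgebra.ι ℝ (T (bV 1)) *
                  ExteriorAlgebra.ι ℝ (T (bV 2))) := by
                rw [hstarV u u, map_smul, map_mul, map_mul, ExteriorAlgebra.map_apply_ι,
                  ExteriorAlgebra.map_apply_ι, ExteriorAlgebra.map_apply_ι]
            _ = 0 := by rw [h3w, smul_zero]
        have := (rsmul_eq_zero hcomp).resolve_right hvolW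
        exact inner_self_eq_zero.mp this
      by_contra hu0
      have hnorm : ‖u‖ ≠ 0 := norm_ne_zero_iff.mpr hu0
      have hu0n : ‖(‖u‖⁻¹ • u : V)‖ = 1 := by
        rw [norm_smul, norm_inv, norm_norm, inv_mul_cancel₀ hnorm]
      have hON : Orthonormal ℝ (Set.restrict {(0 : Fin 3)} (fun _ => (‖u‖⁻¹ • u : V))) := by
        constructor
        · rintro ⟨i, hi⟩; exact hu0n
        · rintro ⟨i, hi⟩ ⟨j, hj⟩ hne
          rw [Set.mem_singleton_iff] at hi hj
          exact absurd (Subtype.ext (hi.trans hj.symm)) hne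
      obtain ⟨f, hf⟩ := Orthonormal.exists_orthonormalBasis_extension_of_card_eq
        (by simp [hdimV]) hON
      have hf0 : f 0 = ‖u‖⁻¹ • u := hf 0 rfl
      have hon := orthonormal_iff_ite.mp f.orthonormal
      have hu_eq : u = ‖u‖ • f 0 := by
        rw [hf0, smul_smul, mul_inv_cancel₀ hnorm, one_smul]
      obtain ⟨α, hα, hsf, _⟩ := star_spec bV starV hstarV f
      have hTf0 : T (f 0) = 0 := by
        rw [hf0, map_smul, hTu, smul_zero]
      -- the element map T (starV u) vanishes
      have hmap0 : ExteriorAlgebra.map T ((starV u : ⋀[ℝ]^2 V) : ExteriorAlgebra ℝ V) = 0 := by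
        rw [← hb, hTu, map_zero, ZeroMemClass.coe_zero]
      have hmain : ExteriorAlgebra.ι ℝ (T (f 1)) * ExteriorAlgebra.ι ℝ (T (f 2)) = 0 := by
        have h5 : ExteriorAlgebra.map T ((starV u : ⋀[ℝ]^2 V) : ExteriorAlgebra ℝ V)
            = (‖u‖ * α) • (ExteriorAlgebra.ι ℝ (T (f 1)) * ExteriorAlgebra.ι ℝ (T (f 2))) := by
          conv_lhs => rw [hu_eq]
          rw [map_smul, Submodule.coe_smul, map_smul, hsf, map_smul, map_mul,
            ExteriorAlgebra.map_apply_ι, ExteriorAlgebra.map_apply_ι, smul_smul]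
        rw [hmap0] at h5
        have h6 := (rsmul_eq_zero h5.symm).resolve_left
          (mul_ne_zero hnorm hα)
        exact h6
      -- kernel of T is spanned by f 0
      have hker1 : finrank ℝ (LinearMap.ker T) = 1 := by
        have := LinearMap.finrank_range_add_finrank_ker T
        omega
      have hf0ne : f 0 ≠ 0 := by
        intro h
        have h1 : ‖f 0‖ = 1 := by rw [hf0]; exact hu0n
        rw [h, norm_zero] at h1; norm_num at h1
      have hkerT : LinearMap.ker T = ℝ ∙ (f 0) := by
        symm
        apply Submodule.eq_of_le_of_finrank_eq
        · rw [Submodule.span_singleton_le_iff_mem, LinearMap.mem_ker]; exact hTf0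
        · rw [finrank_span_singleton hf0ne, hker1]
      have hpair : LinearIndependent ℝ ![T (f 1), T (f 2)] := by
        rw [LinearIndependent.pair_iff]
        intro s t hst
        have hmem : s • f 1 + t • f 2 ∈ LinearMap.ker T := by
          rw [LinearMap.mem_ker, map_add, map_smul, map_smul, hst]
        rw [hkerT, Submodule.mem_span_singleton] at hmem
        obtain ⟨c, hc⟩ := hmem
        constructor
        · have := congrArg (fun x => ⟪f 1, x⟫) hc.symm
          simpa [inner_add_right, inner_smul_right, hon] using this
        · have := congrArg (fun x => ⟪f 2, x⟫) hc.symm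
          simpa [inner_add_right, inner_smul_right, hon] using this
      have hspan : ∃ w : W, w ∉ Submodule.span ℝ (Set.range ![T (f 1), T (f 2)]) := by
        by_contra hall
        push_neg at hall
        have htop : Submodule.span ℝ (Set.range ![T (f 1), T (f 2)]) = ⊤ :=
          Submodule.eq_top_iff'.mpr hall
        have hsple : Submodule.span ℝ (Set.range ![T (f 1), T (f 2)])
            ≤ LinearMap.range T := by
          rw [Submodule.span_le]
          rintro x ⟨i, rfl⟩
          fin_cases i
          · exact LinearMap.mem_range_self T (f 1)
          · exact LinearMap.mem_range_self T (f 2)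
        rw [htop, top_le_iff] at hsple
        rw [hsple, finrank_top, hdimW] at h2
        omega
      obtain ⟨w, hw⟩ := hspan
      have hli3 : LinearIndependent ℝ ![w, T (f 1), T (f 2)] :=
        linearIndependent_fin_cons.mpr ⟨hpair, hw⟩
      have hne := basis_triple_ne_zero
        (basisOfLinearIndependentOfCardEqFinrank hli3 (by simp [hdimW]))
      rw [coe_basisOfLinearIndependentOfCardEqFinrank] at hne
      apply hne
      show ExteriorAlgebra.ι ℝ (![w, T (f 1), T (f 2)] 0) *
          ExteriorAlgebra.ι ℝ (![w, T (f 1), T (f 2)] 1) *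
          ExteriorAlgebra.ι ℝ (![w, T (f 1), T (f 2)] 2) = 0
      simp only [Matrix.cons_val_zero, Matrix.cons_val_one, Matrix.head_cons,
        Matrix.cons_val_two, Matrix.tail_cons]
      rw [mul_assoc, hmain, mul_zero]
    have hr1 := LinearMap.finrank_range_add_finrank_ker S
    rw [hkerS, finrank_bot, hdimV] at hr1
    omega
  · -- Part 3
    intro _ T' hT'T hTT' ξ
    have hT : ∀ w : W, T (T' w) = w := fun w => by
      have := LinearMap.congr_fun hTT' w
      simpa using this
    obtain ⟨hW0, hW1, hW2⟩ := star_basis bW starW hstarW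
    have hon := orthonormal_iff_ite.mp bW.orthonormal
    have hinj : Function.Injective starW := by
      intro a b hab
      have h0 : starW (a - b) = 0 := by rw [map_sub, hab, sub_self]
      have h1 : ((starW (a - b) : ⋀[ℝ]^2 W) : ExteriorAlgebra ℝ W) = 0 := by
        rw [h0]; exact ZeroMemClass.coe_zero _
      exact sub_eq_zero.mp (star_vanish bW starW hstarW h1)
    have hsurj : Function.Surjective starW := by
      intro y
      obtain ⟨c, hc⟩ := exists_rep bW.toBasis (SetLike.coe_mem y)
      rw [OrthonormalBasis.coe_toBasis] at hc
      refine ⟨c 0 • bW 0 + c 1 • bW 1 + c 2 • bW 2, Subtype.coe_injective ?_⟩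
      have hcoe : ((starW (c 0 • bW 0 + c 1 • bW 1 + c 2 • bW 2) : ⋀[ℝ]^2 W) :
            ExteriorAlgebra ℝ W)
          = c 0 • ((starW (bW 0) : ⋀[ℝ]^2 W) : ExteriorAlgebra ℝ W)
            + c 1 • ((starW (bW 1) : ⋀[ℝ]^2 W) : ExteriorAlgebra ℝ W)
            + c 2 • ((starW (bW 2) : ⋀[ℝ]^2 W) : ExteriorAlgebra ℝ W) := by
        rw [map_add, map_add, map_smul, map_smul, map_smul]; rfl
      show ((starW (c 0 • bW 0 + c 1 • bW 1 + c 2 • bW 2) : ⋀[ℝ]^2 W) :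
          ExteriorAlgebra ℝ W) = (y : ExteriorAlgebra ℝ W)
      rw [hcoe, hW0, hW1, hW2, ← hc, Fin.sum_univ_three]
      simp [w2]
    set eW : W ≃ₗ[ℝ] ⋀[ℝ]^2 W := LinearEquiv.ofBijective starW ⟨hinj, hsurj⟩ with heW
    have hstareq : ∀ y : ⋀[ℝ]^2 W, starW (eW.symm y) = y := by
      intro y
      calc starW (eW.symm y) = eW (eW.symm y) := rfl
        _ = y := eW.apply_symm_apply y
    have hmemW : ∀ x : ExteriorAlgebra ℝ V, x ∈ ⋀[ℝ]^2 V →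
        ExteriorAlgebra.map T x ∈ ⋀[ℝ]^2 W := by
      intro x hx
      rw [← ExteriorAlgebra.ιMulti_span_fixedDegree] at hx
      induction hx using Submodule.span_induction with
      | mem y hmem =>
        obtain ⟨v, rfl⟩ := hmem
        rw [ExteriorAlgebra.map_apply_ιMulti]
        exact ExteriorAlgebra.ιMulti_range ℝ 2 ⟨T ∘ v, rfl⟩
      | zero => rw [map_zero]; exact Submodule.zero_mem _
      | add y z _ _ hy hz => rw [map_add]; exact Submodule.add_mem _ hy hz
      | smul c y _ hy =>
        have h := LinearMap.map_smul (ExteriorAlgebra.map T).toLinearMap c y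
        simp only [AlgHom.toLinearMap_apply] at h
        rw [h]; exact Submodule.smul_mem _ _ hy
    set P : V →ₗ[ℝ] ⋀[ℝ]^2 W := LinearMap.codRestrict (⋀[ℝ]^2 W)
      ((ExteriorAlgebra.map T).toLinearMap ∘ₗ (⋀[ℝ]^2 V).subtype ∘ₗ starV)
      (fun u => hmemW _ (SetLike.coe_mem _)) with hP
    set M : W →ₗ[ℝ] W := (eW.symm : ⋀[ℝ]^2 W →ₗ[ℝ] W) ∘ₗ P ∘ₗ T' with hM
    have hMkey : ∀ w : W, ((starW (M w) : ⋀[ℝ]^2 W) : ExteriorAlgebra ℝ W)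
        = ExteriorAlgebra.map T ((starV (T' w) : ⋀[ℝ]^2 V) : ExteriorAlgebra ℝ V) := by
      intro w
      have h1 : starW (M w) = P (T' w) := by
        rw [hM]
        simp only [LinearMap.comp_apply, LinearEquiv.coe_coe]
        exact hstareq _
      rw [h1, hP]
      rfl
    set A : W →ₗ[ℝ] W := iota ξ ∘ₗ (⋀[ℝ]^2 W).subtype ∘ₗ starW with hA
    have hA0 : A (bW 0) = ξ (bW 1) • bW 2 - ξ (bW 2) • bW 1 := by
      rw [hA]
      simp only [LinearMap.comp_apply, Submodule.subtype_apply]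
      rw [hW0, ← ιMulti_two, hiota]
    have hA1 : A (bW 1) = ξ (bW 2) • bW 0 - ξ (bW 0) • bW 2 := by
      rw [hA]
      simp only [LinearMap.comp_apply, Submodule.subtype_apply]
      rw [hW1, ← ιMulti_two, hiota]
    have hA2 : A (bW 2) = ξ (bW 0) • bW 1 - ξ (bW 1) • bW 0 := by
      rw [hA]
      simp only [LinearMap.comp_apply, Submodule.subtype_apply]
      rw [hW2, ← ιMulti_two, hiota]
    have htrA : LinearMap.trace ℝ W A = 0 := by
      rw [trace_onb bW A, Fin.sum_univ_three, hA0, hA1, hA2]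
      simp [inner_sub_right, inner_smul_right, hon]
    have hmat : ∀ i j : Fin 3, ⟪bW i, A (bW j)⟫ = -⟪A (bW i), bW j⟫ := by
      intro i j
      fin_cases i <;> fin_cases j <;>
        simp [hA0, hA1, hA2, inner_sub_right, inner_sub_left, inner_smul_right,
          inner_smul_left, hon]
    have hskew : ∀ (i : Fin 3) (w : W), ⟪bW i, A w⟫ = -⟪A (bW i), w⟫ := by
      intro i w
      have hw := bW.sum_repr' w
      conv_lhs => rw [← hw]
      conv_rhs => rw [← hw]
      rw [map_sum, inner_sum, inner_sum, ← Finset.sum_neg_distrib]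
      refine Finset.sum_congr rfl fun j _ => ?_
      rw [map_smul, inner_smul_right, inner_smul_right, hmat i j]
      ring
    have hMsym : ∀ u w : W, ⟪w, M u⟫ • (ExteriorAlgebra.ι ℝ (bW 0) *
        ExteriorAlgebra.ι ℝ (bW 1) * ExteriorAlgebra.ι ℝ (bW 2))
        = ⟪T' w, T' u⟫ • ExteriorAlgebra.map T (ExteriorAlgebra.ι ℝ (bV 0) *
            ExteriorAlgebra.ι ℝ (bV 1) * ExteriorAlgebra.ι ℝ (bV 2)) := by
      intro u w
      calc ⟪w, M u⟫ • (ExteriorAlgebra.ι ℝ (bW 0) * ExteriorAlgebra.ι ℝ (bW 1) *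
            ExteriorAlgebra.ι ℝ (bW 2))
          = ExteriorAlgebra.ι ℝ w * ((starW (M u) : ⋀[ℝ]^2 W) : ExteriorAlgebra ℝ W) :=
            (hstarW w (M u)).symm
        _ = ExteriorAlgebra.ι ℝ (T (T' w)) *
              ExteriorAlgebra.map T ((starV (T' u) : ⋀[ℝ]^2 V) : ExteriorAlgebra ℝ V) := by
            rw [hMkey u, hT w]
        _ = ExteriorAlgebra.map T (ExteriorAlgebra.ι ℝ (T' w) *
              ((starV (T' u) : ⋀[ℝ]^2 V) : ExteriorAlgebra ℝ V)) := by
            rw [map_mul, ExteriorAlgebra.map_apply_ι]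
        _ = ExteriorAlgebra.map T (⟪T' w, T' u⟫ • (ExteriorAlgebra.ι ℝ (bV 0) *
              ExteriorAlgebra.ι ℝ (bV 1) * ExteriorAlgebra.ι ℝ (bV 2))) := by
            rw [hstarV]
        _ = ⟪T' w, T' u⟫ • ExteriorAlgebra.map T (ExteriorAlgebra.ι ℝ (bV 0) *
              ExteriorAlgebra.ι ℝ (bV 1) * ExteriorAlgebra.ι ℝ (bV 2)) := by
            have h := LinearMap.map_smul (ExteriorAlgebra.map T).toLinearMap
              (⟪T' w, T' u⟫) (ExteriorAlgebra.ι ℝ (bV 0) * ExteriorAlgebra.ι ℝ (bV 1) *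
                ExteriorAlgebra.ι ℝ (bV 2))
            simpa only [AlgHom.toLinearMap_apply] using h
    have hMadj : ∀ u w : W, ⟪w, M u⟫ = ⟪u, M w⟫ := by
      intro u w
      have h1 := hMsym u w
      have h2 := hMsym w u
      rw [real_inner_comm (T' w) (T' u)] at h2
      have h3 : (⟪w, M u⟫ - ⟪u, M w⟫) • (ExteriorAlgebra.ι ℝ (bW 0) *
          ExteriorAlgebra.ι ℝ (bW 1) * ExteriorAlgebra.ι ℝ (bW 2)) = 0 := by
        rw [sub_smul, h1, h2, sub_self]
      have := (rsmul_eq_zero h3).resolve_right hvolW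
      linarith
    have htrAM : LinearMap.trace ℝ W (A ∘ₗ M) = 0 := by
      have hdiag : ∀ i : Fin 3, ⟪bW i, (A ∘ₗ M) (bW i)⟫ = -⟪bW i, (M ∘ₗ A) (bW i)⟫ := by
        intro i
        have e1 : (A ∘ₗ M) (bW i) = A (M (bW i)) := rfl
        have e2 : (M ∘ₗ A) (bW i) = M (A (bW i)) := rfl
        rw [e1, e2, hskew i (M (bW i)), hMadj (A (bW i)) (bW i)]
      have h1 : LinearMap.trace ℝ W (A ∘ₗ M) = -LinearMap.trace ℝ W (M ∘ₗ A) := by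
        rw [trace_onb bW, trace_onb bW, ← Finset.sum_neg_distrib]
        exact Finset.sum_congr rfl fun i _ => hdiag i
      have h2 : LinearMap.trace ℝ W (M ∘ₗ A) = LinearMap.trace ℝ W (A ∘ₗ M) := by
        rw [← Module.End.mul_eq_comp, ← Module.End.mul_eq_comp, LinearMap.trace_mul_comm]
      rw [h2] at h1
      linarith
    have hF' : (3 : ℝ) • (iota ξ ∘ₗ (⋀[ℝ]^2 W).subtype ∘ₗ S ∘ₗ T') = A - A ∘ₗ M := by
      apply LinearMap.ext
      intro w
      simp only [LinearMap.smul_apply, LinearMap.sub_apply, LinearMap.comp_apply,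
        Submodule.subtype_apply]
      have hb := hBPS (T' w)
      rw [hT w] at hb
      have h1 : (3 : ℝ) • ((S (T' w) : ⋀[ℝ]^2 W) : ExteriorAlgebra ℝ W)
          = ((starW w : ⋀[ℝ]^2 W) : ExteriorAlgebra ℝ W)
            - ((starW (M w) : ⋀[ℝ]^2 W) : ExteriorAlgebra ℝ W) := by
        rw [hb, hMkey w]; abel
      calc (3 : ℝ) • iota ξ ((S (T' w) : ⋀[ℝ]^2 W) : ExteriorAlgebra ℝ W)
          = iota ξ ((3 : ℝ) • ((S (T' w) : ⋀[ℝ]^2 W) : ExteriorAlgebra ℝ W)) :=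
            (map_smul _ _ _).symm
        _ = iota ξ ((starW w : ⋀[ℝ]^2 W) : ExteriorAlgebra ℝ W)
              - iota ξ ((starW (M w) : ⋀[ℝ]^2 W) : ExteriorAlgebra ℝ W) := by
            rw [h1, map_sub]
        _ = A w - A (M w) := by
            rw [hA]
            simp only [LinearMap.comp_apply, Submodule.subtype_apply]
    have htr := congrArg (LinearMap.trace ℝ W) hF'
    rw [map_smul, map_sub, htrA, htrAM, smul_eq_mul] at htr
    linarith [htr]
end

section
/- Let V and W be 3-dimensional oriented real inner product spaces and let L : V → W be a linear map, with dual (pullback) map L* : W* → V*. If L* intertwines the Hodge stars, i.e., ⋆_V ∘ L* = Λ²L* ∘ ⋆_W as maps W* → Λ²V* (where ⋆_V : Λ¹V* → Λ²V* and ⋆_W : Λ¹W* → Λ²W* are the Hodge stars of the induced inner products on the dual spaces), then either L = 0 or L is an orientation-preserving linear isometry. -/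
/-!
The defining identity of the Hodge star forces `⋆⟪b, ·⟫ = ι_b vol`, so the intertwining
condition says `vol_V (L* b, y, z) = vol_W (b, L y, L z)`. Writing `vol_W ∘ L = c • vol_V` and
taking `b = L x` gives `ι_{L* L x} vol_V = ι_{c x} vol_V`, and `ι_· vol` is injective, so
`L* L = c`. Thus `L` scales inner products by `c`, and comparing the volumes of an orthonormal
basis and of its image gives `c² = c³`, i.e. `c = 0` or `c = 1`.
-/

open Module
open scoped RealInnerProductSpace

section

variable {E : Type*} [NormedAddCommGroup E] [InnerProductSpace ℝ E]

theorem AlternatingMap.apply_vecCons_eq_inner_smul {N : Type*} [AddCommGroup N] [Module ℝ N]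
    (f : E [⋀^Fin 3]→ₗ[ℝ] N) (e : OrthonormalBasis (Fin 3) ℝ E) (b : E) {i j k : Fin 3}
    (hij : i ≠ j) (hki : k ≠ i) (hkj : k ≠ j) :
    f ![b, e i, e j] = ⟪e k, b⟫ • f ![e k, e i, e j] := by
  let φ : E →ₗ[ℝ] N :=
    { toFun x := f ![x, e i, e j]
      map_add' x y := f.map_vecCons_add _ x y
      map_smul' c x := f.map_vecCons_smul _ c x }
  have hvanish : ∀ m ≠ k, φ (e m) = 0 := by
    intro m hmk
    apply f.map_eq_zero_of_not_injective
    obtain rfl | rfl : m = i ∨ m = j := by omega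
    · exact fun h => Fin.zero_ne_one (h rfl)
    · exact fun h => (by decide : (0 : Fin 3) ≠ 2) (h rfl)
  calc φ b = ∑ m, ⟪e m, b⟫ • φ (e m) := by
        conv_lhs => rw [← e.sum_repr' b]
        simp only [map_sum, map_smul]
    _ = ⟪e k, b⟫ • φ (e k) :=
      Finset.sum_eq_single k (fun m _ hmk => by rw [hvanish m hmk, smul_zero]) (by simp)

theorem Orientation.exists_eq_smul_volumeForm {n : ℕ} [Fact (finrank ℝ E = n + 1)]
    (o : Orientation ℝ E (Fin (n + 1))) (f : E [⋀^Fin (n + 1)]→ₗ[ℝ] ℝ) :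
    ∃ c : ℝ, f = c • o.volumeForm := by
  let e := o.finOrthonormalBasis n.succ_pos Fact.out
  rw [o.volumeForm_robust e (o.finOrthonormalBasis_orientation _ _)]
  exact ⟨_, f.eq_smul_basis_det e.toBasis⟩

variable [Fact (finrank ℝ E = 3)]

/-- `⟪a, ·⟫ ∧ ⋆⟪b, ·⟫ = ⟪a, b⟫ vol`, with the wedge product evaluated on `x, y, z`. -/
def IsHodgeStar (o : Orientation ℝ E (Fin 3)) (star : Dual ℝ E →ₗ[ℝ] E [⋀^Fin 2]→ₗ[ℝ] ℝ) :
    Prop :=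
  ∀ a b x y z : E,
    ⟪a, x⟫ * star ((innerSL ℝ b).toLinearMap) ![y, z]
      - ⟪a, y⟫ * star ((innerSL ℝ b).toLinearMap) ![x, z]
      + ⟪a, z⟫ * star ((innerSL ℝ b).toLinearMap) ![x, y]
    = ⟪a, b⟫ * o.volumeForm ![x, y, z]

namespace IsHodgeStar

variable {o : Orientation ℝ E (Fin 3)}
  {star : Dual ℝ E →ₗ[ℝ] E [⋀^Fin 2]→ₗ[ℝ] ℝ}

theorem apply_innerSL (h : IsHodgeStar o star) (b : E) :
    star (innerSL ℝ b).toLinearMap = o.volumeForm.curryLeft b := by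
  let e := o.finOrthonormalBasis (by norm_num) Fact.out
  refine e.toBasis.ext_alternating fun v hv => ?_
  obtain ⟨k, hki, hkj⟩ : ∃ k, k ≠ v 0 ∧ k ≠ v 1 := by decide +revert
  have hv01 : v 0 ≠ v 1 := hv.ne Fin.zero_ne_one
  have hstar := h (e k) b (e k) (e (v 0)) (e (v 1))
  rw [e.inner_eq_one, e.inner_eq_zero hki, e.inner_eq_zero hkj, one_mul, zero_mul, zero_mul,
    sub_zero, add_zero] at hstar
  have hvec : (fun m => e.toBasis (v m)) = ![e (v 0), e (v 1)] := by
    ext m; fin_cases m <;> simp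
  rw [hvec, hstar, AlternatingMap.curryLeft_apply_apply,
    o.volumeForm.apply_vecCons_eq_inner_smul e b hv01 hki hkj, smul_eq_mul]

theorem volumeForm_curryLeft_injective (h : IsHodgeStar o star) :
    Function.Injective o.volumeForm.curryLeft := by
  refine (injective_iff_map_eq_zero _).2 fun w hw => ?_
  let e := o.finOrthonormalBasis (by norm_num) Fact.out
  have hvol : o.volumeForm ![e 0, e 1, e 2] ≠ 0 := by
    have he : ![e 0, e 1, e 2] = e := by ext m; fin_cases m <;> rfl
    rw [he, ← abs_ne_zero, o.abs_volumeForm_apply_of_orthonormal e]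
    exact one_ne_zero
  -- `α ∧ ⋆α = ‖α‖² vol`
  have hself := h w w (e 0) (e 1) (e 2)
  simp only [h.apply_innerSL, hw, AlternatingMap.zero_apply, mul_zero, sub_zero, add_zero] at hself
  exact inner_self_eq_zero.1 ((mul_eq_zero.1 hself.symm).resolve_right hvol)

end IsHodgeStar

end

section

variable {V W : Type*} [NormedAddCommGroup V] [InnerProductSpace ℝ V]
  [NormedAddCommGroup W] [InnerProductSpace ℝ W]

theorem sq_eq_pow_of_inner_map_map {n : ℕ} [Fact (finrank ℝ V = n + 1)]
    [Fact (finrank ℝ W = n + 1)] (oV : Orientation ℝ V (Fin (n + 1)))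
    (oW : Orientation ℝ W (Fin (n + 1))) {L : V →ₗ[ℝ] W} {c d : ℝ}
    (hc : oW.volumeForm.compLinearMap L = c • oV.volumeForm)
    (hd : ∀ x y, ⟪L x, L y⟫ = d * ⟪x, y⟫) :
    c ^ 2 = d ^ (n + 1) := by
  let e := oV.finOrthonormalBasis n.succ_pos Fact.out
  have horth : Pairwise fun i j => ⟪L (e i), L (e j)⟫ = 0 := fun i j hij => by
    simp only [hd, e.inner_eq_zero hij, mul_zero]
  have hvol : oW.volumeForm (fun i => L (e i)) = c * oV.volumeForm e := by
    rw [← AlternatingMap.compLinearMap_apply, hc, AlternatingMap.smul_apply, smul_eq_mul]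
  calc c ^ 2 = |oW.volumeForm (fun i => L (e i))| ^ 2 := by
        rw [hvol, abs_mul, oV.abs_volumeForm_apply_of_orthonormal e, mul_one, sq_abs]
    _ = ∏ i, ‖L (e i)‖ ^ 2 := by
        rw [oW.abs_volumeForm_apply_of_pairwise_orthogonal horth, Finset.prod_pow]
    _ = ∏ _i : Fin (n + 1), d := by
        congr 1; ext i; rw [← real_inner_self_eq_norm_sq, hd, e.inner_eq_one, mul_one]
    _ = d ^ (n + 1) := by simp

variable [Fact (finrank ℝ V = 3)] [Fact (finrank ℝ W = 3)]
  [FiniteDimensional ℝ V] [FiniteDimensional ℝ W]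
  {oV : Orientation ℝ V (Fin 3)} {oW : Orientation ℝ W (Fin 3)}
  {starV : Dual ℝ V →ₗ[ℝ] V [⋀^Fin 2]→ₗ[ℝ] ℝ} {starW : Dual ℝ W →ₗ[ℝ] W [⋀^Fin 2]→ₗ[ℝ] ℝ}
  {L : V →ₗ[ℝ] W}

namespace IsHodgeStar

theorem volumeForm_curryLeft_adjoint (hV : IsHodgeStar oV starV) (hW : IsHodgeStar oW starW)
    (hL : ∀ β, starV (L.dualMap β) = (starW β).compLinearMap L) (b : W) :
    oV.volumeForm.curryLeft (L.adjoint b) = (oW.volumeForm.curryLeft b).compLinearMap L := by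
  have hdual : L.dualMap (innerSL ℝ b).toLinearMap = (innerSL ℝ (L.adjoint b)).toLinearMap := by
    ext x; simp [LinearMap.adjoint_inner_left]
  rw [← hV.apply_innerSL, ← hW.apply_innerSL, ← hdual, hL]

theorem adjoint_apply_apply_eq_smul (hV : IsHodgeStar oV starV) (hW : IsHodgeStar oW starW)
    (hL : ∀ β, starV (L.dualMap β) = (starW β).compLinearMap L) {c : ℝ}
    (hc : oW.volumeForm.compLinearMap L = c • oV.volumeForm) (x : V) :
    L.adjoint (L x) = c • x :=
  hV.volumeForm_curryLeft_injective <| by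
    rw [hV.volumeForm_curryLeft_adjoint hW hL, ← AlternatingMap.curryLeft_compLinearMap, hc,
      AlternatingMap.curryLeft_smul, map_smul, LinearMap.smul_apply]

theorem inner_map_map_eq_mul (hV : IsHodgeStar oV starV) (hW : IsHodgeStar oW starW)
    (hL : ∀ β, starV (L.dualMap β) = (starW β).compLinearMap L) {c : ℝ}
    (hc : oW.volumeForm.compLinearMap L = c • oV.volumeForm) (x y : V) :
    ⟪L x, L y⟫ = c * ⟪x, y⟫ := by
  rw [← LinearMap.adjoint_inner_left, hV.adjoint_apply_apply_eq_smul hW hL hc, real_inner_smul_left]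

end IsHodgeStar

end

/-- Pointwise form of Manton's theorem: let `V`, `W` be 3-dimensional oriented real inner
product spaces, with Hodge stars `⋆_V : Λ¹V* → Λ²V*` and `⋆_W : Λ¹W* → Λ²W*` on the dual
spaces, characterized by `α ∧ ⋆β = ⟨α,β⟩ vol` (covectors being represented as `⟨a,·⟩`,
the wedge written out pointwise, and `vol` the metric volume form of the orientation).
If the pullback `L* : W* → V*` of a linear map `L : V → W` intertwines the Hodge stars,
`⋆_V ∘ L* = Λ²L* ∘ ⋆_W`, then `L = 0` or `L` is an orientation-preserving linear
isometry. -/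
theorem hodge_intertwiner_is_zero_or_isometry {V W : Type*}
    [NormedAddCommGroup V] [InnerProductSpace ℝ V] [Fact (finrank ℝ V = 3)]
    [NormedAddCommGroup W] [InnerProductSpace ℝ W] [Fact (finrank ℝ W = 3)]
    (oV : Orientation ℝ V (Fin 3)) (oW : Orientation ℝ W (Fin 3))
    (starV : Module.Dual ℝ V →ₗ[ℝ] (V [⋀^Fin 2]→ₗ[ℝ] ℝ))
    (hstarV : ∀ a b : V, ∀ x y z : V,
      ⟪a, x⟫ * starV ((innerSL ℝ b).toLinearMap) ![y, z]
        - ⟪a, y⟫ * starV ((innerSL ℝ b).toLinearMap) ![x, z]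
        + ⟪a, z⟫ * starV ((innerSL ℝ b).toLinearMap) ![x, y]
      = ⟪a, b⟫ * oV.volumeForm ![x, y, z])
    (starW : Module.Dual ℝ W →ₗ[ℝ] (W [⋀^Fin 2]→ₗ[ℝ] ℝ))
    (hstarW : ∀ a b : W, ∀ x y z : W,
      ⟪a, x⟫ * starW ((innerSL ℝ b).toLinearMap) ![y, z]
        - ⟪a, y⟫ * starW ((innerSL ℝ b).toLinearMap) ![x, z]
        + ⟪a, z⟫ * starW ((innerSL ℝ b).toLinearMap) ![x, y]
      = ⟪a, b⟫ * oW.volumeForm ![x, y, z])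
    (L : V →ₗ[ℝ] W)
    (hL : ∀ β : Module.Dual ℝ W, starV (L.dualMap β) = (starW β).compLinearMap L) :
    L = 0 ∨ ((∀ v : V, ‖L v‖ = ‖v‖) ∧ oW.volumeForm.compLinearMap L = oV.volumeForm) := by
  have : FiniteDimensional ℝ V := .of_fact_finrank_eq_succ 2
  have : FiniteDimensional ℝ W := .of_fact_finrank_eq_succ 2
  obtain ⟨c, hc⟩ := oV.exists_eq_smul_volumeForm (oW.volumeForm.compLinearMap L)
  have hinner := IsHodgeStar.inner_map_map_eq_mul hstarV hstarW hL hc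
  have hc01 : c = 0 ∨ c = 1 := by
    have hcube : c ^ 2 = c ^ 3 := sq_eq_pow_of_inner_map_map oV oW hc hinner
    have : c ^ 2 * (c - 1) = 0 := by linear_combination -hcube
    simpa [sub_eq_zero] using this
  rcases hc01 with rfl | rfl
  · left
    ext x
    simpa using hinner x x
  · right
    exact ⟨(LinearMap.norm_map_iff_inner_map_map L).2 (by simpa using hinner), by rw [hc, one_smul]⟩
end

section
/- Let V and W be 3-dimensional oriented real inner product spaces and let L : V → W be a linear map. Let |L| denote the Frobenius norm (|L|² = Σᵢ |L(eᵢ)|² for an orthonormal basis eᵢ of V), let Λ²L : Λ²V → Λ²W be the induced map with its Frobenius norm for the induced inner products, and let det L ∈ ℝ be defined by Λ³L(vol_V) = (det L)·vol_W, where vol_V, vol_W are the oriented unit-norm elements of Λ³V, Λ³W. Then |L|² + |Λ²L|² ≥ 6·|det L|, with equality if and only if L = 0 or L is a linear isometry. -/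
open Module
open scoped RealInnerProductSpace

open Matrix Finset

/-- The Skyrme energy of a 3×3 matrix. -/
noncomputable def skyE (M : Matrix (Fin 3) (Fin 3) ℝ) : ℝ :=
  (∑ j, ∑ i, M i j ^ 2) + (∑ i, ∑ j, if i < j then
    ((∑ k, M k i * M k i) * (∑ k, M k j * M k j) -
      (∑ k, M k i * M k j) * (∑ k, M k j * M k i)) else 0)

lemma skyE_sub (M : Matrix (Fin 3) (Fin 3) ℝ) :
    skyE M - 6 * M.det = ∑ i, ∑ j, (M i j - M.adjugate j i) ^ 2 := by
  simp only [skyE, Matrix.det_fin_three, Matrix.adjugate_fin_three,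
    Fin.sum_univ_three]
  norm_num [Fin.lt_def]
  simp only [Matrix.cons_val_two, Matrix.cons_val_zero, Matrix.cons_val_one, Matrix.vecHead, Matrix.vecTail, Function.comp_apply, Fin.succ_zero_eq_one, Fin.succ_one_eq_two, Matrix.cons_val_succ]
  ring

lemma skyE_add (M : Matrix (Fin 3) (Fin 3) ℝ) :
    skyE M + 6 * M.det = ∑ i, ∑ j, (M i j + M.adjugate j i) ^ 2 := by
  simp only [skyE, Matrix.det_fin_three, Matrix.adjugate_fin_three,
    Fin.sum_univ_three]
  norm_num [Fin.lt_def]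
  simp only [Matrix.cons_val_two, Matrix.cons_val_zero, Matrix.cons_val_one, Matrix.vecHead, Matrix.vecTail, Function.comp_apply, Fin.succ_zero_eq_one, Fin.succ_one_eq_two, Matrix.cons_val_succ]
  ring

lemma skyE_ge (M : Matrix (Fin 3) (Fin 3) ℝ) : skyE M ≥ 6 * |M.det| := by
  rcases abs_cases M.det with ⟨h, _⟩ | ⟨h, _⟩
  · rw [h]
    nlinarith [skyE_sub M, Finset.sum_nonneg (fun i (_ : i ∈ Finset.univ) =>
      Finset.sum_nonneg (fun j (_ : j ∈ Finset.univ) => sq_nonneg (M i j - M.adjugate j i)))]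
  · rw [h]
    nlinarith [skyE_add M, Finset.sum_nonneg (fun i (_ : i ∈ Finset.univ) =>
      Finset.sum_nonneg (fun j (_ : j ∈ Finset.univ) => sq_nonneg (M i j + M.adjugate j i)))]


lemma transpose_mul_self_aux {M : Matrix (Fin 3) (Fin 3) ℝ} {e : ℝ}
    (he : e ^ 2 = M.det ^ 2) (h : Mᵀ * M = e • 1) : M = 0 ∨ Mᵀ * M = 1 := by
  have hdet : M.det ^ 2 = e ^ 3 := by
    have := congrArg Matrix.det h
    rw [Matrix.det_mul, Matrix.det_transpose, Matrix.det_smul, Matrix.det_one] at this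
    simpa [pow_two, Finset.card_univ, pow_succ] using this
  have he2 : e = 0 ∨ e = 1 := by
    rcases mul_eq_zero.mp (show e ^ 2 * (e - 1) = 0 by nlinarith) with h1 | h1
    · exact Or.inl (by nlinarith)
    · exact Or.inr (by linarith)
  rcases he2 with rfl | rfl
  · left
    have h0 : ∀ j, ∑ k, M k j * M k j = 0 := by
      intro j
      have := congrFun (congrFun h j) j
      simpa [Matrix.mul_apply, Matrix.transpose_apply] using this
    ext i j
    have h1 := h0 j
    have h2 : ∀ k ∈ Finset.univ, (0:ℝ) ≤ M k j * M k j := fun k _ => mul_self_nonneg _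
    have := (Finset.sum_eq_zero_iff_of_nonneg h2).mp h1 i (Finset.mem_univ i)
    simpa [mul_self_eq_zero] using this
  · right
    simpa using h

lemma skyE_eq_iff (M : Matrix (Fin 3) (Fin 3) ℝ) :
    skyE M = 6 * |M.det| ↔ M = 0 ∨ Mᵀ * M = 1 := by
  constructor
  · intro hE
    rcases abs_cases M.det with ⟨h, _⟩ | ⟨h, _⟩
    · rw [h] at hE
      have hsum : ∑ i, ∑ j, (M i j - M.adjugate j i) ^ 2 = 0 := by
        rw [← skyE_sub M]; linarith
      have hz : ∀ i j, M i j = M.adjugate j i := by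
        intro i j
        have h2 : ∀ i ∈ Finset.univ, (0:ℝ) ≤ ∑ j, (M i j - M.adjugate j i) ^ 2 :=
          fun i _ => Finset.sum_nonneg fun j _ => sq_nonneg _
        have := (Finset.sum_eq_zero_iff_of_nonneg h2).mp hsum i (Finset.mem_univ i)
        have h3 := (Finset.sum_eq_zero_iff_of_nonneg
          (fun j (_ : j ∈ Finset.univ) => sq_nonneg (M i j - M.adjugate j i))).mp this j
          (Finset.mem_univ j)
        have := sq_eq_zero_iff.mp h3
        linarith
      have hT : Mᵀ = M.adjugate := by ext i j; exact hz j i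
      exact transpose_mul_self_aux (by ring) (by rw [hT, Matrix.adjugate_mul])
    · rw [h] at hE
      have hsum : ∑ i, ∑ j, (M i j + M.adjugate j i) ^ 2 = 0 := by
        rw [← skyE_add M]; linarith
      have hz : ∀ i j, M i j = -M.adjugate j i := by
        intro i j
        have h2 : ∀ i ∈ Finset.univ, (0:ℝ) ≤ ∑ j, (M i j + M.adjugate j i) ^ 2 :=
          fun i _ => Finset.sum_nonneg fun j _ => sq_nonneg _
        have := (Finset.sum_eq_zero_iff_of_nonneg h2).mp hsum i (Finset.mem_univ i)
        have h3 := (Finset.sum_eq_zero_iff_of_nonneg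
          (fun j (_ : j ∈ Finset.univ) => sq_nonneg (M i j + M.adjugate j i))).mp this j
          (Finset.mem_univ j)
        have := sq_eq_zero_iff.mp h3
        linarith
      have hT : Mᵀ = -M.adjugate := by ext i j; simpa using hz j i
      refine transpose_mul_self_aux (e := -M.det) (by ring) ?_
      rw [hT, Matrix.neg_mul, Matrix.adjugate_mul, neg_smul]
  · rintro (rfl | h)
    · simp [skyE]
    · have hg : ∀ i j, (∑ k, M k i * M k j) = if i = j then (1:ℝ) else 0 := by
        intro i j
        have := congrFun (congrFun h i) j
        simpa [Matrix.mul_apply, Matrix.transpose_apply, Matrix.one_apply] using this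
      have hdet2 : M.det ^ 2 = 1 := by
        have := congrArg Matrix.det h
        rw [Matrix.det_mul, Matrix.det_transpose, Matrix.det_one] at this
        nlinarith
      have habs : |M.det| = 1 := by nlinarith [abs_nonneg M.det, sq_abs M.det]
      rw [habs]
      have h1 : (∑ j, ∑ i, M i j ^ 2) = 3 := by
        have h3 : ∀ j, ∑ i, M i j ^ 2 = 1 := by
          intro j
          simp only [pow_two]
          simpa using hg j j
        simp [h3]
      rw [skyE, h1]
      have h2 : (∑ i, ∑ j, if i < j then
          ((∑ k, M k i * M k i) * (∑ k, M k j * M k j) -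
            (∑ k, M k i * M k j) * (∑ k, M k j * M k i)) else 0) = 3 := by
        simp only [hg]
        simp only [Fin.sum_univ_three]
        norm_num [show ((0:Fin 3) < 1) from by decide, show ((0:Fin 3) < 2) from by decide,
          show ((1:Fin 3) < 2) from by decide, show ¬((1:Fin 3) < 0) from by decide,
          show ¬((2:Fin 3) < 0) from by decide, show ¬((2:Fin 3) < 1) from by decide,
          show ¬((0:Fin 3) < 0) from by decide, show ¬((1:Fin 3) < 1) from by decide,
          show ¬((2:Fin 3) < 2) from by decide, show ((0:Fin 3) ≠ 1) from by decide,
          show ((0:Fin 3) ≠ 2) from by decide, show ((1:Fin 3) ≠ 2) from by decide,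
          show ((1:Fin 3) ≠ 0) from by decide, show ((2:Fin 3) ≠ 0) from by decide,
          show ((2:Fin 3) ≠ 1) from by decide]
      rw [h2]; norm_num


/-- Parseval for orthonormal bases over `ℝ`. -/
lemma onb_inner_eq_sum {W : Type*} [NormedAddCommGroup W] [InnerProductSpace ℝ W]
    (b : OrthonormalBasis (Fin 3) ℝ W) (x y : W) :
    (inner ℝ x y : ℝ) = ∑ i, (inner ℝ (b i) x : ℝ) * (inner ℝ (b i) y : ℝ) := by
  rw [← b.repr.inner_map_map x y, PiLp.inner_apply]
  simp [b.repr_apply_apply, RCLike.inner_apply, mul_comm]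

/-- The auxiliary family of alternating forms used to extract the determinant. -/
noncomputable def topForm {W : Type*} [AddCommGroup W] [Module ℝ W]
    (b : Basis (Fin 3) ℝ W) : ∀ n : ℕ, W [⋀^Fin n]→ₗ[ℝ] ℝ
  | 3 => b.det
  | _ => 0

@[simp] lemma topForm_three {W : Type*} [AddCommGroup W] [Module ℝ W]
    (b : Basis (Fin 3) ℝ W) : topForm b 3 = b.det := rfl



/-- Pointwise Faddeev bound for the geometrised Skyrme energy.  Let `V`, `W` be
3-dimensional oriented real inner product spaces with positively oriented
orthonormal bases `bV`, `bW`, let `B` be the induced inner product on `Λ²W`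
(characterized on decomposables by `B(u∧v, x∧y) = ⟨u,x⟩⟨v,y⟩ − ⟨u,y⟩⟨v,x⟩`),
let `L : V → W` be linear, and let `d = det L` be defined by
`Λ³L(bV₀∧bV₁∧bV₂) = d • (bW₀∧bW₁∧bW₂)`.  Then the Frobenius norms satisfy
`|L|² + |Λ²L|² ≥ 6|d|`, with equality iff `L = 0` or `L` is a linear isometry. -/
theorem skyrme_pointwise_energy_bound {V W : Type*}
    [NormedAddCommGroup V] [InnerProductSpace ℝ V] [Fact (finrank ℝ V = 3)]
    [NormedAddCommGroup W] [InnerProductSpace ℝ W] [Fact (finrank ℝ W = 3)]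
    (oV : Orientation ℝ V (Fin 3)) (oW : Orientation ℝ W (Fin 3))
    (bV : OrthonormalBasis (Fin 3) ℝ V) (hbV : bV.toBasis.orientation = oV)
    (bW : OrthonormalBasis (Fin 3) ℝ W) (hbW : bW.toBasis.orientation = oW)
    (B : ExteriorAlgebra ℝ W →ₗ[ℝ] ExteriorAlgebra ℝ W →ₗ[ℝ] ℝ)
    (hB : ∀ u v x y : W,
      B (ExteriorAlgebra.ιMulti ℝ 2 ![u, v]) (ExteriorAlgebra.ιMulti ℝ 2 ![x, y])
        = ⟪u, x⟫ * ⟪v, y⟫ - ⟪u, y⟫ * ⟪v, x⟫)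
    (L : V →ₗ[ℝ] W) (d : ℝ)
    (hd : ExteriorAlgebra.map L (ExteriorAlgebra.ιMulti ℝ 3 ![bV 0, bV 1, bV 2])
        = d • ExteriorAlgebra.ιMulti ℝ 3 ![bW 0, bW 1, bW 2]) :
    (∑ i, ‖L (bV i)‖ ^ 2) +
      (∑ i, ∑ j, if i < j then
        B (ExteriorAlgebra.map L (ExteriorAlgebra.ιMulti ℝ 2 ![bV i, bV j]))
          (ExteriorAlgebra.map L (ExteriorAlgebra.ιMulti ℝ 2 ![bV i, bV j])) else 0)
      ≥ 6 * |d| ∧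
    ((∑ i, ‖L (bV i)‖ ^ 2) +
      (∑ i, ∑ j, if i < j then
        B (ExteriorAlgebra.map L (ExteriorAlgebra.ιMulti ℝ 2 ![bV i, bV j]))
          (ExteriorAlgebra.map L (ExteriorAlgebra.ιMulti ℝ 2 ![bV i, bV j])) else 0)
      = 6 * |d| ↔ (L = 0 ∨ ∀ v : V, ‖L v‖ = ‖v‖)) := by
  set M : Matrix (Fin 3) (Fin 3) ℝ := Matrix.of fun i j => ⟪bW i, L (bV j)⟫ with hM
  -- Gram matrix identity
  have hg : ∀ j k, ⟪L (bV j), L (bV k)⟫ = ∑ i, M i j * M i k := by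
    intro j k
    exact onb_inner_eq_sum bW (L (bV j)) (L (bV k))
  -- column norms
  have hnorm : ∀ j, ‖L (bV j)‖ ^ 2 = ∑ i, M i j ^ 2 := by
    intro j
    rw [← real_inner_self_eq_norm_sq, hg]
    simp [pow_two]
  -- the wedge-square terms
  have hmap2 : ∀ u v : V, ExteriorAlgebra.map L (ExteriorAlgebra.ιMulti ℝ 2 ![u, v])
      = ExteriorAlgebra.ιMulti ℝ 2 ![L u, L v] := by
    intro u v
    rw [ExteriorAlgebra.map_apply_ιMulti]
    congr 1
    funext k
    fin_cases k <;> rfl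
  have hBval : ∀ i j, B (ExteriorAlgebra.map L (ExteriorAlgebra.ιMulti ℝ 2 ![bV i, bV j]))
      (ExteriorAlgebra.map L (ExteriorAlgebra.ιMulti ℝ 2 ![bV i, bV j]))
      = (∑ k, M k i * M k i) * (∑ k, M k j * M k j) -
        (∑ k, M k i * M k j) * (∑ k, M k j * M k i) := by
    intro i j
    rw [hmap2, hB, hg, hg, hg, hg]
  -- the determinant identity
  have hdet : d = M.det := by
    have h1 := congrArg (ExteriorAlgebra.liftAlternating (topForm bW.toBasis)) hd
    rw [ExteriorAlgebra.map_apply_ιMulti, _root_.map_smul,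
      ExteriorAlgebra.liftAlternating_apply_ιMulti,
      ExteriorAlgebra.liftAlternating_apply_ιMulti, topForm_three] at h1
    have h2 : ![bW 0, bW 1, bW 2] = ⇑bW.toBasis := by
      funext k
      fin_cases k <;> simp [bW.coe_toBasis]
    rw [h2, Basis.det_self] at h1
    have h3 : bW.toBasis.det (L ∘ ![bV 0, bV 1, bV 2]) = M.det := by
      rw [Basis.det_apply]
      congr 1
      ext i j
      rw [Basis.toMatrix_apply]
      fin_cases j <;>
        simp [bW.coe_toBasis_repr_apply, bW.repr_apply_apply, hM]
    rw [h3] at h1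
    simpa using h1.symm
  -- the energy equals skyE M
  have hE : (∑ i, ‖L (bV i)‖ ^ 2) +
      (∑ i, ∑ j, if i < j then
        B (ExteriorAlgebra.map L (ExteriorAlgebra.ιMulti ℝ 2 ![bV i, bV j]))
          (ExteriorAlgebra.map L (ExteriorAlgebra.ιMulti ℝ 2 ![bV i, bV j])) else 0)
      = skyE M := by
    rw [skyE]
    congr 1
    · exact Finset.sum_congr rfl fun j _ => hnorm j
    · refine Finset.sum_congr rfl fun i _ => Finset.sum_congr rfl fun j _ => ?_
      by_cases hij : i < j
      · rw [if_pos hij, if_pos hij, hBval]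
      · rw [if_neg hij, if_neg hij]
  rw [hE, hdet]
  refine ⟨skyE_ge M, (skyE_eq_iff M).trans ?_⟩
  constructor
  · rintro (h0 | h1)
    · left
      apply bV.toBasis.ext
      intro j
      rw [bV.coe_toBasis]
      have hz : ∀ i, ⟪bW i, L (bV j)⟫ = 0 := by
        intro i
        have : M i j = 0 := by rw [h0]; rfl
        exact this
      rw [← bW.sum_repr (L (bV j))]
      simp only [LinearMap.zero_apply]
      apply Finset.sum_eq_zero
      intro i _
      rw [bW.repr_apply_apply, hz i, zero_smul]
    · right
      intro v
      have hgram : Orthonormal ℝ (fun j => L (bV j)) := by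
        rw [orthonormal_iff_ite]
        intro j k
        rw [hg]
        have := congrFun (congrFun h1 j) k
        simpa [Matrix.mul_apply, Matrix.transpose_apply, Matrix.one_apply] using this
      have hLv : L v = ∑ j, bV.repr v j • L (bV j) := by
        conv_lhs => rw [← bV.sum_repr v]
        rw [map_sum]
        simp
      have h4 : ‖L v‖ ^ 2 = ‖v‖ ^ 2 := by
        rw [← real_inner_self_eq_norm_sq, ← real_inner_self_eq_norm_sq, hLv,
          ← bV.repr.inner_map_map v v, PiLp.inner_apply]
        rw [sum_inner]
        simp only [inner_sum, real_inner_smul_left, real_inner_smul_right,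
          orthonormal_iff_ite.mp hgram]
        simp [Finset.mul_sum, mul_ite, RCLike.inner_apply, pow_two]
      have := sq_abs (‖L v‖) ▸ sq_abs ‖v‖ ▸ h4
      nlinarith [norm_nonneg (L v), norm_nonneg v]
  · rintro (rfl | hiso)
    · left
      ext i j
      simp [hM]
    · right
      have hinner : ∀ u w : V, ⟪L u, L w⟫ = ⟪u, w⟫ := by
        intro u w
        rw [real_inner_eq_norm_add_mul_self_sub_norm_mul_self_sub_norm_mul_self_div_two,
          real_inner_eq_norm_add_mul_self_sub_norm_mul_self_sub_norm_mul_self_div_two,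
          ← map_add, hiso, hiso, hiso]
      ext j k
      have := hg j k
      rw [hinner] at this
      have hb := orthonormal_iff_ite.mp bV.orthonormal j k
      rw [hb] at this
      simp [Matrix.mul_apply, Matrix.transpose_apply, Matrix.one_apply, ← this]
end

section
/- Let H be a real inner product space, let a, b, c, d ∈ H with ⟨c, d⟩ = 0, and let α, β, γ ∈ ℝ. With c₁ = 1, c₂ = 1 + α², c₃ = γ², c₄ = 9 + β², c₅ = 2αγ, c₆ = 2(3 + αβ), one has the inequality c₁|a|² + c₂|b|² + c₃|d|² + c₄|c|² + ⟨c₅ d + c₆ c, b⟩ ≥ 2⟨a, b + 3c⟩, with equality if and only if a = b + 3c and αb + βc + γd = 0. -/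
open scoped RealInnerProductSpace

/-!
Completing the square: the energy density minus the charge density `2⟪a, b + 3c⟫` equals
`‖a - (b + 3c)‖² + ‖αb + βc + γd‖²`, the orthogonality `⟪c, d⟫ = 0` removing the only cross
term that the coefficients `c₁, …, c₆` do not account for.
-/

lemma norm_add_three_smul_sq_add_norm_sq {H : Type*} [NormedAddCommGroup H]
    [InnerProductSpace ℝ H] {b c d : H} (hcd : ⟪c, d⟫ = 0) (α β γ : ℝ) :
    ‖b + (3 : ℝ) • c‖ ^ 2 + ‖α • b + β • c + γ • d‖ ^ 2
      = (1 + α ^ 2) * ‖b‖ ^ 2 + γ ^ 2 * ‖d‖ ^ 2 + (9 + β ^ 2) * ‖c‖ ^ 2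
        + ⟪(2 * α * γ) • d + (2 * (3 + α * β)) • c, b⟫ := by
  have hdc : ⟪d, c⟫ = 0 := by rwa [real_inner_comm]
  simp only [← real_inner_self_eq_norm_sq, inner_add_left, inner_add_right,
    real_inner_smul_left, real_inner_smul_right, hcd, hdc,
    real_inner_comm b c, real_inner_comm b d]
  ring

lemma eq_zero_and_eq_zero_of_norm_sq_add_norm_sq_eq_zero {E F : Type*}
    [NormedAddCommGroup E] [NormedAddCommGroup F] {x : E} {y : F}
    (h : ‖x‖ ^ 2 + ‖y‖ ^ 2 = 0) : x = 0 ∧ y = 0 := by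
  rw [add_eq_zero_iff_of_nonneg (by positivity) (by positivity), sq_eq_zero_iff, sq_eq_zero_iff,
    norm_eq_zero, norm_eq_zero] at h
  exact h

/-- Pointwise form of the topological energy bound for the gauged Skyrme energy:
with `a = ⋆_M d^Aφ`, `b = φ*^AΣ`, `c = φ*^Aμ♯`, `d = φ*^Aν` and the BPS coefficients
`c₁ = 1`, `c₂ = 1 + α²`, `c₃ = γ²`, `c₄ = 9 + β²`, `c₅ = 2αγ`, `c₆ = 2(3 + αβ)`,
the energy density dominates (six times) the topological charge density `2⟪a, b + 3c⟫`,
with equality precisely when the BPS equations `a = b + 3c` and `αb + βc + γd = 0` hold. -/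
theorem gauged_skyrme_energy_bound {H : Type*} [NormedAddCommGroup H]
    [InnerProductSpace ℝ H] (a b c d : H) (hcd : ⟪c, d⟫ = 0) (α β γ : ℝ) :
    1 * ‖a‖ ^ 2 + (1 + α ^ 2) * ‖b‖ ^ 2 + γ ^ 2 * ‖d‖ ^ 2 + (9 + β ^ 2) * ‖c‖ ^ 2
        + ⟪(2 * α * γ) • d + (2 * (3 + α * β)) • c, b⟫
      ≥ 2 * ⟪a, b + (3 : ℝ) • c⟫ ∧
    (1 * ‖a‖ ^ 2 + (1 + α ^ 2) * ‖b‖ ^ 2 + γ ^ 2 * ‖d‖ ^ 2 + (9 + β ^ 2) * ‖c‖ ^ 2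
        + ⟪(2 * α * γ) • d + (2 * (3 + α * β)) • c, b⟫
      = 2 * ⟪a, b + (3 : ℝ) • c⟫ ↔
        (a = b + (3 : ℝ) • c ∧ α • b + β • c + γ • d = 0)) := by
  set v := b + (3 : ℝ) • c
  set w := α • b + β • c + γ • d
  have hsq : 1 * ‖a‖ ^ 2 + (1 + α ^ 2) * ‖b‖ ^ 2 + γ ^ 2 * ‖d‖ ^ 2 + (9 + β ^ 2) * ‖c‖ ^ 2
        + ⟪(2 * α * γ) • d + (2 * (3 + α * β)) • c, b⟫
      = 2 * ⟪a, v⟫ + (‖a - v‖ ^ 2 + ‖w‖ ^ 2) := by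
    rw [norm_sub_sq_real, add_assoc _ (‖v‖ ^ 2), norm_add_three_smul_sq_add_norm_sq hcd]
    ring
  rw [hsq]
  refine ⟨le_add_of_nonneg_right (by positivity), fun h => ?_, ?_⟩
  · obtain ⟨hav, hw⟩ := eq_zero_and_eq_zero_of_norm_sq_add_norm_sq_eq_zero (add_eq_left.mp h)
    exact ⟨sub_eq_zero.mp hav, hw⟩
  · rintro ⟨rfl, hw⟩
    simp [hw]
end

section
/- Let U ⊆ ℝ³ and O ⊆ ℝᵐ be open sets, let f^a_{bc} (a,b,c = 1,…,k) be the structure constants of a real Lie algebra, and let I_a = I_a^μ ∂/∂y^μ be smooth vector fields on O satisfying I_a^μ ∂_μ I_b^λ − I_b^μ ∂_μ I_a^λ = f^c_{ab} I_c^λ. Let β_{a;μ} be smooth functions on O satisfying the equivariance identity I_b^ν ∂_ν β_{a;μ} + β_{a;ν} ∂_μ I_b^ν + f^c_{ab} β_{c;μ} = 0 for all a, b, μ. Given a smooth map φ : U → O, smooth 1-forms A^a on U, and smooth functions λ^a : U → ℝ, define F^a = dA^a + (1/2) f^a_{bc} A^b ∧ A^c, d^Aφ^μ = dφ^μ − A^a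 I_a^μ(φ), and the pullback 3-form φ*^Aβ = β_{a;μ}(φ) F^a ∧ d^Aφ^μ on U. Then the first variation of φ*^Aβ under the infinitesimal gauge transformation δφ^μ = λ^a I_a^μ(φ), δA^a = dλ^a + f^a_{bc} A^b λ^c vanishes identically: δ(φ*^Aβ) = 0. -/
/-- The exterior derivative of a (raw) `k`-form on `ℝ³`,
`(dω)ₓ(v₀,…,v_k) = Σᵢ (−1)ⁱ (D_{vᵢ}ω)(v₀,…,v̂ᵢ,…,v_k)`. -/
noncomputable def extDerivRaw (k : ℕ) (ω : (Fin 3 → ℝ) → (Fin k → Fin 3 → ℝ) → ℝ) :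
    (Fin 3 → ℝ) → (Fin (k + 1) → Fin 3 → ℝ) → ℝ := fun x v =>
  ∑ i : Fin (k + 1), (-1 : ℝ) ^ (i : ℕ) *
    fderiv ℝ (fun y => ω y (i.removeNth v)) x (v i)

/-- The wedge product of (raw) alternating `p`- and `q`-covectors on `ℝ³`. -/
noncomputable def wedgeRaw {p q : ℕ} (α : (Fin p → Fin 3 → ℝ) → ℝ)
    (β : (Fin q → Fin 3 → ℝ) → ℝ) : (Fin (p + q) → Fin 3 → ℝ) → ℝ := fun v =>
  ((p.factorial * q.factorial : ℕ) : ℝ)⁻¹ *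
    ∑ σ : Equiv.Perm (Fin (p + q)), ((Equiv.Perm.sign σ : ℤ) : ℝ) *
      (α (fun i => v (σ (Fin.castAdd q i))) * β (fun j => v (σ (Fin.natAdd p j))))

/-- The equivariant pullback `φ*^Aβ = β_{a;μ}(φ) F^a ∧ d^Aφ^μ` (a 3-form on `ℝ³`),
where `F^a = dA^a + ½ f^a_{bc} A^b ∧ A^c` and `d^Aφ^μ = dφ^μ − A^a I_a^μ(φ)`. -/
noncomputable def gaugedPullback (k m : ℕ) (f : Fin k → Fin k → Fin k → ℝ)
    (I : Fin k → (Fin m → ℝ) → Fin m → ℝ)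
    (B : Fin k → Fin m → (Fin m → ℝ) → ℝ)
    (φ : (Fin 3 → ℝ) → Fin m → ℝ)
    (A : Fin k → (Fin 3 → ℝ) → (Fin 3 → ℝ) →L[ℝ] ℝ)
    (x : Fin 3 → ℝ) (v : Fin 3 → Fin 3 → ℝ) : ℝ :=
  ∑ a, ∑ μ, B a μ (φ x) *
    wedgeRaw
      (fun w : Fin 2 → Fin 3 → ℝ =>
        extDerivRaw 1 (fun y u => A a y (u 0)) x w
          + (1 / 2) * ∑ b, ∑ c, f a b c *
              wedgeRaw (fun u : Fin 1 → Fin 3 → ℝ => A b x (u 0))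
                (fun u : Fin 1 → Fin 3 → ℝ => A c x (u 0)) w)
      (fun u : Fin 1 → Fin 3 → ℝ =>
        fderiv ℝ (fun y => φ y μ) x (u 0) - ∑ a', A a' x (u 0) * I a' (φ x) μ)
      v

lemma extDeriv1_eq (ω : (Fin 3 → ℝ) → (Fin 3 → ℝ) → ℝ) (x : Fin 3 → ℝ) (w : Fin 2 → Fin 3 → ℝ) :
    extDerivRaw 1 (fun y u => ω y (u 0)) x w
      = fderiv ℝ (fun y => ω y (w 1)) x (w 0) - fderiv ℝ (fun y => ω y (w 0)) x (w 1) := by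
  simp [extDerivRaw, Fin.sum_univ_two, Fin.removeNth]
  ring

lemma wedge11 (ω η : (Fin 3 → ℝ) → ℝ) (w : Fin 2 → Fin 3 → ℝ) :
    wedgeRaw (fun u : Fin 1 → Fin 3 → ℝ => ω (u 0)) (fun u : Fin 1 → Fin 3 → ℝ => η (u 0)) w
      = ω (w 0) * η (w 1) - ω (w 1) * η (w 0) := by
  have huniv : (Finset.univ : Finset (Equiv.Perm (Fin 2))) = {Equiv.refl _, Equiv.swap 0 1} := by
    decide
  rw [wedgeRaw, huniv, Finset.sum_insert (by decide), Finset.sum_singleton]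
  have h1 : (Fin.castAdd 1 (0 : Fin 1)) = (0 : Fin 2) := rfl
  have h2 : (Fin.natAdd 1 (0 : Fin 1)) = (1 : Fin 2) := rfl
  norm_num [h1, h2, Equiv.swap_apply_def]
  ring

lemma hasDerivAt_wedgeRaw {p q : ℕ} {α : ℝ → (Fin p → Fin 3 → ℝ) → ℝ}
    {β : ℝ → (Fin q → Fin 3 → ℝ) → ℝ} {α' : (Fin p → Fin 3 → ℝ) → ℝ}
    {β' : (Fin q → Fin 3 → ℝ) → ℝ} {t₀ : ℝ}
    (hα : ∀ w, HasDerivAt (fun t => α t w) (α' w) t₀)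
    (hβ : ∀ u, HasDerivAt (fun t => β t u) (β' u) t₀)
    (v : Fin (p + q) → Fin 3 → ℝ) :
    HasDerivAt (fun t => wedgeRaw (α t) (β t) v)
      (wedgeRaw α' (β t₀) v + wedgeRaw (α t₀) β' v) t₀ := by
  have h : HasDerivAt
      (fun t => ((p.factorial * q.factorial : ℕ) : ℝ)⁻¹ *
        ∑ σ : Equiv.Perm (Fin (p + q)), ((Equiv.Perm.sign σ : ℤ) : ℝ) *
          (α t (fun i => v (σ (Fin.castAdd q i))) * β t (fun j => v (σ (Fin.natAdd p j)))))
      (((p.factorial * q.factorial : ℕ) : ℝ)⁻¹ *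
        ∑ σ : Equiv.Perm (Fin (p + q)), ((Equiv.Perm.sign σ : ℤ) : ℝ) *
          (α' (fun i => v (σ (Fin.castAdd q i))) * β t₀ (fun j => v (σ (Fin.natAdd p j)))
            + α t₀ (fun i => v (σ (Fin.castAdd q i))) * β' (fun j => v (σ (Fin.natAdd p j))))) t₀ := by
    apply HasDerivAt.const_mul
    apply HasDerivAt.fun_sum
    intro σ _
    exact ((hα _).mul (hβ _)).const_mul _
  have he : wedgeRaw α' (β t₀) v + wedgeRaw (α t₀) β' v
      = ((p.factorial * q.factorial : ℕ) : ℝ)⁻¹ *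
        ∑ σ : Equiv.Perm (Fin (p + q)), ((Equiv.Perm.sign σ : ℤ) : ℝ) *
          (α' (fun i => v (σ (Fin.castAdd q i))) * β t₀ (fun j => v (σ (Fin.natAdd p j)))
            + α t₀ (fun i => v (σ (Fin.castAdd q i))) * β' (fun j => v (σ (Fin.natAdd p j)))) := by
    simp only [wedgeRaw, ← mul_add, ← Finset.sum_add_distrib]
  rw [he]
  exact h

lemma wedgeRaw_sum_smul_left {p q : ℕ} {ι : Type*} (s : Finset ι) (g : ι → ℝ)
    (αi : ι → (Fin p → Fin 3 → ℝ) → ℝ) (β : (Fin q → Fin 3 → ℝ) → ℝ)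
    (v : Fin (p + q) → Fin 3 → ℝ) :
    wedgeRaw (fun w => ∑ i ∈ s, g i * αi i w) β v = ∑ i ∈ s, g i * wedgeRaw (αi i) β v := by
  simp only [wedgeRaw, Finset.mul_sum, Finset.sum_mul]
  rw [Finset.sum_comm]
  refine Finset.sum_congr rfl fun i _ => ?_
  refine Finset.sum_congr rfl fun σ _ => ?_
  ring

lemma wedgeRaw_sum_smul_right {p q : ℕ} {ι : Type*} (s : Finset ι) (g : ι → ℝ)
    (α : (Fin p → Fin 3 → ℝ) → ℝ) (βi : ι → (Fin q → Fin 3 → ℝ) → ℝ)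
    (v : Fin (p + q) → Fin 3 → ℝ) :
    wedgeRaw α (fun u => ∑ i ∈ s, g i * βi i u) v = ∑ i ∈ s, g i * wedgeRaw α (βi i) v := by
  simp only [wedgeRaw, Finset.mul_sum, Finset.sum_mul]
  rw [Finset.sum_comm]
  refine Finset.sum_congr rfl fun i _ => ?_
  refine Finset.sum_congr rfl fun σ _ => ?_
  ring


section sums
variable {n : ℕ}

lemma sum2_congr {F G : Fin n → Fin n → ℝ} (h : ∀ a b, F a b = G a b) :
    ∑ a, ∑ b, F a b = ∑ a, ∑ b, G a b :=
  Finset.sum_congr rfl fun a _ => Finset.sum_congr rfl fun b _ => h a b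

lemma sum3_congr {F G : Fin n → Fin n → Fin n → ℝ} (h : ∀ a b c, F a b c = G a b c) :
    ∑ a, ∑ b, ∑ c, F a b c = ∑ a, ∑ b, ∑ c, G a b c :=
  Finset.sum_congr rfl fun a _ => sum2_congr (h a)

lemma sum4_congr {F G : Fin n → Fin n → Fin n → Fin n → ℝ}
    (h : ∀ a b c d, F a b c d = G a b c d) :
    ∑ a, ∑ b, ∑ c, ∑ d, F a b c d = ∑ a, ∑ b, ∑ c, ∑ d, G a b c d :=
  Finset.sum_congr rfl fun a _ => sum3_congr (h a)

lemma sum2_swap (G : Fin n → Fin n → ℝ) :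
    ∑ a, ∑ b, G a b = ∑ a, ∑ b, G b a := Finset.sum_comm

lemma sum3_cycle (G : Fin n → Fin n → Fin n → ℝ) :
    ∑ a, ∑ b, ∑ c, G a b c = ∑ a, ∑ b, ∑ c, G c a b := by
  calc ∑ a, ∑ b, ∑ c, G a b c
      = ∑ b, ∑ a, ∑ c, G a b c := Finset.sum_comm
    _ = ∑ b, ∑ c, ∑ a, G a b c := Finset.sum_congr rfl fun b _ => Finset.sum_comm

lemma sum3_cycle' (G : Fin n → Fin n → Fin n → ℝ) :
    ∑ a, ∑ b, ∑ c, G a b c = ∑ a, ∑ b, ∑ c, G b c a := by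
  rw [sum3_cycle, sum3_cycle]

lemma sum_rotate4 (G : Fin n → Fin n → Fin n → Fin n → ℝ) :
    ∑ a, ∑ b, ∑ c, ∑ d, G a b c d = ∑ b, ∑ c, ∑ d, ∑ a, G a b c d := by
  calc ∑ a, ∑ b, ∑ c, ∑ d, G a b c d
      = ∑ b, ∑ a, ∑ c, ∑ d, G a b c d := Finset.sum_comm
    _ = ∑ b, ∑ c, ∑ a, ∑ d, G a b c d :=
        Finset.sum_congr rfl fun b _ => Finset.sum_comm
    _ = ∑ b, ∑ c, ∑ d, ∑ a, G a b c d :=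
        Finset.sum_congr rfl fun b _ => Finset.sum_congr rfl fun c _ => Finset.sum_comm

end sums

section algebra
variable {k : ℕ} (f : Fin k → Fin k → Fin k → ℝ)

lemma jac_contract
    (hanti : ∀ a b c, f a b c = -f a c b)
    (hjacobi : ∀ a b c d, ∑ e,
      (f e a b * f d e c + f e b c * f d e a + f e c a * f d e b) = 0)
    (a : Fin k) (L : Fin k → ℝ) (T : Fin k → Fin k → ℝ) (hT : ∀ d c, T d c = -T c d) :
    ∑ b, ∑ c, ∑ d, ∑ e, f a b c * f b d e * (L e * T d c)
      = (1/2) * ∑ b, ∑ c, ∑ d, ∑ e, f a b c * f b d e * (L c * T d e) := by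
  have e1 : ∑ b, ∑ c, ∑ d, ∑ e, f a b c * f b d e * (L e * T d c)
      = ∑ c, ∑ d, ∑ e, ∑ b, f a b c * f b d e * (L e * T d c) := sum_rotate4 _
  have e2 : ∑ b, ∑ c, ∑ d, ∑ e, f a b c * f b d e * (L c * T d e)
      = ∑ c, ∑ d, ∑ e, ∑ b, f a b c * f b d e * (L c * T d e) := sum_rotate4 _
  have e3 : ∑ c, ∑ d, ∑ e, ∑ b, f a b c * f b d e * (L c * T d e)
      = ∑ c, ∑ d, ∑ e, ∑ b, f a b e * f b d c * (L e * T d c) := by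
    calc ∑ c, ∑ d, ∑ e, ∑ b, f a b c * f b d e * (L c * T d e)
        = ∑ d, ∑ c, ∑ e, ∑ b, f a b c * f b d e * (L c * T d e) := Finset.sum_comm
      _ = ∑ d, ∑ e, ∑ c, ∑ b, f a b c * f b d e * (L c * T d e) :=
          Finset.sum_congr rfl fun d _ => Finset.sum_comm
      _ = ∑ e, ∑ d, ∑ c, ∑ b, f a b c * f b d e * (L c * T d e) := Finset.sum_comm
  have e4 : ∑ c, ∑ d, ∑ e, ∑ b, f a b c * f b d e * (L e * T d c)
      = - ∑ c, ∑ d, ∑ e, ∑ b, f a b d * f b c e * (L e * T d c) := by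
    calc ∑ c, ∑ d, ∑ e, ∑ b, f a b c * f b d e * (L e * T d c)
        = ∑ c, ∑ d, ∑ e, ∑ b, f a b d * f b c e * (L e * T c d) := Finset.sum_comm
      _ = ∑ c, ∑ d, ∑ e, ∑ b, -(f a b d * f b c e * (L e * T d c)) := by
          refine sum4_congr fun c d e b => ?_
          rw [hT c d]; ring
      _ = - ∑ c, ∑ d, ∑ e, ∑ b, f a b d * f b c e * (L e * T d c) := by
          simp only [Finset.sum_neg_distrib]
  have hjac : ∑ c, ∑ d, ∑ e, ∑ b,
      (f a b c * f b d e - f a b d * f b c e - f a b e * f b d c) * (L e * T d c) = 0 := by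
    refine Finset.sum_eq_zero fun c _ => Finset.sum_eq_zero fun d _ =>
      Finset.sum_eq_zero fun e _ => ?_
    have hb : ∑ b, (f a b c * f b d e - f a b d * f b c e - f a b e * f b d c)
        = ∑ b, (f b d e * f a b c + f b e c * f a b d + f b c d * f a b e) := by
      refine Finset.sum_congr rfl fun b _ => ?_
      rw [hanti b c e, hanti b d c]; ring
    rw [← Finset.sum_mul, hb, hjacobi d e c a, zero_mul]
  have hsplit : ∑ c, ∑ d, ∑ e, ∑ b,
      (f a b c * f b d e - f a b d * f b c e - f a b e * f b d c) * (L e * T d c)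
      = (∑ c, ∑ d, ∑ e, ∑ b, f a b c * f b d e * (L e * T d c))
        - (∑ c, ∑ d, ∑ e, ∑ b, f a b d * f b c e * (L e * T d c))
        - (∑ c, ∑ d, ∑ e, ∑ b, f a b e * f b d c * (L e * T d c)) := by
    simp only [sub_mul, Finset.sum_sub_distrib]
  rw [hsplit] at hjac
  rw [e1, e2, e3]
  linarith [e4, hjac]

lemma deltaD_eq (L dLu Au dphiI Ibmu : Fin k → ℝ) (DII : Fin k → Fin k → ℝ)
    (hbr : ∀ a b, DII b a - DII a b = ∑ c, f c a b * Ibmu c) :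
    (∑ a, (dLu a * Ibmu a + L a * dphiI a))
      - (∑ a, ((dLu a + ∑ b, ∑ c, f a b c * L c * Au b) * Ibmu a
          + Au a * (∑ b, L b * DII a b)))
      = ∑ b, L b * (dphiI b - ∑ a, Au a * DII b a) := by
  have key : ∑ a, ∑ b, (Au a * (L b * DII b a) - Au a * (L b * DII a b))
      = ∑ a, (∑ b, ∑ c, f a b c * L c * Au b) * Ibmu a := by
    calc ∑ a, ∑ b, (Au a * (L b * DII b a) - Au a * (L b * DII a b))
        = ∑ a, ∑ b, (Au a * L b) * (DII b a - DII a b) := sum2_congr fun a b => by ring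
      _ = ∑ a, ∑ b, (Au a * L b) * (∑ c, f c a b * Ibmu c) :=
          sum2_congr fun a b => by rw [hbr a b]
      _ = ∑ a, ∑ b, ∑ c, Au a * (L b * (f c a b * Ibmu c)) := by
          refine sum2_congr fun a b => ?_
          rw [Finset.mul_sum]
          exact Finset.sum_congr rfl fun c _ => by ring
      _ = ∑ a, ∑ b, ∑ c, Au b * (L c * (f a b c * Ibmu a)) :=
          sum3_cycle' fun a b c => Au a * (L b * (f c a b * Ibmu c))
      _ = ∑ a, (∑ b, ∑ c, f a b c * L c * Au b) * Ibmu a := by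
          refine Finset.sum_congr rfl fun a _ => ?_
          rw [Finset.sum_mul]
          refine Finset.sum_congr rfl fun b _ => ?_
          rw [Finset.sum_mul]
          exact Finset.sum_congr rfl fun c _ => by ring
  have h1 : ∑ a, ((dLu a + ∑ b, ∑ c, f a b c * L c * Au b) * Ibmu a
        + Au a * (∑ b, L b * DII a b))
      = (∑ a, dLu a * Ibmu a) + ((∑ a, (∑ b, ∑ c, f a b c * L c * Au b) * Ibmu a)
        + ∑ a, Au a * (∑ b, L b * DII a b)) := by
    rw [← Finset.sum_add_distrib, ← Finset.sum_add_distrib]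
    exact Finset.sum_congr rfl fun a _ => by ring
  have h2 : ∑ a, (dLu a * Ibmu a + L a * dphiI a)
      = (∑ a, dLu a * Ibmu a) + ∑ a, L a * dphiI a := Finset.sum_add_distrib
  have h3 : ∑ b, L b * (dphiI b - ∑ a, Au a * DII b a)
      = (∑ b, L b * dphiI b) - ∑ b, L b * ∑ a, Au a * DII b a := by
    rw [← Finset.sum_sub_distrib]
    exact Finset.sum_congr rfl fun b _ => by ring
  have h4 : ∑ a, Au a * (∑ b, L b * DII a b) = ∑ a, ∑ b, Au a * (L b * DII a b) := by
    refine Finset.sum_congr rfl fun a _ => ?_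
    rw [Finset.mul_sum]
  have h5 : ∑ b, L b * ∑ a, Au a * DII b a = ∑ a, ∑ b, Au a * (L b * DII b a) := by
    calc ∑ b, L b * ∑ a, Au a * DII b a
        = ∑ b, ∑ a, L b * (Au a * DII b a) := by
          refine Finset.sum_congr rfl fun b _ => ?_
          rw [Finset.mul_sum]
      _ = ∑ b, ∑ a, L a * (Au b * DII a b) := sum2_swap _
      _ = ∑ a, ∑ b, Au a * (L b * DII b a) := sum2_congr fun a b => by ring
  have h6 : ∑ a, ∑ b, (Au a * (L b * DII b a) - Au a * (L b * DII a b))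
      = (∑ a, ∑ b, Au a * (L b * DII b a)) - ∑ a, ∑ b, Au a * (L b * DII a b) := by
    simp only [Finset.sum_sub_distrib]
  rw [h1, h2, h3, h4, h5]
  rw [h6] at key
  have h7 : ∑ a, L a * dphiI a = ∑ b, L b * dphiI b := rfl
  linarith [key]

lemma deltaF_eq
    (hanti : ∀ a b c, f a b c = -f a c b)
    (hjacobi : ∀ a b c d, ∑ e,
      (f e a b * f d e c + f e b c * f d e a + f e c a * f d e b) = 0)
    (L P0 P1 Q0 Q1 R : Fin k → ℝ) (a : Fin k) :
    (∑ b, ∑ c, f a b c * ((Q0 c * P1 b - Q1 c * P0 b) + L c * R b))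
      + (1/2) * (∑ b, ∑ c, f a b c *
          (((Q0 b + ∑ d, ∑ e, f b d e * L e * P0 d) * P1 c
              - (Q1 b + ∑ d, ∑ e, f b d e * L e * P1 d) * P0 c)
            + (P0 b * (Q1 c + ∑ d, ∑ e, f c d e * L e * P1 d)
              - P1 b * (Q0 c + ∑ d, ∑ e, f c d e * L e * P0 d))))
      = ∑ b, ∑ c, f a b c * L c *
          (R b + (1/2) * ∑ d, ∑ e, f b d e * (P0 d * P1 e - P1 d * P0 e)) := by
  -- the two halves of the symmetrized wedge variation agree
  have hsw : ∑ b, ∑ c, f a b c *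
        (P0 b * (Q1 c + ∑ d, ∑ e, f c d e * L e * P1 d)
          - P1 b * (Q0 c + ∑ d, ∑ e, f c d e * L e * P0 d))
      = ∑ b, ∑ c, f a b c *
        ((Q0 b + ∑ d, ∑ e, f b d e * L e * P0 d) * P1 c
          - (Q1 b + ∑ d, ∑ e, f b d e * L e * P1 d) * P0 c) := by
    calc ∑ b, ∑ c, f a b c *
          (P0 b * (Q1 c + ∑ d, ∑ e, f c d e * L e * P1 d)
            - P1 b * (Q0 c + ∑ d, ∑ e, f c d e * L e * P0 d))
        = ∑ b, ∑ c, f a c b *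
          (P0 c * (Q1 b + ∑ d, ∑ e, f b d e * L e * P1 d)
            - P1 c * (Q0 b + ∑ d, ∑ e, f b d e * L e * P0 d)) := sum2_swap _
      _ = ∑ b, ∑ c, f a b c *
          ((Q0 b + ∑ d, ∑ e, f b d e * L e * P0 d) * P1 c
            - (Q1 b + ∑ d, ∑ e, f b d e * L e * P1 d) * P0 c) :=
          sum2_congr fun b c => by rw [hanti a c b]; ring
  have hw : (1/2) * (∑ b, ∑ c, f a b c *
        (((Q0 b + ∑ d, ∑ e, f b d e * L e * P0 d) * P1 c
            - (Q1 b + ∑ d, ∑ e, f b d e * L e * P1 d) * P0 c)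
          + (P0 b * (Q1 c + ∑ d, ∑ e, f c d e * L e * P1 d)
            - P1 b * (Q0 c + ∑ d, ∑ e, f c d e * L e * P0 d))))
      = ∑ b, ∑ c, f a b c *
          ((Q0 b + ∑ d, ∑ e, f b d e * L e * P0 d) * P1 c
            - (Q1 b + ∑ d, ∑ e, f b d e * L e * P1 d) * P0 c) := by
    have hdist : ∑ b, ∑ c, f a b c *
          (((Q0 b + ∑ d, ∑ e, f b d e * L e * P0 d) * P1 c
              - (Q1 b + ∑ d, ∑ e, f b d e * L e * P1 d) * P0 c)
            + (P0 b * (Q1 c + ∑ d, ∑ e, f c d e * L e * P1 d)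
              - P1 b * (Q0 c + ∑ d, ∑ e, f c d e * L e * P0 d)))
        = (∑ b, ∑ c, f a b c *
            ((Q0 b + ∑ d, ∑ e, f b d e * L e * P0 d) * P1 c
              - (Q1 b + ∑ d, ∑ e, f b d e * L e * P1 d) * P0 c))
          + ∑ b, ∑ c, f a b c *
            (P0 b * (Q1 c + ∑ d, ∑ e, f c d e * L e * P1 d)
              - P1 b * (Q0 c + ∑ d, ∑ e, f c d e * L e * P0 d)) := by
      simp only [mul_add, Finset.sum_add_distrib]
    rw [hdist, hsw]; ring
  rw [hw]
  -- expand both Q-free products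
  have hexp : ∑ b, ∑ c, f a b c *
        ((Q0 b + ∑ d, ∑ e, f b d e * L e * P0 d) * P1 c
          - (Q1 b + ∑ d, ∑ e, f b d e * L e * P1 d) * P0 c)
      = (∑ b, ∑ c, f a b c * (Q0 b * P1 c - Q1 b * P0 c))
        + ∑ b, ∑ c, f a b c *
            ((∑ d, ∑ e, f b d e * L e * P0 d) * P1 c
              - (∑ d, ∑ e, f b d e * L e * P1 d) * P0 c) := by
    rw [← Finset.sum_add_distrib]
    refine Finset.sum_congr rfl fun b _ => ?_
    rw [← Finset.sum_add_distrib]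
    exact Finset.sum_congr rfl fun c _ => by ring
  have hq : ∑ b, ∑ c, f a b c * (Q0 c * P1 b - Q1 c * P0 b)
      = - ∑ b, ∑ c, f a b c * (Q0 b * P1 c - Q1 b * P0 c) := by
    calc ∑ b, ∑ c, f a b c * (Q0 c * P1 b - Q1 c * P0 b)
        = ∑ b, ∑ c, f a c b * (Q0 b * P1 c - Q1 b * P0 c) := sum2_swap _
      _ = ∑ b, ∑ c, -(f a b c * (Q0 b * P1 c - Q1 b * P0 c)) :=
          sum2_congr fun b c => by rw [hanti a c b]; ring
      _ = - ∑ b, ∑ c, f a b c * (Q0 b * P1 c - Q1 b * P0 c) := by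
          simp only [Finset.sum_neg_distrib]
  have hsplit0 : ∑ b, ∑ c, f a b c * ((Q0 c * P1 b - Q1 c * P0 b) + L c * R b)
      = (∑ b, ∑ c, f a b c * (Q0 c * P1 b - Q1 c * P0 b))
        + ∑ b, ∑ c, f a b c * (L c * R b) := by
    rw [← Finset.sum_add_distrib]
    refine Finset.sum_congr rfl fun b _ => ?_
    rw [← Finset.sum_add_distrib]
    exact Finset.sum_congr rfl fun c _ => by ring
  have hquad : ∑ b, ∑ c, f a b c *
        ((∑ d, ∑ e, f b d e * L e * P0 d) * P1 c
          - (∑ d, ∑ e, f b d e * L e * P1 d) * P0 c)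
      = ∑ b, ∑ c, ∑ d, ∑ e, f a b c * f b d e *
          (L e * (P0 d * P1 c - P1 d * P0 c)) := by
    refine sum2_congr fun b c => ?_
    rw [Finset.sum_mul, Finset.sum_mul, ← Finset.sum_sub_distrib, Finset.mul_sum]
    refine Finset.sum_congr rfl fun d _ => ?_
    rw [Finset.sum_mul, Finset.sum_mul, ← Finset.sum_sub_distrib, Finset.mul_sum]
    exact Finset.sum_congr rfl fun e _ => by ring
  have hrhs : ∑ b, ∑ c, f a b c * L c *
        (R b + (1/2) * ∑ d, ∑ e, f b d e * (P0 d * P1 e - P1 d * P0 e))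
      = (∑ b, ∑ c, f a b c * (L c * R b))
        + (1/2) * ∑ b, ∑ c, ∑ d, ∑ e, f a b c * f b d e *
            (L c * (P0 d * P1 e - P1 d * P0 e)) := by
    have : ∀ b c : Fin k, f a b c * L c *
          (R b + (1/2) * ∑ d, ∑ e, f b d e * (P0 d * P1 e - P1 d * P0 e))
        = f a b c * (L c * R b)
          + (1/2) * ∑ d, ∑ e, f a b c * f b d e * (L c * (P0 d * P1 e - P1 d * P0 e)) := by
      intro b c
      have hin : f a b c * L c * (∑ d, ∑ e, f b d e * (P0 d * P1 e - P1 d * P0 e))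
          = ∑ d, ∑ e, f a b c * f b d e * (L c * (P0 d * P1 e - P1 d * P0 e)) := by
        rw [Finset.mul_sum]
        refine Finset.sum_congr rfl fun d _ => ?_
        rw [Finset.mul_sum]
        exact Finset.sum_congr rfl fun e _ => by ring
      calc f a b c * L c * (R b + (1/2) * ∑ d, ∑ e, f b d e * (P0 d * P1 e - P1 d * P0 e))
          = f a b c * (L c * R b)
            + (1/2) * (f a b c * L c * ∑ d, ∑ e, f b d e * (P0 d * P1 e - P1 d * P0 e)) := by
            ring
        _ = f a b c * (L c * R b)
            + (1/2) * ∑ d, ∑ e, f a b c * f b d e * (L c * (P0 d * P1 e - P1 d * P0 e)) := by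
            rw [hin]
    calc ∑ b, ∑ c, f a b c * L c *
          (R b + (1/2) * ∑ d, ∑ e, f b d e * (P0 d * P1 e - P1 d * P0 e))
        = ∑ b, ∑ c, (f a b c * (L c * R b)
            + (1/2) * ∑ d, ∑ e, f a b c * f b d e * (L c * (P0 d * P1 e - P1 d * P0 e))) :=
          sum2_congr this
      _ = (∑ b, ∑ c, f a b c * (L c * R b))
          + ∑ b, ∑ c, (1/2) * ∑ d, ∑ e, f a b c * f b d e *
              (L c * (P0 d * P1 e - P1 d * P0 e)) := by
          simp only [Finset.sum_add_distrib]
      _ = (∑ b, ∑ c, f a b c * (L c * R b))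
          + (1/2) * ∑ b, ∑ c, ∑ d, ∑ e, f a b c * f b d e *
              (L c * (P0 d * P1 e - P1 d * P0 e)) := by
          rw [Finset.mul_sum]
          congr 1
          exact Finset.sum_congr rfl fun b _ => by rw [Finset.mul_sum]
  have hjc : ∑ b, ∑ c, ∑ d, ∑ e, f a b c * f b d e * (L e * (P0 d * P1 c - P1 d * P0 c))
      = (1/2) * ∑ b, ∑ c, ∑ d, ∑ e, f a b c * f b d e *
          (L c * (P0 d * P1 e - P1 d * P0 e)) :=
    jac_contract f hanti hjacobi a L (fun d c => P0 d * P1 c - P1 d * P0 c)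
      (fun d c => by ring)
  rw [hsplit0, hexp, hq, hquad, hrhs, hjc]
  ring

end algebra


lemma msum2_congr {α β : Type*} [Fintype α] [Fintype β] {F G : α → β → ℝ}
    (h : ∀ a b, F a b = G a b) : ∑ a, ∑ b, F a b = ∑ a, ∑ b, G a b :=
  Finset.sum_congr rfl fun a _ => Finset.sum_congr rfl fun b _ => h a b

lemma sum3_cycle0 {n : ℕ} (G : Fin n → Fin n → Fin n → ℝ) :
    ∑ a, ∑ b, ∑ c, G a b c = ∑ a, ∑ b, ∑ c, G c a b := by
  calc ∑ a, ∑ b, ∑ c, G a b c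
      = ∑ b, ∑ a, ∑ c, G a b c := Finset.sum_comm
    _ = ∑ b, ∑ c, ∑ a, G a b c := Finset.sum_congr rfl fun b _ => Finset.sum_comm

lemma final_assembly {k m : ℕ} (f : Fin k → Fin k → Fin k → ℝ) (L : Fin k → ℝ)
    (Bv : Fin k → Fin m → ℝ) (dBI : Fin k → Fin m → Fin k → ℝ)
    (dI : Fin k → Fin m → Fin m → ℝ) (W : Fin k → Fin m → ℝ)
    (heq : ∀ a b μ, dBI a μ b + (∑ ν, Bv a ν * dI b ν μ) + ∑ c, f c a b * Bv c μ = 0) :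
    ∑ a, ∑ μ, ((∑ b, L b * dBI a μ b) * W a μ
      + Bv a μ * ((∑ b, (∑ c, f a b c * L c) * W b μ)
        + ∑ b, L b * ∑ ν, dI b μ ν * W a ν)) = 0 := by
  have split : ∑ a, ∑ μ, ((∑ b, L b * dBI a μ b) * W a μ
      + Bv a μ * ((∑ b, (∑ c, f a b c * L c) * W b μ)
        + ∑ b, L b * ∑ ν, dI b μ ν * W a ν))
      = (∑ a, ∑ μ, ∑ b, L b * (dBI a μ b * W a μ))
        + ((∑ a, ∑ μ, ∑ b, ∑ c, Bv a μ * (f a b c * L c) * W b μ)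
          + ∑ a, ∑ μ, ∑ b, ∑ ν, Bv a μ * (L b * (dI b μ ν * W a ν))) := by
    have point : ∀ a μ, (∑ b, L b * dBI a μ b) * W a μ
        + Bv a μ * ((∑ b, (∑ c, f a b c * L c) * W b μ)
          + ∑ b, L b * ∑ ν, dI b μ ν * W a ν)
        = (∑ b, L b * (dBI a μ b * W a μ))
          + ((∑ b, ∑ c, Bv a μ * (f a b c * L c) * W b μ)
            + ∑ b, ∑ ν, Bv a μ * (L b * (dI b μ ν * W a ν))) := by
      intro a μ
      have e0 : (∑ b, L b * dBI a μ b) * W a μ = ∑ b, L b * (dBI a μ b * W a μ) := by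
        rw [Finset.sum_mul]
        exact Finset.sum_congr rfl fun b _ => by ring
      have e1 : Bv a μ * ((∑ b, (∑ c, f a b c * L c) * W b μ)
          + ∑ b, L b * ∑ ν, dI b μ ν * W a ν)
          = (∑ b, ∑ c, Bv a μ * (f a b c * L c) * W b μ)
            + ∑ b, ∑ ν, Bv a μ * (L b * (dI b μ ν * W a ν)) := by
        rw [mul_add, Finset.mul_sum, Finset.mul_sum]
        congr 1
        · refine Finset.sum_congr rfl fun b _ => ?_
          rw [Finset.sum_mul, Finset.mul_sum]
          exact Finset.sum_congr rfl fun c _ => by ring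
        · refine Finset.sum_congr rfl fun b _ => ?_
          rw [Finset.mul_sum, Finset.mul_sum]
      simp only [e0, e1]
    calc ∑ a, ∑ μ, ((∑ b, L b * dBI a μ b) * W a μ
        + Bv a μ * ((∑ b, (∑ c, f a b c * L c) * W b μ)
          + ∑ b, L b * ∑ ν, dI b μ ν * W a ν))
        = ∑ a, ∑ μ, ((∑ b, L b * (dBI a μ b * W a μ))
          + ((∑ b, ∑ c, Bv a μ * (f a b c * L c) * W b μ)
            + ∑ b, ∑ ν, Bv a μ * (L b * (dI b μ ν * W a ν)))) :=
          msum2_congr point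
      _ = (∑ a, ∑ μ, ∑ b, L b * (dBI a μ b * W a μ))
        + ((∑ a, ∑ μ, ∑ b, ∑ c, Bv a μ * (f a b c * L c) * W b μ)
          + ∑ a, ∑ μ, ∑ b, ∑ ν, Bv a μ * (L b * (dI b μ ν * W a ν))) := by
          simp only [Finset.sum_add_distrib]
  rw [split]
  -- P1
  have hP1 : ∑ a, ∑ μ, ∑ b, L b * (dBI a μ b * W a μ)
      = ∑ b, ∑ a, ∑ μ, L b * (W a μ * dBI a μ b) := by
    calc ∑ a, ∑ μ, ∑ b, L b * (dBI a μ b * W a μ)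
        = ∑ a, ∑ b, ∑ μ, L b * (dBI a μ b * W a μ) :=
          Finset.sum_congr rfl fun a _ => Finset.sum_comm
      _ = ∑ b, ∑ a, ∑ μ, L b * (dBI a μ b * W a μ) := Finset.sum_comm
      _ = ∑ b, ∑ a, ∑ μ, L b * (W a μ * dBI a μ b) :=
          Finset.sum_congr rfl fun b _ => msum2_congr fun a μ => by ring
  -- P2 : cycle the three Fin k indices (with μ passive)
  have hP2 : ∑ a, ∑ μ, ∑ b, ∑ c, Bv a μ * (f a b c * L c) * W b μ
      = ∑ b, ∑ a, ∑ μ, L b * (W a μ * ∑ c, f c a b * Bv c μ) := by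
    calc ∑ a, ∑ μ, ∑ b, ∑ c, Bv a μ * (f a b c * L c) * W b μ
        = ∑ μ, ∑ a, ∑ b, ∑ c, Bv a μ * (f a b c * L c) * W b μ := Finset.sum_comm
      _ = ∑ μ, ∑ a, ∑ b, ∑ c, Bv c μ * (f c a b * L b) * W a μ :=
          Finset.sum_congr rfl fun μ _ =>
            sum3_cycle0 fun a b c => Bv a μ * (f a b c * L c) * W b μ
      _ = ∑ a, ∑ μ, ∑ b, ∑ c, Bv c μ * (f c a b * L b) * W a μ := Finset.sum_comm
      _ = ∑ a, ∑ b, ∑ μ, ∑ c, Bv c μ * (f c a b * L b) * W a μ :=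
          Finset.sum_congr rfl fun a _ => Finset.sum_comm
      _ = ∑ b, ∑ a, ∑ μ, ∑ c, Bv c μ * (f c a b * L b) * W a μ := Finset.sum_comm
      _ = ∑ b, ∑ a, ∑ μ, L b * (W a μ * ∑ c, f c a b * Bv c μ) := by
          refine Finset.sum_congr rfl fun b _ => Finset.sum_congr rfl fun a _ =>
            Finset.sum_congr rfl fun μ _ => ?_
          rw [Finset.mul_sum, Finset.mul_sum]
          exact Finset.sum_congr rfl fun c _ => by ring
  -- P3 : swap μ and ν
  have hP3 : ∑ a, ∑ μ, ∑ b, ∑ ν, Bv a μ * (L b * (dI b μ ν * W a ν))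
      = ∑ b, ∑ a, ∑ μ, L b * (W a μ * ∑ ν, Bv a ν * dI b ν μ) := by
    calc ∑ a, ∑ μ, ∑ b, ∑ ν, Bv a μ * (L b * (dI b μ ν * W a ν))
        = ∑ a, ∑ b, ∑ μ, ∑ ν, Bv a μ * (L b * (dI b μ ν * W a ν)) :=
          Finset.sum_congr rfl fun a _ => Finset.sum_comm
      _ = ∑ b, ∑ a, ∑ μ, ∑ ν, Bv a μ * (L b * (dI b μ ν * W a ν)) := Finset.sum_comm
      _ = ∑ b, ∑ a, ∑ μ, ∑ ν, Bv a ν * (L b * (dI b ν μ * W a μ)) :=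
          Finset.sum_congr rfl fun b _ => Finset.sum_congr rfl fun a _ => Finset.sum_comm
      _ = ∑ b, ∑ a, ∑ μ, L b * (W a μ * ∑ ν, Bv a ν * dI b ν μ) := by
          refine Finset.sum_congr rfl fun b _ => Finset.sum_congr rfl fun a _ =>
            Finset.sum_congr rfl fun μ _ => ?_
          rw [Finset.mul_sum, Finset.mul_sum]
          exact Finset.sum_congr rfl fun ν _ => by ring
  rw [hP1, hP2, hP3]
  rw [← Finset.sum_add_distrib, ← Finset.sum_add_distrib]
  refine Finset.sum_eq_zero fun b _ => ?_
  rw [← Finset.sum_add_distrib, ← Finset.sum_add_distrib]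
  refine Finset.sum_eq_zero fun a _ => ?_
  rw [← Finset.sum_add_distrib, ← Finset.sum_add_distrib]
  refine Finset.sum_eq_zero fun μ _ => ?_
  have := heq a b μ
  calc L b * (W a μ * dBI a μ b) + (L b * (W a μ * ∑ c, f c a b * Bv c μ)
        + L b * (W a μ * ∑ ν, Bv a ν * dI b ν μ))
      = L b * W a μ * (dBI a μ b + (∑ ν, Bv a ν * dI b ν μ) + ∑ c, f c a b * Bv c μ) := by
        ring
    _ = 0 := by rw [this, mul_zero]

set_option maxHeartbeats 2000000 in
set_option synthInstance.maxHeartbeats 400000 in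
/-- Gauge invariance of the equivariant pullback (case `p = q = 1`): the first
variation of `φ*^Aβ = β_{a;μ}(φ) F^a ∧ d^Aφ^μ` under the infinitesimal gauge
transformation `δφ^μ = λ^a I_a^μ(φ)`, `δA^a = dλ^a + f^a_{bc} A^b λ^c` vanishes
identically. -/
theorem gaugedPullback_first_variation_vanishes
    (U : Set (Fin 3 → ℝ)) (hU : IsOpen U) (m k : ℕ)
    (O : Set (Fin m → ℝ)) (hO : IsOpen O)
    (f : Fin k → Fin k → Fin k → ℝ)
    (hanti : ∀ a b c, f a b c = -f a c b)
    (hjacobi : ∀ a b c d, ∑ e,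
      (f e a b * f d e c + f e b c * f d e a + f e c a * f d e b) = 0)
    (I : Fin k → (Fin m → ℝ) → Fin m → ℝ)
    (hIsmooth : ∀ a, ContDiffOn ℝ (⊤ : ℕ∞) (I a) O)
    (hbracket : ∀ y ∈ O, ∀ a b lam,
      fderiv ℝ (fun z => I b z lam) y (I a y) - fderiv ℝ (fun z => I a z lam) y (I b y)
        = ∑ c, f c a b * I c y lam)
    (B : Fin k → Fin m → (Fin m → ℝ) → ℝ)
    (hBsmooth : ∀ a μ, ContDiffOn ℝ (⊤ : ℕ∞) (B a μ) O)
    (hequiv : ∀ y ∈ O, ∀ a b μ,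
      fderiv ℝ (B a μ) y (I b y)
        + (∑ ν, B a ν y * fderiv ℝ (fun z => I b z ν) y (Pi.single μ (1 : ℝ)))
        + ∑ c, f c a b * B c μ y = 0)
    (φ : (Fin 3 → ℝ) → Fin m → ℝ) (hφ : ContDiffOn ℝ (⊤ : ℕ∞) φ U)
    (hφO : Set.MapsTo φ U O)
    (A : Fin k → (Fin 3 → ℝ) → (Fin 3 → ℝ) →L[ℝ] ℝ)
    (hA : ∀ a, ContDiffOn ℝ (⊤ : ℕ∞) (A a) U)
    (lam : Fin k → (Fin 3 → ℝ) → ℝ) (hlam : ∀ a, ContDiffOn ℝ (⊤ : ℕ∞) (lam a) U) :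
    ∀ x ∈ U, ∀ v : Fin 3 → Fin 3 → ℝ,
      HasDerivAt
        (fun t : ℝ =>
          gaugedPullback k m f I B
            (fun y μ => φ y μ + t * ∑ a, lam a y * I a (φ y) μ)
            (fun a y => A a y +
              t • (fderiv ℝ (lam a) y + ∑ b, ∑ c, (f a b c * lam c y) • A b y))
            x v)
        0 0 := by
  intro x hx v
  have hxU : U ∈ nhds x := hU.mem_nhds hx
  have hP : φ x ∈ O := hφO hx
  have hPO : O ∈ nhds (φ x) := hO.mem_nhds hP
  -- basic differentiability facts
  have hφd : DifferentiableAt ℝ φ x := (hφ.contDiffAt hxU).differentiableAt (by simp)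
  have hφcd : ∀ μ, DifferentiableAt ℝ (fun y => φ y μ) x :=
    fun μ => differentiableAt_pi.mp hφd μ
  have hlamd : ∀ a, DifferentiableAt ℝ (lam a) x :=
    fun a => ((hlam a).contDiffAt hxU).differentiableAt (by simp)
  have hId : ∀ a, DifferentiableAt ℝ (I a) (φ x) :=
    fun a => ((hIsmooth a).contDiffAt hPO).differentiableAt (by simp)
  have hIcd : ∀ a μ, DifferentiableAt ℝ (fun z => I a z μ) (φ x) :=
    fun a μ => differentiableAt_pi.mp (hId a) μ
  have hBd : ∀ a μ, DifferentiableAt ℝ (B a μ) (φ x) :=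
    fun a μ => ((hBsmooth a μ).contDiffAt hPO).differentiableAt (by simp)
  have hAd : ∀ a, DifferentiableAt ℝ (A a) x :=
    fun a => ((hA a).contDiffAt hxU).differentiableAt (by simp)
  have hAdz : ∀ a (z : Fin 3 → ℝ), DifferentiableAt ℝ (fun y => (A a y) z) x :=
    fun a z => (hAd a).clm_apply (differentiableAt_const z)
  have hdlamA : ∀ a, DifferentiableAt ℝ (fderiv ℝ (lam a)) x :=
    fun a => (((hlam a).contDiffAt hxU).fderiv_right (m := 1) (WithTop.coe_le_coe.mpr le_top)).differentiableAt one_ne_zero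
  have hdlamz : ∀ a (z : Fin 3 → ℝ), DifferentiableAt ℝ (fun y => (fderiv ℝ (lam a) y) z) x :=
    fun a z => (hdlamA a).clm_apply (differentiableAt_const z)
  have hIφd : ∀ a μ, DifferentiableAt ℝ (fun y => I a (φ y) μ) x :=
    fun a μ => (hIcd a μ).comp x hφd
  have hhd : ∀ μ, DifferentiableAt ℝ (fun y => ∑ a, lam a y * I a (φ y) μ) x :=
    fun μ => DifferentiableAt.fun_sum fun a _ => (hlamd a).mul (hIφd a μ)
  have hGdz : ∀ a (z : Fin 3 → ℝ), DifferentiableAt ℝ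
      (fun y => (fderiv ℝ (lam a) y) z + ∑ b, ∑ c, f a b c * lam c y * (A b y) z) x :=
    fun a z => (hdlamz a z).add (DifferentiableAt.fun_sum fun b _ =>
      DifferentiableAt.fun_sum fun c _ => (((hlamd c).const_mul (f a b c)).mul (hAdz b z)))
  -- rewrite lemma RW1 : the moving point as a line
  have RW1 : ∀ t : ℝ, (fun μ => φ x μ + t * ∑ a, lam a x * I a (φ x) μ)
      = φ x + t • ∑ a, lam a x • I a (φ x) := by
    intro t
    funext μ
    simp [Finset.sum_apply, smul_eq_mul, Finset.mul_sum]
  -- rewrite lemma RW4 : fderiv of the deformed map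
  have RW4 : ∀ (t : ℝ) μ (z : Fin 3 → ℝ),
      (fderiv ℝ (fun y => φ y μ + t * ∑ a, lam a y * I a (φ y) μ) x) z
        = (fderiv ℝ (fun y => φ y μ) x) z
          + t * (fderiv ℝ (fun y => ∑ a, lam a y * I a (φ y) μ) x) z := by
    intro t μ z
    rw [fderiv_fun_add (hφcd μ) ((hhd μ).const_mul t), fderiv_const_mul (hhd μ) t]
    simp
  -- rewrite lemma RW3 : extDeriv of the deformed connection
  have RW3 : ∀ (t : ℝ) a (w : Fin 2 → Fin 3 → ℝ),
      extDerivRaw 1 (fun y u => (A a y) (u 0)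
          + t * ((fderiv ℝ (lam a) y) (u 0) + ∑ b, ∑ c, f a b c * lam c y * (A b y) (u 0))) x w
        = extDerivRaw 1 (fun y u => (A a y) (u 0)) x w
          + t * ((fderiv ℝ (fun y => (fderiv ℝ (lam a) y) (w 1)
                + ∑ b, ∑ c, f a b c * lam c y * (A b y) (w 1)) x) (w 0)
              - (fderiv ℝ (fun y => (fderiv ℝ (lam a) y) (w 0)
                + ∑ b, ∑ c, f a b c * lam c y * (A b y) (w 0)) x) (w 1)) := by
    intro t a w
    rw [extDeriv1_eq (fun y z => (A a y) z
        + t * ((fderiv ℝ (lam a) y) z + ∑ b, ∑ c, f a b c * lam c y * (A b y) z)) x w,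
      extDeriv1_eq (fun y z => (A a y) z) x w]
    rw [fderiv_fun_add (hAdz a (w 1)) ((hGdz a (w 1)).const_mul t),
      fderiv_const_mul (hGdz a (w 1)) t,
      fderiv_fun_add (hAdz a (w 0)) ((hGdz a (w 0)).const_mul t),
      fderiv_const_mul (hGdz a (w 0)) t]
    simp only [ContinuousLinearMap.add_apply, ContinuousLinearMap.smul_apply, smul_eq_mul]
    ring
  simp only [gaugedPullback, ContinuousLinearMap.add_apply, ContinuousLinearMap.smul_apply,
    ContinuousLinearMap.coe_sum', Finset.sum_apply, smul_eq_mul]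
  simp only [RW1, RW3, RW4]
  -- RW5 : expand the 1-1 wedges
  have RW5 : ∀ (t : ℝ) (b c : Fin k) (w : Fin 2 → Fin 3 → ℝ),
      wedgeRaw
        (fun u : Fin 1 → Fin 3 → ℝ => (A b x) (u 0)
          + t * ((fderiv ℝ (lam b) x) (u 0) + ∑ d, ∑ e, f b d e * lam e x * (A d x) (u 0)))
        (fun u : Fin 1 → Fin 3 → ℝ => (A c x) (u 0)
          + t * ((fderiv ℝ (lam c) x) (u 0) + ∑ d, ∑ e, f c d e * lam e x * (A d x) (u 0))) w
      = ((A b x) (w 0) + t * ((fderiv ℝ (lam b) x) (w 0)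
            + ∑ d, ∑ e, f b d e * lam e x * (A d x) (w 0)))
        * ((A c x) (w 1) + t * ((fderiv ℝ (lam c) x) (w 1)
            + ∑ d, ∑ e, f c d e * lam e x * (A d x) (w 1)))
        - ((A b x) (w 1) + t * ((fderiv ℝ (lam b) x) (w 1)
            + ∑ d, ∑ e, f b d e * lam e x * (A d x) (w 1)))
          * ((A c x) (w 0) + t * ((fderiv ℝ (lam c) x) (w 0)
            + ∑ d, ∑ e, f c d e * lam e x * (A d x) (w 0))) :=
    fun t b c w => wedge11
      (fun z => (A b x) z + t * ((fderiv ℝ (lam b) x) z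
        + ∑ d, ∑ e, f b d e * lam e x * (A d x) z))
      (fun z => (A c x) z + t * ((fderiv ℝ (lam c) x) z
        + ∑ d, ∑ e, f c d e * lam e x * (A d x) z)) w
  simp only [RW5]
  -- forward construction of the derivative
  have hAff : ∀ (c1 c2 : ℝ), HasDerivAt (fun t : ℝ => c1 + t * c2) c2 0 := fun c1 c2 => by
    simpa using ((hasDerivAt_id (0:ℝ)).mul_const c2).const_add c1
  have hlineV : HasDerivAt (fun t : ℝ => φ x + t • ∑ a, lam a x • I a (φ x))
      (∑ a, lam a x • I a (φ x)) 0 := by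
    simpa using ((hasDerivAt_id (0:ℝ)).smul_const (∑ a, lam a x • I a (φ x))).const_add (φ x)
  have h0pt : φ x + (0:ℝ) • ∑ a, lam a x • I a (φ x) = φ x := by simp
  have hBt : ∀ a μ, HasDerivAt (fun t : ℝ => B a μ (φ x + t • ∑ a', lam a' x • I a' (φ x)))
      ((fderiv ℝ (B a μ) (φ x)) (∑ a', lam a' x • I a' (φ x))) 0 := by
    intro a μ
    have hl : HasFDerivAt (B a μ) (fderiv ℝ (B a μ) (φ x))
        (φ x + (0:ℝ) • ∑ a, lam a x • I a (φ x)) := by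
      rw [h0pt]; exact (hBd a μ).hasFDerivAt
    exact hl.comp_hasDerivAt 0 hlineV
  have hIt : ∀ a' μ, HasDerivAt (fun t : ℝ => I a' (φ x + t • ∑ b, lam b x • I b (φ x)) μ)
      ((fderiv ℝ (fun z => I a' z μ) (φ x)) (∑ b, lam b x • I b (φ x))) 0 := by
    intro a' μ
    have hl : HasFDerivAt (fun z => I a' z μ) (fderiv ℝ (fun z => I a' z μ) (φ x))
        (φ x + (0:ℝ) • ∑ a, lam a x • I a (φ x)) := by
      rw [h0pt]; exact (hIcd a' μ).hasFDerivAt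
    exact hl.comp_hasDerivAt 0 hlineV
  have hProd : ∀ (a1 a2 b1 b2 : ℝ),
      HasDerivAt (fun t : ℝ => (a1 + t * a2) * (b1 + t * b2)) (a2 * b1 + a1 * b2) 0 :=
    fun a1 a2 b1 b2 => by simpa using (hAff a1 a2).fun_mul (hAff b1 b2)
  have hProdI : ∀ (a1 a2 : ℝ) (a' : Fin k) (μ : Fin m),
      HasDerivAt (fun t : ℝ => (a1 + t * a2) * I a' (φ x + t • ∑ b, lam b x • I b (φ x)) μ)
        (a2 * I a' (φ x) μ
          + a1 * (fderiv ℝ (fun z => I a' z μ) (φ x)) (∑ b, lam b x • I b (φ x))) 0 :=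
    fun a1 a2 a' μ => by simpa [h0pt] using (hAff a1 a2).fun_mul (hIt a' μ)
  have hF : ∀ (a : Fin k) (w : Fin 2 → Fin 3 → ℝ), HasDerivAt (fun t : ℝ =>
      extDerivRaw 1 (fun y u => (A a y) (u 0)) x w
        + t * ((fderiv ℝ (fun y => (fderiv ℝ (lam a) y) (w 1)
              + ∑ b, ∑ c, f a b c * lam c y * (A b y) (w 1)) x) (w 0)
            - (fderiv ℝ (fun y => (fderiv ℝ (lam a) y) (w 0)
              + ∑ b, ∑ c, f a b c * lam c y * (A b y) (w 0)) x) (w 1))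
        + 1 / 2 * ∑ b, ∑ c, f a b c *
            (((A b x) (w 0) + t * ((fderiv ℝ (lam b) x) (w 0)
                  + ∑ d, ∑ e, f b d e * lam e x * (A d x) (w 0)))
              * ((A c x) (w 1) + t * ((fderiv ℝ (lam c) x) (w 1)
                  + ∑ d, ∑ e, f c d e * lam e x * (A d x) (w 1)))
              - ((A b x) (w 1) + t * ((fderiv ℝ (lam b) x) (w 1)
                  + ∑ d, ∑ e, f b d e * lam e x * (A d x) (w 1)))
                * ((A c x) (w 0) + t * ((fderiv ℝ (lam c) x) (w 0)
                  + ∑ d, ∑ e, f c d e * lam e x * (A d x) (w 0)))))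
      (((fderiv ℝ (fun y => (fderiv ℝ (lam a) y) (w 1)
              + ∑ b, ∑ c, f a b c * lam c y * (A b y) (w 1)) x) (w 0)
            - (fderiv ℝ (fun y => (fderiv ℝ (lam a) y) (w 0)
              + ∑ b, ∑ c, f a b c * lam c y * (A b y) (w 0)) x) (w 1))
        + 1 / 2 * ∑ b, ∑ c, f a b c *
            ((((fderiv ℝ (lam b) x) (w 0) + ∑ d, ∑ e, f b d e * lam e x * (A d x) (w 0))
                  * (A c x) (w 1)
                + (A b x) (w 0) * ((fderiv ℝ (lam c) x) (w 1)
                  + ∑ d, ∑ e, f c d e * lam e x * (A d x) (w 1)))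
              - (((fderiv ℝ (lam b) x) (w 1) + ∑ d, ∑ e, f b d e * lam e x * (A d x) (w 1))
                  * (A c x) (w 0)
                + (A b x) (w 1) * ((fderiv ℝ (lam c) x) (w 0)
                  + ∑ d, ∑ e, f c d e * lam e x * (A d x) (w 0))))) 0 := by
    intro a w
    exact (hAff _ _).add ((HasDerivAt.fun_sum (fun b _ => HasDerivAt.fun_sum (fun c _ =>
      ((hProd _ _ _ _).sub (hProd _ _ _ _)).const_mul (f a b c)))).const_mul (1/2))
  have hD : ∀ (μ : Fin m) (u : Fin 1 → Fin 3 → ℝ), HasDerivAt (fun t : ℝ =>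
      (fderiv ℝ (fun y => φ y μ) x) (u 0)
          + t * (fderiv ℝ (fun y => ∑ a, lam a y * I a (φ y) μ) x) (u 0)
        - ∑ a', ((A a' x) (u 0) + t * ((fderiv ℝ (lam a') x) (u 0)
            + ∑ b, ∑ c, f a' b c * lam c x * (A b x) (u 0)))
            * I a' (φ x + t • ∑ b, lam b x • I b (φ x)) μ)
      ((fderiv ℝ (fun y => ∑ a, lam a y * I a (φ y) μ) x) (u 0)
        - ∑ a', (((fderiv ℝ (lam a') x) (u 0)
              + ∑ b, ∑ c, f a' b c * lam c x * (A b x) (u 0)) * I a' (φ x) μ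
            + (A a' x) (u 0)
              * (fderiv ℝ (fun z => I a' z μ) (φ x)) (∑ b, lam b x • I b (φ x)))) 0 := by
    intro μ u
    exact (hAff _ _).sub (HasDerivAt.fun_sum (fun a' _ => hProdI _ _ a' μ))
  have htot := HasDerivAt.fun_sum (u := Finset.univ) (fun a (_ : a ∈ Finset.univ) =>
    HasDerivAt.fun_sum (u := Finset.univ) (fun μ (_ : μ ∈ Finset.univ) =>
      (hBt a μ).fun_mul (hasDerivAt_wedgeRaw (hF a) (hD μ) v)))
  convert htot using 2
  case e'_4 => rfl
  case e'_5 => rfl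
  simp only [zero_mul, mul_zero, add_zero, zero_smul]
  -- second derivative of lam, and its symmetry
  have hHess : ∀ a (z z' : Fin 3 → ℝ),
      (fderiv ℝ (fun y => (fderiv ℝ (lam a) y) z') x) z
        = (fderiv ℝ (fderiv ℝ (lam a)) x) z z' := by
    intro a z z'
    rw [fderiv_clm_apply (hdlamA a) (differentiableAt_const z')]
    simp
  have hSymmEq : ∀ a (z z' : Fin 3 → ℝ),
      (fderiv ℝ (fun y => (fderiv ℝ (lam a) y) z') x) z
        = (fderiv ℝ (fun y => (fderiv ℝ (lam a) y) z) x) z' := by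
    intro a z z'
    rw [hHess a z z', hHess a z' z]
    exact (((hlam a).contDiffAt hxU).isSymmSndFDerivAt (by simp; exact WithTop.coe_le_coe.mpr le_top)) z z'
  -- expansion of the inner fderiv appearing in the variation of F
  have inner : ∀ (z' : Fin 3 → ℝ) a,
      fderiv ℝ (fun y => (fderiv ℝ (lam a) y) z'
          + ∑ b, ∑ c, f a b c * lam c y * (A b y) z') x
        = fderiv ℝ (fun y => (fderiv ℝ (lam a) y) z') x
          + ∑ b, ∑ c, (f a b c) • (lam c x • fderiv ℝ (fun y => (A b y) z') x
              + (A b x) z' • fderiv ℝ (lam c) x) := by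
    intro z' a
    rw [fderiv_fun_add (hdlamz a z') (DifferentiableAt.fun_sum fun b _ =>
      DifferentiableAt.fun_sum fun c _ => ((hlamd c).const_mul (f a b c)).fun_mul (hAdz b z'))]
    congr 1
    rw [fderiv_fun_sum (fun b _ => DifferentiableAt.fun_sum fun c _ =>
      ((hlamd c).const_mul (f a b c)).fun_mul (hAdz b z'))]
    refine Finset.sum_congr rfl fun b _ => ?_
    rw [fderiv_fun_sum (fun c _ => ((hlamd c).const_mul (f a b c)).fun_mul (hAdz b z'))]
    refine Finset.sum_congr rfl fun c _ => ?_
    rw [show (fun y => f a b c * lam c y * (A b y) z')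
        = fun y => f a b c * (lam c y * (A b y) z') from funext fun y => by ring]
    rw [fderiv_const_mul ((hlamd c).fun_mul (hAdz b z')) (f a b c),
      fderiv_fun_mul (hlamd c) (hAdz b z')]
  -- the δF identity
  have hEG : ∀ a (w : Fin 2 → Fin 3 → ℝ),
      (fderiv ℝ (fun y => (fderiv ℝ (lam a) y) (w 1)
          + ∑ b, ∑ c, f a b c * lam c y * (A b y) (w 1)) x) (w 0)
        - (fderiv ℝ (fun y => (fderiv ℝ (lam a) y) (w 0)
          + ∑ b, ∑ c, f a b c * lam c y * (A b y) (w 0)) x) (w 1)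
      = ∑ b, ∑ c, f a b c *
          (((fderiv ℝ (lam c) x) (w 0) * (A b x) (w 1)
              - (fderiv ℝ (lam c) x) (w 1) * (A b x) (w 0))
            + lam c x * extDerivRaw 1 (fun y u => (A b y) (u 0)) x w) := by
    intro a w
    rw [inner (w 1) a, inner (w 0) a]
    simp only [ContinuousLinearMap.add_apply, ContinuousLinearMap.coe_sum',
      Finset.sum_apply, ContinuousLinearMap.smul_apply, smul_eq_mul]
    rw [hSymmEq a (w 0) (w 1)]
    have hfold : ∀ b, extDerivRaw 1 (fun y u => (A b y) (u 0)) x w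
        = (fderiv ℝ (fun y => (A b y) (w 1)) x) (w 0)
          - (fderiv ℝ (fun y => (A b y) (w 0)) x) (w 1) :=
      fun b => extDeriv1_eq (fun y z => (A b y) z) x w
    simp only [hfold]
    rw [show ∀ (H S1 S2 : ℝ), H + S1 - (H + S2) = S1 - S2 from fun _ _ _ => by ring]
    rw [← Finset.sum_sub_distrib]
    refine Finset.sum_congr rfl fun b _ => ?_
    rw [← Finset.sum_sub_distrib]
    refine Finset.sum_congr rfl fun c _ => ?_
    ring
  -- δF = f λ F, via the Jacobi identity
  have hXF : ∀ a (w : Fin 2 → Fin 3 → ℝ),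
      ((fderiv ℝ (fun y => (fderiv ℝ (lam a) y) (w 1)
            + ∑ b, ∑ c, f a b c * lam c y * (A b y) (w 1)) x) (w 0)
          - (fderiv ℝ (fun y => (fderiv ℝ (lam a) y) (w 0)
            + ∑ b, ∑ c, f a b c * lam c y * (A b y) (w 0)) x) (w 1))
        + 1 / 2 * ∑ b, ∑ c, f a b c *
            ((((fderiv ℝ (lam b) x) (w 0) + ∑ d, ∑ e, f b d e * lam e x * (A d x) (w 0))
                  * (A c x) (w 1)
                + (A b x) (w 0) * ((fderiv ℝ (lam c) x) (w 1)
                  + ∑ d, ∑ e, f c d e * lam e x * (A d x) (w 1)))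
              - (((fderiv ℝ (lam b) x) (w 1) + ∑ d, ∑ e, f b d e * lam e x * (A d x) (w 1))
                  * (A c x) (w 0)
                + (A b x) (w 1) * ((fderiv ℝ (lam c) x) (w 0)
                  + ∑ d, ∑ e, f c d e * lam e x * (A d x) (w 0))))
      = ∑ b, (∑ c, f a b c * lam c x) *
          (extDerivRaw 1 (fun y u => (A b y) (u 0)) x w
            + 1 / 2 * ∑ d, ∑ e, f b d e *
                ((A d x) (w 0) * (A e x) (w 1) - (A d x) (w 1) * (A e x) (w 0))) := by
    intro a w
    rw [hEG a w]
    have hmid : ∑ b, ∑ c, f a b c *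
          ((((fderiv ℝ (lam b) x) (w 0) + ∑ d, ∑ e, f b d e * lam e x * (A d x) (w 0))
                * (A c x) (w 1)
              + (A b x) (w 0) * ((fderiv ℝ (lam c) x) (w 1)
                + ∑ d, ∑ e, f c d e * lam e x * (A d x) (w 1)))
            - (((fderiv ℝ (lam b) x) (w 1) + ∑ d, ∑ e, f b d e * lam e x * (A d x) (w 1))
                * (A c x) (w 0)
              + (A b x) (w 1) * ((fderiv ℝ (lam c) x) (w 0)
                + ∑ d, ∑ e, f c d e * lam e x * (A d x) (w 0))))
        = ∑ b, ∑ c, f a b c *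
          ((((fderiv ℝ (lam b) x) (w 0) + ∑ d, ∑ e, f b d e * lam e x * (A d x) (w 0))
                * (A c x) (w 1)
              - ((fderiv ℝ (lam b) x) (w 1) + ∑ d, ∑ e, f b d e * lam e x * (A d x) (w 1))
                * (A c x) (w 0))
            + ((A b x) (w 0) * ((fderiv ℝ (lam c) x) (w 1)
                + ∑ d, ∑ e, f c d e * lam e x * (A d x) (w 1))
              - (A b x) (w 1) * ((fderiv ℝ (lam c) x) (w 0)
                + ∑ d, ∑ e, f c d e * lam e x * (A d x) (w 0)))) :=
      sum2_congr fun b c => by ring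
    rw [hmid]
    have hdf := deltaF_eq f hanti hjacobi (fun c => lam c x)
      (fun d => (A d x) (w 0)) (fun d => (A d x) (w 1))
      (fun c => (fderiv ℝ (lam c) x) (w 0)) (fun c => (fderiv ℝ (lam c) x) (w 1))
      (fun b => extDerivRaw 1 (fun y u => (A b y) (u 0)) x w) a
    rw [show (1:ℝ)/2 = 1/2 from rfl] at hdf
    rw [hdf]
    exact Finset.sum_congr rfl fun b _ => (Finset.sum_mul _ _ _).symm
  -- chain rule for I ∘ φ
  have hchain : ∀ a μ, fderiv ℝ (fun y => I a (φ y) μ) x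
      = (fderiv ℝ (fun z => I a z μ) (φ x)).comp (fderiv ℝ φ x) :=
    fun a μ => fderiv_comp' x (hIcd a μ) hφd
  have hdh : ∀ μ (z : Fin 3 → ℝ),
      (fderiv ℝ (fun y => ∑ a, lam a y * I a (φ y) μ) x) z
        = ∑ a, ((fderiv ℝ (lam a) x) z * I a (φ x) μ
            + lam a x * (fderiv ℝ (fun z' => I a z' μ) (φ x)) (fderiv ℝ φ x z)) := by
    intro μ z
    rw [fderiv_fun_sum (fun a _ => (hlamd a).fun_mul (hIφd a μ))]
    simp only [ContinuousLinearMap.coe_sum', Finset.sum_apply]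
    refine Finset.sum_congr rfl fun a _ => ?_
    rw [fderiv_fun_mul (hlamd a) (hIφd a μ), hchain a μ]
    simp only [ContinuousLinearMap.add_apply, ContinuousLinearMap.smul_apply, smul_eq_mul,
      ContinuousLinearMap.comp_apply]
    ring
  -- linearity in the vector argument
  have hdBV : ∀ a μ, (fderiv ℝ (B a μ) (φ x)) (∑ b, lam b x • I b (φ x))
      = ∑ b, lam b x * (fderiv ℝ (B a μ) (φ x)) (I b (φ x)) := by
    intro a μ
    rw [map_sum]
    exact Finset.sum_congr rfl fun b _ => by rw [map_smul, smul_eq_mul]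
  have hdIV : ∀ a' μ, (fderiv ℝ (fun z => I a' z μ) (φ x)) (∑ b, lam b x • I b (φ x))
      = ∑ b, lam b x * (fderiv ℝ (fun z => I a' z μ) (φ x)) (I b (φ x)) := by
    intro a' μ
    rw [map_sum]
    exact Finset.sum_congr rfl fun b _ => by rw [map_smul, smul_eq_mul]
  -- coordinates of fderiv φ
  have hcoord : ∀ ν (z : Fin 3 → ℝ),
      (fderiv ℝ (fun y => φ y ν) x) z = fderiv ℝ φ x z ν := by
    intro ν z
    have h1 : fderiv ℝ (fun y => φ y ν) x
        = (ContinuousLinearMap.proj (R := ℝ) (φ := fun _ : Fin m => ℝ) ν).comp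
            (fderiv ℝ φ x) :=
      (fderiv_comp' x (ContinuousLinearMap.proj ν).differentiableAt hφd).trans
        (by rw [ContinuousLinearMap.fderiv])
    rw [h1]
    rfl
  -- decomposition in the coordinate basis
  have hDvec : ∀ b μ (z : Fin 3 → ℝ),
      (fderiv ℝ (fun z' => I b z' μ) (φ x)) (fderiv ℝ φ x z)
          - ∑ a, (A a x) z * (fderiv ℝ (fun z' => I b z' μ) (φ x)) (I a (φ x))
        = ∑ ν, (fderiv ℝ (fun z' => I b z' μ) (φ x)) (Pi.single ν 1)
            * ((fderiv ℝ (fun y => φ y ν) x) z - ∑ a', (A a' x) z * I a' (φ x) ν) := by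
    intro b μ z
    have h1 : (fderiv ℝ (fun z' => I b z' μ) (φ x)) (fderiv ℝ φ x z)
        - ∑ a, (A a x) z * (fderiv ℝ (fun z' => I b z' μ) (φ x)) (I a (φ x))
        = (fderiv ℝ (fun z' => I b z' μ) (φ x))
            (fderiv ℝ φ x z - ∑ a, (A a x) z • I a (φ x)) := by
      rw [map_sub, map_sum]
      congr 1
      exact Finset.sum_congr rfl fun a _ => by rw [map_smul, smul_eq_mul]
    have h2 : fderiv ℝ φ x z - ∑ a, (A a x) z • I a (φ x)
        = ∑ ν, ((fderiv ℝ (fun y => φ y ν) x) z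
            - ∑ a', (A a' x) z * I a' (φ x) ν) • (Pi.single ν (1:ℝ) : Fin m → ℝ) := by
      funext ν'
      simp only [Pi.sub_apply, Finset.sum_apply, Pi.smul_apply, smul_eq_mul,
        Pi.single_apply, mul_ite, mul_one, mul_zero, Finset.sum_ite_eq']
      simp [hcoord ν' z]
    rw [h1, h2, map_sum]
    exact Finset.sum_congr rfl fun ν _ => by rw [map_smul, smul_eq_mul]; ring
  -- the δD identity
  have hδD : ∀ μ (z : Fin 3 → ℝ),
      (fderiv ℝ (fun y => ∑ a, lam a y * I a (φ y) μ) x) z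
          - ∑ a', (((fderiv ℝ (lam a') x) z
                + ∑ b, ∑ c, f a' b c * lam c x * (A b x) z) * I a' (φ x) μ
              + (A a' x) z * (fderiv ℝ (fun z' => I a' z' μ) (φ x))
                  (∑ b, lam b x • I b (φ x)))
        = ∑ b, lam b x * ∑ ν, (fderiv ℝ (fun z' => I b z' μ) (φ x)) (Pi.single ν 1)
            * ((fderiv ℝ (fun y => φ y ν) x) z - ∑ a', (A a' x) z * I a' (φ x) ν) := by
    intro μ z
    rw [hdh μ z]
    simp only [hdIV]
    have hdd := deltaD_eq f (fun b => lam b x) (fun a => (fderiv ℝ (lam a) x) z)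
      (fun a => (A a x) z)
      (fun a => (fderiv ℝ (fun z' => I a z' μ) (φ x)) (fderiv ℝ φ x z))
      (fun a => I a (φ x) μ)
      (fun a b => (fderiv ℝ (fun z' => I a z' μ) (φ x)) (I b (φ x)))
      (fun a b => hbracket (φ x) hP a b μ)
    rw [hdd]
    exact Finset.sum_congr rfl fun b _ => by rw [hDvec b μ z]
  -- wedge-level rewrite of the δF piece
  have hWDF : ∀ a μ,
      wedgeRaw
        (fun w : Fin 2 → Fin 3 → ℝ =>
        (fderiv ℝ (fun y => (fderiv ℝ (lam a) y) (w 1)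
            + ∑ b, ∑ c, f a b c * lam c y * (A b y) (w 1)) x) (w 0)
          - (fderiv ℝ (fun y => (fderiv ℝ (lam a) y) (w 0)
            + ∑ b, ∑ c, f a b c * lam c y * (A b y) (w 0)) x) (w 1)
          + 1 / 2 * ∑ b, ∑ c, f a b c *
              (((fderiv ℝ (lam b) x) (w 0) + ∑ d, ∑ e, f b d e * lam e x * (A d x) (w 0))
                    * (A c x) (w 1)
                  + (A b x) (w 0) * ((fderiv ℝ (lam c) x) (w 1)
                    + ∑ d, ∑ e, f c d e * lam e x * (A d x) (w 1))
                - (((fderiv ℝ (lam b) x) (w 1) + ∑ d, ∑ e, f b d e * lam e x * (A d x) (w 1))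
                    * (A c x) (w 0)
                  + (A b x) (w 1) * ((fderiv ℝ (lam c) x) (w 0)
                    + ∑ d, ∑ e, f c d e * lam e x * (A d x) (w 0)))))
        (fun u : Fin 1 → Fin 3 → ℝ => (fderiv ℝ (fun y => φ y μ) x) (u 0)
          - ∑ a', (A a' x) (u 0) * I a' (φ x) μ) v
      = ∑ b, (∑ c, f a b c * lam c x) *
          wedgeRaw
            (fun w : Fin 2 → Fin 3 → ℝ => extDerivRaw 1 (fun y u => (A b y) (u 0)) x w
          + 1 / 2 * ∑ d, ∑ e, f b d e *
              ((A d x) (w 0) * (A e x) (w 1) - (A d x) (w 1) * (A e x) (w 0)))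
            (fun u : Fin 1 → Fin 3 → ℝ => (fderiv ℝ (fun y => φ y μ) x) (u 0)
          - ∑ a', (A a' x) (u 0) * I a' (φ x) μ) v := by
    intro a μ
    rw [show (fun w : Fin 2 → Fin 3 → ℝ =>
        (fderiv ℝ (fun y => (fderiv ℝ (lam a) y) (w 1)
            + ∑ b, ∑ c, f a b c * lam c y * (A b y) (w 1)) x) (w 0)
          - (fderiv ℝ (fun y => (fderiv ℝ (lam a) y) (w 0)
            + ∑ b, ∑ c, f a b c * lam c y * (A b y) (w 0)) x) (w 1)
          + 1 / 2 * ∑ b, ∑ c, f a b c *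
              (((fderiv ℝ (lam b) x) (w 0) + ∑ d, ∑ e, f b d e * lam e x * (A d x) (w 0))
                    * (A c x) (w 1)
                  + (A b x) (w 0) * ((fderiv ℝ (lam c) x) (w 1)
                    + ∑ d, ∑ e, f c d e * lam e x * (A d x) (w 1))
                - (((fderiv ℝ (lam b) x) (w 1) + ∑ d, ∑ e, f b d e * lam e x * (A d x) (w 1))
                    * (A c x) (w 0)
                  + (A b x) (w 1) * ((fderiv ℝ (lam c) x) (w 0)
                    + ∑ d, ∑ e, f c d e * lam e x * (A d x) (w 0)))))
        = (fun w : Fin 2 → Fin 3 → ℝ => ∑ b, (∑ c, f a b c * lam c x) *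
            (extDerivRaw 1 (fun y u => (A b y) (u 0)) x w
              + 1 / 2 * ∑ d, ∑ e, f b d e *
                  ((A d x) (w 0) * (A e x) (w 1) - (A d x) (w 1) * (A e x) (w 0))))
        from funext fun w => hXF a w]
    exact wedgeRaw_sum_smul_left (p := 2) (q := 1) Finset.univ _ _ _ v
  -- wedge-level rewrite of the δD piece
  have hWdD : ∀ a μ,
      wedgeRaw
        (fun w : Fin 2 → Fin 3 → ℝ => extDerivRaw 1 (fun y u => (A a y) (u 0)) x w
          + 1 / 2 * ∑ d, ∑ e, f a d e *
              ((A d x) (w 0) * (A e x) (w 1) - (A d x) (w 1) * (A e x) (w 0)))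
        (fun u : Fin 1 → Fin 3 → ℝ =>
        (fderiv ℝ (fun y => ∑ a, lam a y * I a (φ y) μ) x) (u 0)
          - ∑ a', (((fderiv ℝ (lam a') x) (u 0)
                + ∑ b, ∑ c, f a' b c * lam c x * (A b x) (u 0)) * I a' (φ x) μ
              + (A a' x) (u 0) * (fderiv ℝ (fun z => I a' z μ) (φ x))
                  (∑ b, lam b x • I b (φ x)))) v
      = ∑ b, lam b x * ∑ ν, (fderiv ℝ (fun z => I b z μ) (φ x)) (Pi.single ν 1)
          * wedgeRaw
              (fun w : Fin 2 → Fin 3 → ℝ => extDerivRaw 1 (fun y u => (A a y) (u 0)) x w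
          + 1 / 2 * ∑ d, ∑ e, f a d e *
              ((A d x) (w 0) * (A e x) (w 1) - (A d x) (w 1) * (A e x) (w 0)))
              (fun u : Fin 1 → Fin 3 → ℝ => (fderiv ℝ (fun y => φ y ν) x) (u 0)
          - ∑ a', (A a' x) (u 0) * I a' (φ x) ν) v := by
    intro a μ
    rw [show (fun u : Fin 1 → Fin 3 → ℝ =>
        (fderiv ℝ (fun y => ∑ a, lam a y * I a (φ y) μ) x) (u 0)
          - ∑ a', (((fderiv ℝ (lam a') x) (u 0)
                + ∑ b, ∑ c, f a' b c * lam c x * (A b x) (u 0)) * I a' (φ x) μ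
              + (A a' x) (u 0) * (fderiv ℝ (fun z => I a' z μ) (φ x))
                  (∑ b, lam b x • I b (φ x))))
        = (fun u : Fin 1 → Fin 3 → ℝ => ∑ b, lam b x *
            ∑ ν, (fderiv ℝ (fun z => I b z μ) (φ x)) (Pi.single ν 1)
              * ((fderiv ℝ (fun y => φ y ν) x) (u 0)
                - ∑ a', (A a' x) (u 0) * I a' (φ x) ν))
        from funext fun u => hδD μ (u 0)]
    rw [wedgeRaw_sum_smul_right]
    refine Finset.sum_congr rfl fun b _ => ?_
    congr 1
    rw [wedgeRaw_sum_smul_right]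
  simp only [hWDF, hWdD, hdBV]
  exact (final_assembly f (fun b => lam b x) (fun a μ => B a μ (φ x))
    (fun a μ b => (fderiv ℝ (B a μ) (φ x)) (I b (φ x)))
    (fun b μ ν => (fderiv ℝ (fun z => I b z μ) (φ x)) (Pi.single ν 1))
    (fun a μ => wedgeRaw
      (fun w : Fin 2 → Fin 3 → ℝ => extDerivRaw 1 (fun y u => (A a y) (u 0)) x w
          + 1 / 2 * ∑ d, ∑ e, f a d e *
              ((A d x) (w 0) * (A e x) (w 1) - (A d x) (w 1) * (A e x) (w 0)))
      (fun u : Fin 1 → Fin 3 → ℝ => (fderiv ℝ (fun y => φ y μ) x) (u 0)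
          - ∑ a', (A a' x) (u 0) * I a' (φ x) μ) v)
    (fun a b μ => hequiv (φ x) hP a b μ)).symm
end
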